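/- arXiv:1404.5258 — 9 statements merged into one kernel-verified Lean document; each statement's English description precedes it below -/
import Mathlib

section
/- For every integer k ≥ 2 and every α > 0, there exists δ = δ(α,k) > 0 such that the following holds. Let n ∈ ℕ, let ℱ ⊆ 𝒫(n) satisfy |ℱ| ≥ (k−1+α)·C(n,⌊n/2⌋), and suppose m is a real number with δ^{−1} ≤ m ≤ C(|F|,|G|) for every F, G ∈ ℱ with F ⊋ G. If ℋ is a k-uniform hypergraph with vertex set ℱ, all of whose edges are k-chains, satisfying (a) e(ℋ) ≤ δ^k·m^{k−1}·C(n,⌊n/2⌋) and (b) Δ_ℓ(ℋ) ≤ (δm)^{k−ℓ} for every 1 ≤ ℓ ≤ k, then there exists a k-chain f of sets from ℱ which is not an edge of ℋ such that the hypergraph ℋ with the edge f added still satisfies Δ_ℓ({f} ∪ ℋ) ≤ (δm)^{k−ℓ} for every 1 ≤ ℓ ≤ k. -/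
open Finset

/-- A `k`-chain: `k` distinct sets totally ordered by strict inclusion. -/
def IsKChain {n : ℕ} (k : ℕ) (𝒞 : Finset (Finset (Fin n))) : Prop :=
  𝒞.card = k ∧ IsChain (· ⊂ ·) (𝒞 : Set (Finset (Fin n)))

/-- A family contains no `k`-chain. -/
def NoKChain {n : ℕ} (k : ℕ) (𝒜 : Finset (Finset (Fin n))) : Prop :=
  ∀ 𝒞 ⊆ 𝒜, ¬ IsKChain k 𝒞

/-!
Suppose that no `k`-chain can be added. Call `v ∈ 𝓕` light if `deg v + 1 ≤ (δm)^(k-1)`; since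
`∑ deg v ≤ k e(H)`, all but `2kδ C(n, n/2)` members of `𝓕` are light. Count, as in the LYM
inequality, the pairs `(σ, F)` of a permutation `σ` of `[n]` and a light `F` that is an initial
segment of `σ`: every `F` is an initial segment of `|F|! (n - |F|)! ≥ n! / C(n, n/2)` permutations,
so there are at least `(k - 1 + α/2) n!` pairs.

For a fixed `σ` the light initial segments form a chain, and any `k` of them form a `k`-chain that
cannot be added, so it contains a saturated chain: `2 ≤ ℓ ≤ k` light sets of degree at least
`(δm)^(k-ℓ)/2`. Peeling off `k` sets at a time shows that fewer than `k (1 + s_σ)` light sets are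
initial segments of `σ`, where `s_σ` counts the saturated chains along `σ`. Since `m ≤ C(|F|, |G|)`
for `G ⊂ F` in `𝓕`, a chain of `ℓ` sets lies along at most a `m^(1-ℓ)` fraction of the permutations
through its largest member; with the degree conditions this gives `∑_σ s_σ ≤ 2^(k+1) δ` times the
number of pairs, which is a contradiction once `δ` is small.
-/

open scoped Nat

namespace ChainSupersaturation

section General

lemma le_two_mul_of_lt_add_one {x : ℝ} {d : ℕ} (hx : 1 ≤ x) (h : x < d + 1) : x ≤ 2 * d := by
  obtain rfl | hd := Nat.eq_zero_or_pos d
  · norm_num at h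
    linarith
  have : (1 : ℝ) ≤ d := by exact_mod_cast hd
  linarith

variable {α : Type*}

lemma _root_.IsChain.subset_of_card_le {s : Set (Finset α)} (hs : IsChain (· ⊂ ·) s)
    {F G : Finset α} (hF : F ∈ s) (hG : G ∈ s) (h : #F ≤ #G) : F ⊆ G := by
  obtain rfl | hne := eq_or_ne F G
  · exact subset_rfl
  obtain hFG | hGF := hs hF hG hne
  · exact hFG.subset
  · exact absurd h (not_le.2 (card_lt_card hGF))

variable [DecidableEq α]

lemma exists_perm_of_subset_of_card_eq [Fintype α] {B K K' : Finset α} (hK : K ⊆ B)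
    (hK' : K' ⊆ B) (h : #K = #K') :
    ∃ π : Equiv.Perm α, (∀ x, x ∈ K ↔ π x ∈ K') ∧ ∀ C, B ⊆ C → ∀ x, x ∈ C ↔ π x ∈ C := by
  let e : {y : B // y.1 ∈ K} ≃ {y : B // y.1 ∈ K'} :=
    (Equiv.subtypeSubtypeEquivSubtype (hK ·)).trans
      ((equivOfCardEq h).trans (Equiv.subtypeSubtypeEquivSubtype (hK' ·)).symm)
  refine ⟨Equiv.Perm.ofSubtype e.extendSubtype, fun x => ?_, fun C hC x => ?_⟩
  · by_cases hxB : x ∈ B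
    · rw [Equiv.Perm.ofSubtype_apply_of_mem _ hxB]
      by_cases hx : x ∈ K
      · exact iff_of_true hx (e.extendSubtype_mem ⟨x, hxB⟩ hx)
      · exact iff_of_false hx (e.extendSubtype_not_mem ⟨x, hxB⟩ hx)
    · rw [Equiv.Perm.ofSubtype_apply_of_not_mem _ hxB]
      exact iff_of_false (fun hx => hxB (hK hx)) (fun hx => hxB (hK' hx))
  · by_cases hxB : x ∈ B
    · rw [Equiv.Perm.ofSubtype_apply_of_mem _ hxB]
      exact iff_of_true (hC hxB) (hC (e.extendSubtype ⟨x, hxB⟩).2)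
    · rw [Equiv.Perm.ofSubtype_apply_of_not_mem _ hxB]

/-- Peel off `k` members of `C` at a time; the members of `𝒳` found in the removed blocks are
distinct, being nonempty subsets of disjoint blocks. -/
lemma card_lt_of_forall_exists_subset {𝒳 : Finset (Finset α)} (h𝒳 : ∀ A ∈ 𝒳, A.Nonempty)
    {k : ℕ} (C : Finset α) (hC : ∀ W ⊆ C, #W = k → ∃ A ∈ 𝒳, A ⊆ W) :
    #C < k + k * #{A ∈ 𝒳 | A ⊆ C} := by
  induction C using Finset.strongInduction with
  | H C ih =>
  obtain hCk | hkC := lt_or_ge #C k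
  · omega
  obtain ⟨W, hWC, hWk⟩ := exists_subset_card_eq hkC
  obtain ⟨A, hA𝒳, hAW⟩ := hC W hWC hWk
  have hsub : C \ W ⊂ C := sdiff_ssubset hWC (card_pos.1 (by
    obtain ⟨a, ha⟩ := h𝒳 A hA𝒳; exact card_pos.2 ⟨a, hAW ha⟩))
  have hrec := ih (C \ W) hsub fun W' hW' => hC W' (hW'.trans hsub.subset)
  have hfilter : #{A ∈ 𝒳 | A ⊆ C \ W} < #{A ∈ 𝒳 | A ⊆ C} := by
    refine card_lt_card ⟨fun B hB => ?_, fun h => ?_⟩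
    · simp only [mem_filter] at hB ⊢
      exact ⟨hB.1, hB.2.trans sdiff_subset⟩
    obtain ⟨a, ha⟩ := h𝒳 A hA𝒳
    have hA : A ⊆ C \ W := (mem_filter.1 (h (mem_filter.2 ⟨hA𝒳, hAW.trans hWC⟩))).2
    exact (mem_sdiff.1 (hA ha)).2 (hAW ha)
  have hcard : #(C \ W) + k = #C := by rw [card_sdiff_of_subset hWC, ← hWk]; omega
  nlinarith

def degree (H : Finset (Finset α)) (A : Finset α) : ℕ := #{e ∈ H | A ⊆ e}

lemma degree_singleton (H : Finset (Finset α)) (u : α) : degree H {u} = #{e ∈ H | u ∈ e} := by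
  simp only [degree, singleton_subset_iff]

lemma sum_degree_le {k : ℕ} {H : Finset (Finset α)} (hH : ∀ e ∈ H, #e = k)
    {𝒳 : Finset (Finset α)} {u : α} (h𝒳 : ∀ A ∈ 𝒳, u ∈ A) :
    ∑ A ∈ 𝒳, degree H A ≤ 2 ^ k * degree H {u} := by
  rw [degree_singleton]
  calc ∑ A ∈ 𝒳, degree H A
      = ∑ e ∈ H, #{A ∈ 𝒳 | A ⊆ e} := by
        simp only [degree, card_eq_sum_ones, sum_filter]
        exact sum_comm
    _ = ∑ e ∈ H with u ∈ e, #{A ∈ 𝒳 | A ⊆ e} := by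
        refine (sum_filter_of_ne fun e _ hne => ?_).symm
        obtain ⟨A, hA⟩ := card_ne_zero.1 hne
        exact (mem_filter.1 hA).2 (h𝒳 A (mem_filter.1 hA).1)
    _ ≤ ∑ e ∈ H with u ∈ e, 2 ^ k := sum_le_sum fun e he => by
        rw [← hH e (mem_filter.1 he).1, ← card_powerset]
        exact card_le_card fun A hA => mem_powerset.2 (mem_filter.1 hA).2
    _ = 2 ^ k * #{e ∈ H | u ∈ e} := by rw [sum_const, smul_eq_mul, mul_comm]

lemma sum_degree_singleton_le {k : ℕ} {H : Finset (Finset α)} (hH : ∀ e ∈ H, #e = k)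
    (s : Finset α) : ∑ u ∈ s, degree H {u} ≤ k * #H := by
  calc ∑ u ∈ s, degree H {u} = ∑ e ∈ H, #{u ∈ s | u ∈ e} := by
        simp only [degree_singleton, card_eq_sum_ones, sum_filter]
        exact sum_comm
    _ ≤ ∑ e ∈ H, k := sum_le_sum fun e he =>
        hH e he ▸ card_le_card fun u hu => (mem_filter.1 hu).2
    _ = k * #H := by rw [sum_const, smul_eq_mul, mul_comm]

end General

section Prefix

variable {n : ℕ} {σ π : Equiv.Perm (Fin n)} {F G : Finset (Fin n)}

/-- `F` is an initial segment of the ordering `σ 0, σ 1, …, σ (n - 1)` of `Fin n`. -/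
def IsPrefix (σ : Equiv.Perm (Fin n)) (F : Finset (Fin n)) : Prop :=
  ∀ q : Fin n, (q : ℕ) < #F ↔ σ q ∈ F

instance (σ : Equiv.Perm (Fin n)) : DecidablePred (IsPrefix σ) :=
  fun _ => inferInstanceAs (Decidable (∀ _, _))

lemma IsPrefix.subset_of_card_le (hF : IsPrefix σ F) (hG : IsPrefix σ G) (h : #F ≤ #G) :
    F ⊆ G := fun x hx => by
  simpa using (hG (σ.symm x)).1 (((hF (σ.symm x)).2 (by simpa using hx)).trans_le h)

lemma isChain_setOf_isPrefix (σ : Equiv.Perm (Fin n)) : IsChain (· ⊂ ·) {F | IsPrefix σ F} := by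
  intro F hF G hG hne
  rcases le_total #F #G with h | h
  · exact .inl ((hF.subset_of_card_le hG h).ssubset_of_ne hne)
  · exact .inr ((hG.subset_of_card_le hF h).ssubset_of_ne hne.symm)

lemma IsPrefix.mul {F' : Finset (Fin n)} (hF : IsPrefix σ F) (hπ : ∀ x, x ∈ F ↔ π x ∈ F')
    (h : #F = #F') : IsPrefix (π * σ) F' := fun q => by
  rw [Equiv.Perm.mul_apply, ← hπ, ← h]
  exact hF q

lemma isPrefix_univ (σ : Equiv.Perm (Fin n)) : IsPrefix σ univ := fun q => by simp

def prefixOf (σ : Equiv.Perm (Fin n)) (j : ℕ) : Finset (Fin n) :=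
  {x | (σ.symm x : ℕ) < j}

lemma card_prefixOf (σ : Equiv.Perm (Fin n)) {j : ℕ} (hj : j ≤ n) : #(prefixOf σ j) = j := by
  rw [card_equiv σ.symm (t := {i : Fin n | (i : ℕ) < j}) fun x => by simp [prefixOf],
    Fin.card_filter_val_lt, min_eq_right hj]

lemma isPrefix_iff_prefixOf_eq : IsPrefix σ F ↔ prefixOf σ #F = F := by
  simp only [IsPrefix, prefixOf, Finset.ext_iff, mem_filter, mem_univ, true_and]
  exact ⟨fun h x => by simpa using h (σ.symm x), fun h q => by simpa using h (σ q)⟩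

def prefixPerms (𝒜 : Finset (Finset (Fin n))) : Finset (Equiv.Perm (Fin n)) :=
  {σ | ∀ F ∈ 𝒜, IsPrefix σ F}

lemma mem_prefixPerms {𝒜 : Finset (Finset (Fin n))} :
    σ ∈ prefixPerms 𝒜 ↔ ∀ F ∈ 𝒜, IsPrefix σ F := by
  simp [prefixPerms]

end Prefix

section Counting

variable {n : ℕ} {𝒜 : Finset (Finset (Fin n))} {B K : Finset (Fin n)}

lemma card_prefixPerms_insert_le {K' : Finset (Fin n)} (hB : ∀ C ∈ 𝒜, B ⊆ C) (hK : K ⊆ B)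
    (hK' : K' ⊆ B) (h : #K = #K') :
    #(prefixPerms (insert K 𝒜)) ≤ #(prefixPerms (insert K' 𝒜)) := by
  obtain ⟨π, hπK, hπC⟩ := exists_perm_of_subset_of_card_eq hK hK' h
  refine card_le_card_of_injOn (π * ·) (fun σ hσ => ?_) fun σ _ τ _ h => mul_left_cancel h
  rw [mem_coe, mem_prefixPerms, forall_mem_insert] at hσ ⊢
  exact ⟨hσ.1.mul hπK h, fun C hC => (hσ.2 C hC).mul (hπC C (hB C hC)) rfl⟩

/-- The permutations in `prefixPerms 𝒜` are split according to their initial segment of length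
`#K`, a `#K`-subset of the smallest member `B` of `𝒜`; all parts have the same size by symmetry. -/
lemma card_prefixPerms_insert_mul_choose (hB : B ∈ 𝒜) (hBmin : ∀ C ∈ 𝒜, B ⊆ C) (hK : K ⊆ B) :
    #(prefixPerms (insert K 𝒜)) * (#B).choose #K = #(prefixPerms 𝒜) := by
  have hKn : #K ≤ n := by simpa using card_le_univ K
  have hmaps : Set.MapsTo (prefixOf · #K) (prefixPerms 𝒜 : Set (Equiv.Perm (Fin n)))
      (powersetCard #K B : Set (Finset (Fin n))) := by
    intro σ hσ
    have hpre : IsPrefix σ (prefixOf σ #K) :=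
      isPrefix_iff_prefixOf_eq.2 (by rw [card_prefixOf σ hKn])
    rw [mem_coe, mem_powersetCard, card_prefixOf σ hKn]
    refine ⟨hpre.subset_of_card_le (mem_prefixPerms.1 hσ B hB) ?_, rfl⟩
    rw [card_prefixOf σ hKn]
    exact card_le_card hK
  have hfiber : ∀ K' ∈ powersetCard #K B,
      #{σ ∈ prefixPerms 𝒜 | prefixOf σ #K = K'} = #(prefixPerms (insert K 𝒜)) := by
    intro K' hK'
    rw [mem_powersetCard] at hK'
    have hfilter : {σ ∈ prefixPerms 𝒜 | prefixOf σ #K = K'} = prefixPerms (insert K' 𝒜) := by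
      ext σ
      rw [mem_filter, mem_prefixPerms, mem_prefixPerms, forall_mem_insert,
        isPrefix_iff_prefixOf_eq, hK'.2, and_comm]
    rw [hfilter]
    exact le_antisymm (card_prefixPerms_insert_le hBmin hK'.1 hK hK'.2)
      (card_prefixPerms_insert_le hBmin hK hK'.1 hK'.2.symm)
  rw [card_eq_sum_card_fiberwise hmaps, sum_congr rfl hfiber, sum_const, card_powersetCard,
    smul_eq_mul, mul_comm]

lemma card_prefixPerms_singleton_mul_choose (v : Finset (Fin n)) :
    #(prefixPerms {v}) * n.choose #v = n ! := by
  have h := card_prefixPerms_insert_mul_choose (mem_singleton_self univ)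
    (fun C hC => (mem_singleton.1 hC).ge) (subset_univ v)
  have hv : prefixPerms (insert v {univ}) = prefixPerms {v} := by
    ext σ
    simp [mem_prefixPerms, isPrefix_univ]
  have huniv : prefixPerms {(univ : Finset (Fin n))} = univ := by
    ext σ
    simp [mem_prefixPerms, isPrefix_univ]
  rwa [hv, huniv, card_univ, card_univ, Fintype.card_perm, Fintype.card_fin] at h

lemma card_prefixPerms_mul_pow_le_sum {m : ℝ} (hm : 0 ≤ m) (𝒜 : Finset (Finset (Fin n)))
    (h𝒜 : IsChain (· ⊂ ·) (𝒜 : Set (Finset (Fin n)))) (hne : 𝒜.Nonempty)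
    (hchoose : ∀ F ∈ 𝒜, ∀ G ∈ 𝒜, G ⊂ F → m ≤ (#F).choose #G) :
    #(prefixPerms 𝒜) * m ^ (#𝒜 - 1) ≤ ∑ F ∈ 𝒜, (#(prefixPerms {F}) : ℝ) := by
  induction 𝒜 using Finset.strongInduction with
  | H 𝒜 ih =>
  obtain ⟨K, hK, hKmin⟩ := exists_min_image 𝒜 card hne
  obtain hsingle | ⟨B₀, hB₀⟩ := (𝒜.erase K).eq_empty_or_nonempty
  · obtain rfl : 𝒜 = {K} := by rw [← insert_erase hK, hsingle]; rfl
    simp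
  set 𝒜' := 𝒜.erase K
  obtain ⟨B, hB, hBmin⟩ := exists_min_image 𝒜' card ⟨B₀, hB₀⟩
  have h𝒜' : IsChain (· ⊂ ·) (𝒜' : Set (Finset (Fin n))) :=
    h𝒜.mono (coe_subset.2 (erase_subset _ _))
  have hB𝒜 : B ∈ 𝒜 := mem_of_mem_erase hB
  have hKB : K ⊂ B :=
    (h𝒜.subset_of_card_le hK hB𝒜 (hKmin B hB𝒜)).ssubset_of_ne (ne_of_mem_erase hB).symm
  have hstep := card_prefixPerms_insert_mul_choose hB
    (fun C hC => h𝒜'.subset_of_card_le hB hC (hBmin C hC)) hKB.subset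
  rw [insert_erase hK] at hstep
  have hcard : #𝒜 - 1 = #𝒜' - 1 + 1 := by
    have := card_pos.2 ⟨B, hB⟩
    rw [card_erase_of_mem hK] at this ⊢
    omega
  calc (#(prefixPerms 𝒜) : ℝ) * m ^ (#𝒜 - 1)
      = #(prefixPerms 𝒜) * m * m ^ (#𝒜' - 1) := by rw [hcard, pow_succ]; ring
    _ ≤ #(prefixPerms 𝒜) * (#B).choose #K * m ^ (#𝒜' - 1) := by
        gcongr
        exact hchoose B hB𝒜 K hK hKB
    _ = #(prefixPerms 𝒜') * m ^ (#𝒜' - 1) := by rw [← hstep]; push_cast; ring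
    _ ≤ ∑ F ∈ 𝒜', (#(prefixPerms {F}) : ℝ) :=
        ih 𝒜' (erase_ssubset hK) h𝒜' ⟨B, hB⟩ fun F hF G hG =>
          hchoose F (mem_of_mem_erase hF) G (mem_of_mem_erase hG)
    _ ≤ ∑ F ∈ 𝒜, (#(prefixPerms {F}) : ℝ) :=
        sum_le_sum_of_subset_of_nonneg (erase_subset _ _) fun _ _ _ => by positivity

end Counting

section Supersaturation

variable {n k : ℕ} {D δ m : ℝ} {𝓕 S : Finset (Finset (Fin n))}
  {H 𝒳 : Finset (Finset (Finset (Fin n)))}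

noncomputable def lightVertices (𝓕 : Finset (Finset (Fin n))) (H : Finset (Finset (Finset (Fin n))))
    (D : ℝ) (k : ℕ) : Finset (Finset (Fin n)) :=
  {v ∈ 𝓕 | (degree H {v} : ℝ) + 1 ≤ D ^ (k - 1)}

lemma mem_lightVertices {v : Finset (Fin n)} :
    v ∈ lightVertices 𝓕 H D k ↔ v ∈ 𝓕 ∧ (degree H {v} : ℝ) + 1 ≤ D ^ (k - 1) :=
  mem_filter

lemma lightVertices_subset : lightVertices 𝓕 H D k ⊆ 𝓕 := filter_subset _ _

lemma degree_le_of_mem_lightVertices {v : Finset (Fin n)} (hv : v ∈ lightVertices 𝓕 H D k) :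
    (degree H {v} : ℝ) ≤ D ^ (k - 1) := by
  linarith [(mem_lightVertices.1 hv).2]

noncomputable def saturatedChains (S : Finset (Finset (Fin n)))
    (H : Finset (Finset (Finset (Fin n)))) (D : ℝ) (k : ℕ) : Finset (Finset (Finset (Fin n))) :=
  by classical exact {A ∈ S.powerset | IsChain (· ⊂ ·) (A : Set (Finset (Fin n))) ∧ 2 ≤ #A ∧
    #A ≤ k ∧ D ^ (k - #A) ≤ 2 * degree H A}

lemma mem_saturatedChains {A : Finset (Finset (Fin n))} :
    A ∈ saturatedChains S H D k ↔ A ⊆ S ∧ IsChain (· ⊂ ·) (A : Set (Finset (Fin n))) ∧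
      2 ≤ #A ∧ #A ≤ k ∧ D ^ (k - #A) ≤ 2 * degree H A := by
  simp [saturatedChains]

lemma nonempty_and_subset_of_mem_saturatedChains {A : Finset (Finset (Fin n))}
    (hA : A ∈ saturatedChains S H D k) : A.Nonempty ∧ A ⊆ S := by
  obtain ⟨hAS, -, hA2, -⟩ := mem_saturatedChains.1 hA
  exact ⟨card_pos.1 (by omega), hAS⟩

lemma card_lightVertices_ge {N : ℝ} (hk : 1 ≤ k) (hH : ∀ e ∈ H, #e = k)
    (hD : 1 ≤ δ * m) (hHcard : #H ≤ δ ^ k * m ^ (k - 1) * N) :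
    #𝓕 - 2 * k * δ * N ≤ #(lightVertices 𝓕 H (δ * m) k) := by
  set P := (δ * m) ^ (k - 1) with hPdef
  have hP : 0 < P := pow_pos (by linarith) _
  set heavy := {v ∈ 𝓕 | ¬ (degree H {v} : ℝ) + 1 ≤ P}
  have hsplit : #(lightVertices 𝓕 H (δ * m) k) + #heavy = #𝓕 :=
    card_filter_add_card_filter_not _
  have hheavy : #heavy * P ≤ 2 * k * #H := by
    calc #heavy * P = ∑ v ∈ heavy, P := by rw [sum_const, nsmul_eq_mul]
      _ ≤ ∑ v ∈ heavy, 2 * (degree H {v} : ℝ) := sum_le_sum fun v hv =>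
          le_two_mul_of_lt_add_one (one_le_pow₀ hD) (not_le.1 (mem_filter.1 hv).2)
      _ ≤ 2 * k * #H := by
          rw [← mul_sum, mul_assoc]
          gcongr
          exact_mod_cast sum_degree_singleton_le hH heavy
  have hHP : #H ≤ δ * N * P := by
    have hpow : δ ^ k * m ^ (k - 1) = δ * P := by
      rw [hPdef, mul_pow, ← mul_assoc, ← pow_succ', Nat.sub_add_cancel hk]
    rw [hpow] at hHcard
    linarith
  have : (#heavy : ℝ) ≤ 2 * k * δ * N := by
    refine le_of_mul_le_mul_right ?_ hP
    calc #heavy * P ≤ 2 * k * #H := hheavy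
      _ ≤ 2 * k * (δ * N * P) := by gcongr
      _ = 2 * k * δ * N * P := by ring
  rw [← hsplit]
  push_cast
  linarith

lemma exists_mem_saturatedChains_subset (hk : 2 ≤ k) (hD : 1 ≤ D)
    (hΔ : ∀ ℓ, 1 ≤ ℓ → ℓ ≤ k → ∀ A : Finset (Finset (Fin n)), #A = ℓ →
      (degree H A : ℝ) ≤ D ^ (k - ℓ))
    {W : Finset (Finset (Fin n))} (hWS : W ⊆ lightVertices 𝓕 H D k) (hW : IsKChain k W)
    (hext : W ∉ H → ∃ ℓ, 1 ≤ ℓ ∧ ℓ ≤ k ∧ ∃ A : Finset (Finset (Fin n)), #A = ℓ ∧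
      D ^ (k - ℓ) < degree (insert W H) A) :
    ∃ A ∈ saturatedChains (lightVertices 𝓕 H D k) H D k, A ⊆ W := by
  by_cases hWH : W ∈ H
  · refine ⟨W, mem_saturatedChains.2 ⟨hWS, hW.2, hW.1 ▸ hk, hW.1.le, ?_⟩, subset_rfl⟩
    have : (1 : ℝ) ≤ degree H W := by
      exact_mod_cast card_pos.2 ⟨W, mem_filter.2 ⟨hWH, subset_rfl⟩⟩
    rw [hW.1, Nat.sub_self, pow_zero]
    linarith
  obtain ⟨ℓ, hℓ1, hℓk, A, rfl, hA⟩ := hext hWH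
  rw [degree] at hA
  have hAW : A ⊆ W := by
    by_contra hAW
    rw [filter_insert, if_neg hAW] at hA
    exact (hΔ _ hℓ1 hℓk A rfl).not_gt hA
  rw [filter_insert, if_pos hAW, card_insert_of_notMem fun h => hWH (mem_filter.1 h).1] at hA
  have hA2 : 2 ≤ #A := by
    by_contra
    obtain ⟨v, rfl⟩ := card_eq_one.1 (show #A = 1 by omega)
    have hv := (mem_lightVertices.1 (hWS (hAW (mem_singleton_self v)))).2
    push_cast at hA
    rw [card_singleton] at hA
    exact hv.not_gt hA
  refine ⟨A, mem_saturatedChains.2 ⟨hAW.trans hWS, hW.2.mono (coe_subset.2 hAW), hA2, hℓk,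
    le_two_mul_of_lt_add_one (one_le_pow₀ hD) (by exact_mod_cast hA)⟩, hAW⟩

/-- A saturated chain `A` is an initial segment of at most a `m ^ (1 - #A)` fraction of the
permutations through its members, and its degree is at least `(δ * m) ^ (k - #A) / 2`. -/
lemma card_prefixPerms_mul_pow_le_of_mem_saturatedChains (hδ : 0 < δ) (hδ1 : δ ≤ 1) (hm : 0 < m)
    (hchoose : ∀ F ∈ S, ∀ G ∈ S, G ⊂ F → m ≤ (#F).choose #G) {A : Finset (Finset (Fin n))}
    (hA : A ∈ saturatedChains S H (δ * m) k) :
    #(prefixPerms A) * (δ * m) ^ (k - 1) ≤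
      2 * δ * ∑ v ∈ A, (degree H A : ℝ) * #(prefixPerms {v}) := by
  obtain ⟨hAS, hAchain, hA2, hAk, hAdeg⟩ := mem_saturatedChains.1 hA
  have hchain := card_prefixPerms_mul_pow_le_sum hm.le A hAchain (card_pos.1 (by omega))
    fun F hF G hG => hchoose F (hAS hF) G (hAS hG)
  have hpow : (δ * m) ^ (k - 1) = (δ * m) ^ (k - #A) * δ ^ (#A - 1) * m ^ (#A - 1) := by
    rw [mul_assoc, ← mul_pow, ← pow_add, show k - #A + (#A - 1) = k - 1 by omega]
  calc #(prefixPerms A) * (δ * m) ^ (k - 1)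
      = (δ * m) ^ (k - #A) * δ ^ (#A - 1) * (#(prefixPerms A) * m ^ (#A - 1)) := by
        rw [hpow]; ring
    _ ≤ (2 * degree H A) * δ * ∑ v ∈ A, (#(prefixPerms {v}) : ℝ) := by
        gcongr
        exact pow_le_of_le_one hδ.le hδ1 (by omega)
    _ = 2 * δ * ∑ v ∈ A, (degree H A : ℝ) * #(prefixPerms {v}) := by
        rw [mul_sum, mul_sum]
        exact sum_congr rfl fun v _ => by ring

/-- Charge each saturated chain to the degrees of its members, which are at most
`(δ * m) ^ (k - 1)`. -/
lemma sum_card_prefixPerms_saturatedChains_le (hδ : 0 < δ) (hδ1 : δ ≤ 1) (hm : 0 < m)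
    (hH : ∀ e ∈ H, #e = k) (hchoose : ∀ F ∈ S, ∀ G ∈ S, G ⊂ F → m ≤ (#F).choose #G)
    (hdeg : ∀ v ∈ S, (degree H {v} : ℝ) ≤ (δ * m) ^ (k - 1)) :
    ∑ A ∈ saturatedChains S H (δ * m) k, (#(prefixPerms A) : ℝ) ≤
      2 ^ (k + 1) * δ * ∑ v ∈ S, (#(prefixPerms {v}) : ℝ) := by
  set 𝒳 := saturatedChains S H (δ * m) k
  set P := (δ * m) ^ (k - 1)
  have hswap : ∑ A ∈ 𝒳, ∑ v ∈ A, (degree H A : ℝ) * #(prefixPerms {v}) =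
      ∑ v ∈ S, ∑ A ∈ 𝒳 with v ∈ A, (degree H A : ℝ) * #(prefixPerms {v}) :=
    sum_comm' fun A v => by
      rw [mem_filter]
      exact ⟨fun h => ⟨⟨h.1, h.2⟩, (mem_saturatedChains.1 h.1).1 h.2⟩, fun h => h.1⟩
  have hdegsum : ∀ v ∈ S, ∑ A ∈ 𝒳 with v ∈ A, (degree H A : ℝ) ≤ 2 ^ k * P := fun v hv => by
    calc ∑ A ∈ 𝒳 with v ∈ A, (degree H A : ℝ) ≤ 2 ^ k * degree H {v} := by
          exact_mod_cast sum_degree_le hH fun A hA => (mem_filter.1 hA).2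
      _ ≤ 2 ^ k * P := by gcongr; exact hdeg v hv
  have hP : 0 < P := pow_pos (mul_pos hδ hm) _
  refine le_of_mul_le_mul_right ?_ hP
  calc (∑ A ∈ 𝒳, (#(prefixPerms A) : ℝ)) * P = ∑ A ∈ 𝒳, #(prefixPerms A) * P := sum_mul ..
    _ ≤ ∑ A ∈ 𝒳, 2 * δ * ∑ v ∈ A, (degree H A : ℝ) * #(prefixPerms {v}) :=
        sum_le_sum fun _ hA =>
          card_prefixPerms_mul_pow_le_of_mem_saturatedChains hδ hδ1 hm hchoose hA
    _ = 2 * δ * ∑ v ∈ S, (∑ A ∈ 𝒳 with v ∈ A, (degree H A : ℝ)) * #(prefixPerms {v}) := by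
        rw [← mul_sum, hswap]
        simp only [sum_mul]
    _ ≤ 2 * δ * ∑ v ∈ S, 2 ^ k * P * #(prefixPerms {v}) := by
        gcongr with v hv
        exact hdegsum v hv
    _ = 2 ^ (k + 1) * δ * (∑ v ∈ S, (#(prefixPerms {v}) : ℝ)) * P := by
        rw [← mul_sum]
        ring

lemma card_filter_isPrefix_lt (h𝒳 : ∀ A ∈ 𝒳, A.Nonempty ∧ A ⊆ S)
    (hsat : ∀ W ⊆ S, IsKChain k W → ∃ A ∈ 𝒳, A ⊆ W) (σ : Equiv.Perm (Fin n)) :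
    #{F ∈ S | IsPrefix σ F} < k + k * #{A ∈ 𝒳 | σ ∈ prefixPerms A} := by
  have hfilter : {A ∈ 𝒳 | σ ∈ prefixPerms A} = {A ∈ 𝒳 | A ⊆ {F ∈ S | IsPrefix σ F}} := by
    refine filter_congr fun A hA => ?_
    simp only [mem_prefixPerms, subset_iff, mem_filter]
    exact ⟨fun h F hF => ⟨(h𝒳 A hA).2 hF, h F hF⟩, fun h F hF => (h hF).2⟩
  rw [hfilter]
  refine card_lt_of_forall_exists_subset (fun A hA => (h𝒳 A hA).1) _ fun W hW hWk => ?_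
  refine hsat W (hW.trans (filter_subset _ _)) ⟨hWk, (isChain_setOf_isPrefix σ).mono ?_⟩
  exact fun F hF => (mem_filter.1 (hW hF)).2

lemma sum_card_prefixPerms_add_le (h𝒳 : ∀ A ∈ 𝒳, A.Nonempty ∧ A ⊆ S)
    (hsat : ∀ W ⊆ S, IsKChain k W → ∃ A ∈ 𝒳, A ⊆ W) :
    ∑ v ∈ S, #(prefixPerms {v}) + n ! ≤ k * n ! + k * ∑ A ∈ 𝒳, #(prefixPerms A) := by
  have hS : ∑ σ : Equiv.Perm (Fin n), #{F ∈ S | IsPrefix σ F} = ∑ v ∈ S, #(prefixPerms {v}) := by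
    simp only [prefixPerms, mem_singleton, forall_eq, card_eq_sum_ones, sum_filter]
    exact sum_comm
  have h𝒳' : ∑ σ : Equiv.Perm (Fin n), #{A ∈ 𝒳 | σ ∈ prefixPerms A} =
      ∑ A ∈ 𝒳, #(prefixPerms A) := by
    simp only [card_eq_sum_ones, sum_filter]
    rw [sum_comm]
    simp [prefixPerms]
  have hcard : Fintype.card (Equiv.Perm (Fin n)) = n ! := by
    rw [Fintype.card_perm, Fintype.card_fin]
  calc ∑ v ∈ S, #(prefixPerms {v}) + n !
      = ∑ σ : Equiv.Perm (Fin n), (#{F ∈ S | IsPrefix σ F} + 1) := by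
        rw [sum_add_distrib, hS, sum_const, card_univ, hcard, smul_eq_mul, mul_one]
    _ ≤ ∑ σ : Equiv.Perm (Fin n), (k + k * #{A ∈ 𝒳 | σ ∈ prefixPerms A}) :=
        sum_le_sum fun σ _ => card_filter_isPrefix_lt h𝒳 hsat σ
    _ = k * n ! + k * ∑ A ∈ 𝒳, #(prefixPerms A) := by
        rw [sum_add_distrib, ← mul_sum, h𝒳', sum_const, card_univ, hcard, smul_eq_mul, mul_comm]

lemma card_mul_factorial_le_sum (S : Finset (Finset (Fin n))) :
    #S * n ! ≤ (∑ v ∈ S, #(prefixPerms {v})) * n.choose (n / 2) := by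
  calc #S * n ! = ∑ v ∈ S, #(prefixPerms {v}) * n.choose #v := by
        rw [sum_congr rfl fun v _ => card_prefixPerms_singleton_mul_choose v, sum_const,
          smul_eq_mul]
    _ ≤ ∑ v ∈ S, #(prefixPerms {v}) * n.choose (n / 2) := by
        gcongr
        exact Nat.choose_le_middle _ _
    _ = (∑ v ∈ S, #(prefixPerms {v})) * n.choose (n / 2) := (sum_mul ..).symm

lemma sum_card_prefixPerms_lightVertices_add_le (hk : 2 ≤ k) (hδ : 0 < δ) (hδ1 : δ ≤ 1)
    (hD : 1 ≤ δ * m) (hchoose : ∀ F ∈ 𝓕, ∀ G ∈ 𝓕, G ⊂ F → m ≤ (#F).choose #G)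
    (hH : ∀ e ∈ H, #e = k)
    (hΔ : ∀ ℓ, 1 ≤ ℓ → ℓ ≤ k → ∀ A : Finset (Finset (Fin n)), #A = ℓ →
      (degree H A : ℝ) ≤ (δ * m) ^ (k - ℓ))
    (hext : ∀ f ⊆ 𝓕, IsKChain k f → f ∉ H → ∃ ℓ, 1 ≤ ℓ ∧ ℓ ≤ k ∧
      ∃ A : Finset (Finset (Fin n)), #A = ℓ ∧ (δ * m) ^ (k - ℓ) < degree (insert f H) A) :
    ∑ v ∈ lightVertices 𝓕 H (δ * m) k, (#(prefixPerms {v}) : ℝ) + n ! ≤ k * n ! +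
      k * 2 ^ (k + 1) * δ * ∑ v ∈ lightVertices 𝓕 H (δ * m) k, (#(prefixPerms {v}) : ℝ) := by
  set S := lightVertices 𝓕 H (δ * m) k
  have hcount : ∑ v ∈ S, (#(prefixPerms {v}) : ℝ) + n ! ≤
      k * n ! + k * ∑ A ∈ saturatedChains S H (δ * m) k, (#(prefixPerms A) : ℝ) := by
    exact_mod_cast sum_card_prefixPerms_add_le
      (fun A => nonempty_and_subset_of_mem_saturatedChains) fun W hWS hW =>
        exists_mem_saturatedChains_subset hk hD hΔ hWS hW
          (hext W (hWS.trans lightVertices_subset) hW)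
  have hsat := sum_card_prefixPerms_saturatedChains_le hδ hδ1
    (pos_of_mul_pos_right (one_pos.trans_le hD) hδ.le) hH
    (fun F hF G hG => hchoose F (lightVertices_subset hF) G (lightVertices_subset hG))
    fun v => degree_le_of_mem_lightVertices (v := v)
  nlinarith [mul_le_mul_of_nonneg_left hsat (Nat.cast_nonneg (α := ℝ) k)]

end Supersaturation

theorem exists_isKChain_insert_degree_le {n k : ℕ} (hk : 2 ≤ k) {α δ m : ℝ} (hα : 0 < α)
    (hα1 : α ≤ 1) (hδ : 0 < δ) (hδα : 4 * k ^ 2 * 2 ^ (k + 1) * δ ≤ α)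
    {𝓕 : Finset (Finset (Fin n))} {H : Finset (Finset (Finset (Fin n)))}
    (h𝓕 : (k - 1 + α) * n.choose (n / 2) ≤ #𝓕) (hD : 1 ≤ δ * m)
    (hchoose : ∀ F ∈ 𝓕, ∀ G ∈ 𝓕, G ⊂ F → m ≤ (#F).choose #G) (hH : ∀ e ∈ H, #e = k)
    (hHcard : #H ≤ δ ^ k * m ^ (k - 1) * n.choose (n / 2))
    (hΔ : ∀ ℓ, 1 ≤ ℓ → ℓ ≤ k → ∀ A : Finset (Finset (Fin n)), #A = ℓ →
      (degree H A : ℝ) ≤ (δ * m) ^ (k - ℓ)) :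
    ∃ f ⊆ 𝓕, IsKChain k f ∧ f ∉ H ∧ ∀ ℓ, 1 ≤ ℓ → ℓ ≤ k → ∀ A : Finset (Finset (Fin n)),
      #A = ℓ → (degree (insert f H) A : ℝ) ≤ (δ * m) ^ (k - ℓ) := by
  by_contra! hext
  have hk' : (2 : ℝ) ≤ k := by exact_mod_cast hk
  have hpow : (1 : ℝ) ≤ 2 ^ (k + 1) := one_le_pow₀ one_le_two
  have hδ1 : δ ≤ 1 := by nlinarith [mul_le_mul_of_nonneg_left hpow hδ.le]
  have h2kδ : 2 * k * δ ≤ α / 2 := by nlinarith [mul_le_mul_of_nonneg_left hpow hδ.le]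
  have hupper := sum_card_prefixPerms_lightVertices_add_le hk hδ hδ1 hD hchoose hH hΔ hext
  have hlight := card_lightVertices_ge (𝓕 := 𝓕) (by omega) hH hD hHcard
  set S := lightVertices 𝓕 H (δ * m) k
  have hlower : (#S : ℝ) * n ! ≤ (∑ v ∈ S, (#(prefixPerms {v}) : ℝ)) * n.choose (n / 2) := by
    exact_mod_cast card_mul_factorial_le_sum S
  set L := ∑ v ∈ S, (#(prefixPerms {v}) : ℝ)
  set N : ℝ := (n.choose (n / 2) : ℝ)
  have hN : 0 < N := Nat.cast_pos.2 (Nat.choose_pos (Nat.div_le_self n 2))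
  have hF : (0 : ℝ) < n ! := by positivity
  have hSN : (k - 1 + α / 2) * N ≤ #S := by nlinarith [mul_le_mul_of_nonneg_right h2kδ hN.le]
  have hLF : (k - 1 + α / 2) * n ! ≤ L := le_of_mul_le_mul_right (by nlinarith) hN
  have hc : 4 * k * (k * 2 ^ (k + 1) * δ * L) ≤ α * L := by
    nlinarith [mul_le_mul_of_nonneg_right hδα (sum_nonneg fun v _ => Nat.cast_nonneg _ : 0 ≤ L)]
  nlinarith [mul_le_mul_of_nonneg_left hLF (by linarith : (0 : ℝ) ≤ 4 * k - α),
    mul_pos hF (mul_pos hα (by linarith : (0 : ℝ) < k + 1 - α / 2))]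

end ChainSupersaturation

open ChainSupersaturation in
/-- Iteration lemma: if `ℋ ⊆ 𝒢ₖ[𝓕]` is small and well-spread, a further good edge
(a `k`-chain of sets of `𝓕`) can be added without violating the degree conditions. -/
theorem statement6 (k : ℕ) (hk : 2 ≤ k) (α : ℝ) (hα : 0 < α) :
    ∃ δ : ℝ, 0 < δ ∧ ∀ (n : ℕ) (𝓕 : Finset (Finset (Fin n))) (m : ℝ)
      (H : Finset (Finset (Finset (Fin n)))),
      ((k : ℝ) - 1 + α) * (n.choose (n / 2)) ≤ (𝓕.card : ℝ) →
      δ⁻¹ ≤ m →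
      (∀ F ∈ 𝓕, ∀ G ∈ 𝓕, G ⊂ F → m ≤ (F.card.choose G.card : ℝ)) →
      (∀ e ∈ H, e ⊆ 𝓕 ∧ IsKChain k e) →
      (H.card : ℝ) ≤ δ ^ k * m ^ (k - 1) * (n.choose (n / 2)) →
      (∀ ℓ : ℕ, 1 ≤ ℓ → ℓ ≤ k → ∀ A : Finset (Finset (Fin n)), A.card = ℓ →
        ((H.filter (fun e => A ⊆ e)).card : ℝ) ≤ (δ * m) ^ (k - ℓ)) →
      ∃ f : Finset (Finset (Fin n)), f ⊆ 𝓕 ∧ IsKChain k f ∧ f ∉ H ∧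
        (∀ ℓ : ℕ, 1 ≤ ℓ → ℓ ≤ k → ∀ A : Finset (Finset (Fin n)), A.card = ℓ →
          (((insert f H).filter (fun e => A ⊆ e)).card : ℝ) ≤ (δ * m) ^ (k - ℓ)) := by
  set α' := min α 1
  have hα' : 0 < α' := lt_min hα one_pos
  refine ⟨α' / (4 * k ^ 2 * 2 ^ (k + 1)), by positivity,
    fun n 𝓕 m H h𝓕 hm hchoose hH hHcard hΔ => ?_⟩
  have hδα : 4 * k ^ 2 * 2 ^ (k + 1) * (α' / (4 * k ^ 2 * 2 ^ (k + 1))) ≤ α' := by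
    rw [mul_div_cancel₀ _ (by positivity)]
  exact exists_isKChain_insert_degree_le hk hα' (min_le_right α 1) (by positivity) hδα
    (h𝓕.trans' (by gcongr; exact min_le_left α 1))
    ((inv_le_iff_one_le_mul₀' (by positivity)).1 hm) hchoose (fun e he => (hH e he).2.1) hHcard hΔ
end

section
/- Let k ≥ 2 be an integer, let δ > 0 and let m be a real number with δ·m ≥ 1. Let ℋ be a k-uniform hypergraph whose vertices are subsets of {1,…,n}, all of whose edges are k-chains, and suppose Δ_ℓ(ℋ) ≤ (δm)^{k−ℓ} for every 1 ≤ ℓ ≤ k. Then for any good family 𝒜 of subsets of {1,…,n}, the number of sets F ⊆ {1,…,n} for which the family {F} ∪ 𝒜 is bad but the singleton family {F} is not saturated is at most 2^{|𝒜|} · 2δkm. -/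
open Finset

/-- The degree of a family `A` of vertices in the hypergraph `H`: the number of edges
of `H` containing `A`. -/
def degH {n : ℕ} (H : Finset (Finset (Finset (Fin n)))) (A : Finset (Finset (Fin n))) : ℕ :=
  (H.filter (fun e => A ⊆ e)).card

/-- `A` is saturated (w.r.t. `H`, `k`, `δ`, `m`): it is nonempty and
`d(A) = ⌊(δm)^{k-|A|}⌋`. -/
def Saturated {n : ℕ} (k : ℕ) (δ m : ℝ) (H : Finset (Finset (Finset (Fin n))))
    (A : Finset (Finset (Fin n))) : Prop :=
  A.Nonempty ∧ degH H A = ⌊(δ * m) ^ (k - A.card)⌋₊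

/-- `B` is bad: it contains a saturated subfamily. `B` is good if it is not bad. -/
def Bad {n : ℕ} (k : ℕ) (δ m : ℝ) (H : Finset (Finset (Finset (Fin n))))
    (B : Finset (Finset (Fin n))) : Prop :=
  ∃ A ⊆ B, Saturated k δ m H A

/-- There are few ways to turn a good family bad: for a good family `𝒜`, the number of sets
`F` for which `{F} ∪ 𝒜` is bad and `{F}` is not saturated is at most `2^{|𝒜|}·2δkm`. -/
theorem statement7 (n k : ℕ) (hk : 2 ≤ k) (δ m : ℝ) (hδ : 0 < δ) (hδm : 1 ≤ δ * m)
    (H : Finset (Finset (Finset (Fin n))))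
    (hedges : ∀ e ∈ H, IsKChain k e)
    (hΔ : ∀ ℓ : ℕ, 1 ≤ ℓ → ℓ ≤ k → ∀ A : Finset (Finset (Fin n)), A.card = ℓ →
      (degH H A : ℝ) ≤ (δ * m) ^ (k - ℓ))
    (𝒜 : Finset (Finset (Fin n))) (hgood : ¬ Bad k δ m H 𝒜) :
    (Set.ncard {F : Finset (Fin n) |
        Bad k δ m H (insert F 𝒜) ∧ ¬ Saturated k δ m H {F}} : ℝ)
      ≤ 2 ^ 𝒜.card * (2 * δ * k * m) := by
  classical
  have hdm : (0:ℝ) < δ * m := lt_of_lt_of_le one_pos hδm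
  have hm : (0:ℝ) < m := by
    rcases lt_or_ge 0 m with h | h
    · exact h
    · nlinarith
  have hbound : (0:ℝ) ≤ 2 * δ * k * m := by positivity
  -- floor of any power of δm is at least 1
  have hfloor1 : ∀ t : ℕ, 1 ≤ ⌊(δ * m) ^ t⌋₊ := by
    intro t
    apply Nat.le_floor
    push_cast
    exact one_le_pow₀ hδm
  -- key lemma
  have key : ∀ A' : Finset (Finset (Fin n)),
      ((univ.filter (fun F : Finset (Fin n) =>
        F ∉ A' ∧ A'.Nonempty ∧ Saturated k δ m H (insert F A'))).card : ℝ)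
        ≤ 2 * δ * k * m := by
    intro A'
    set T' := univ.filter (fun F : Finset (Fin n) =>
        F ∉ A' ∧ A'.Nonempty ∧ Saturated k δ m H (insert F A')) with hT'def
    have hT'mem : ∀ F ∈ T', F ∉ A' ∧ A'.Nonempty ∧ Saturated k δ m H (insert F A') := by
      intro F hF
      simpa [hT'def] using hF
    rcases T'.eq_empty_or_nonempty with he | ⟨F0, hF0⟩
    · rw [he]; simpa using hbound
    · obtain ⟨hF0n, hA'ne, hsat0⟩ := hT'mem F0 hF0
      set ℓ := A'.card with hℓdef
      have hℓ1 : 1 ≤ ℓ := hA'ne.card_pos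
      -- degree of insert F0 A' is positive, so some edge contains it, hence ℓ+1 ≤ k
      have hcard0 : (insert F0 A').card = ℓ + 1 := by
        rw [card_insert_of_notMem hF0n]
      have hdeg0 : 1 ≤ degH H (insert F0 A') := by
        rw [hsat0.2]; exact hfloor1 _
      have hℓk : ℓ + 1 ≤ k := by
        have : (H.filter (fun e => insert F0 A' ⊆ e)).Nonempty := by
          rw [← card_pos]; exact hdeg0
        obtain ⟨e, he⟩ := this
        rw [mem_filter] at he
        have := card_le_card he.2
        rw [hcard0, (hedges e he.1).1] at this
        exact this
      set D := ⌊(δ * m) ^ (k - (ℓ + 1))⌋₊ with hDdef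
      -- every F in T' has degH (insert F A') = D
      have hdegF : ∀ F ∈ T', degH H (insert F A') = D := by
        intro F hF
        obtain ⟨hFn, _, hsat⟩ := hT'mem F hF
        rw [hsat.2, card_insert_of_notMem hFn]
      -- double counting
      have hcount : T'.card * D ≤ k * degH H A' := by
        have step1 : T'.card * D = ∑ F ∈ T', degH H (insert F A') := by
          rw [Finset.sum_congr rfl hdegF, Finset.sum_const, smul_eq_mul]
        have step2 : ∀ F, degH H (insert F A')
            = (H.filter (fun e => A' ⊆ e ∧ F ∈ e)).card := by
          intro F
          unfold degH
          congr 1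
          apply Finset.filter_congr
          intro e _
          simp [Finset.insert_subset_iff, and_comm]
        have step3 : ∑ F ∈ T', (H.filter (fun e => A' ⊆ e ∧ F ∈ e)).card
            = ∑ e ∈ H, (T'.filter (fun F => A' ⊆ e ∧ F ∈ e)).card := by
          simp_rw [Finset.card_filter]
          exact Finset.sum_comm
        have step4 : ∀ e ∈ H, (T'.filter (fun F => A' ⊆ e ∧ F ∈ e)).card
            ≤ if A' ⊆ e then k else 0 := by
          intro e he
          by_cases hAe : A' ⊆ e
          · rw [if_pos hAe]
            have hsub : T'.filter (fun F => A' ⊆ e ∧ F ∈ e) ⊆ e := by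
              intro F hF
              exact (Finset.mem_filter.mp hF).2.2
            calc (T'.filter (fun F => A' ⊆ e ∧ F ∈ e)).card ≤ e.card :=
                  card_le_card hsub
              _ = k := (hedges e he).1
          · rw [if_neg hAe]
            have : T'.filter (fun F => A' ⊆ e ∧ F ∈ e) = ∅ := by
              apply Finset.filter_eq_empty_iff.mpr
              intro F _ h
              exact hAe h.1
            simp [this]
        have step5 : ∑ e ∈ H, (if A' ⊆ e then k else 0) = k * degH H A' := by
          rw [← Finset.sum_filter, Finset.sum_const, smul_eq_mul]
          unfold degH
          ring
        calc T'.card * D = ∑ F ∈ T', degH H (insert F A') := step1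
          _ = ∑ F ∈ T', (H.filter (fun e => A' ⊆ e ∧ F ∈ e)).card := by
              exact Finset.sum_congr rfl (fun F _ => step2 F)
          _ = ∑ e ∈ H, (T'.filter (fun F => A' ⊆ e ∧ F ∈ e)).card := step3
          _ ≤ ∑ e ∈ H, (if A' ⊆ e then k else 0) := Finset.sum_le_sum step4
          _ = k * degH H A' := step5
      -- pass to reals
      have hdegA : (degH H A' : ℝ) ≤ (δ * m) ^ (k - ℓ) := hΔ ℓ hℓ1 (by omega) A' rfl
      set t := k - (ℓ + 1) with htdef
      have hkt : k - ℓ = t + 1 := by omega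
      rw [hkt] at hdegA
      set x := (δ * m) ^ t with hxdef
      have hx1 : (1:ℝ) ≤ x := one_le_pow₀ hδm
      have hDx : x / 2 ≤ (D : ℝ) := by
        have h1 : (1:ℕ) ≤ D := hfloor1 t
        have h2 : x < (D : ℝ) + 1 := Nat.lt_floor_add_one x
        have h1' : (1:ℝ) ≤ (D:ℝ) := by exact_mod_cast h1
        nlinarith
      have hcount' : (T'.card : ℝ) * D ≤ k * (x * (δ * m)) := by
        have : (T'.card : ℝ) * D ≤ (k : ℝ) * degH H A' := by
          exact_mod_cast hcount
        calc (T'.card : ℝ) * D ≤ (k : ℝ) * degH H A' := this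
          _ ≤ k * (x * (δ * m)) := by
              rw [pow_succ] at hdegA
              exact mul_le_mul_of_nonneg_left hdegA (by positivity)
      have hTnn : (0:ℝ) ≤ T'.card := Nat.cast_nonneg _
      have hkpos : (0:ℝ) < k := by exact_mod_cast lt_of_lt_of_le two_pos hk
      nlinarith [mul_le_mul_of_nonneg_left hDx hTnn, mul_pos hdm (lt_of_lt_of_le one_pos hx1)]
  -- main argument
  set T := univ.filter (fun F : Finset (Fin n) =>
      Bad k δ m H (insert F 𝒜) ∧ ¬ Saturated k δ m H {F}) with hTdef
  have hset : {F : Finset (Fin n) |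
      Bad k δ m H (insert F 𝒜) ∧ ¬ Saturated k δ m H {F}} = ↑T := by
    ext F; simp [hTdef]
  rw [hset, Set.ncard_coe_finset]
  have hsub : T ⊆ 𝒜.powerset.biUnion (fun A' => univ.filter (fun F : Finset (Fin n) =>
      F ∉ A' ∧ A'.Nonempty ∧ Saturated k δ m H (insert F A'))) := by
    intro F hF
    rw [hTdef, mem_filter] at hF
    obtain ⟨-, ⟨A, hAsub, hAsat⟩, hFnot⟩ := hF
    have hFA : F ∈ A := by
      by_contra hFA
      exact hgood ⟨A, fun x hx => by
        rcases Finset.mem_insert.mp (hAsub hx) with h | h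
        · exact absurd (h ▸ hx) hFA
        · exact h, hAsat⟩
    have hA'sub : A.erase F ⊆ 𝒜 := by
      intro x hx
      rw [mem_erase] at hx
      rcases Finset.mem_insert.mp (hAsub hx.2) with h | h
      · exact absurd h hx.1
      · exact h
    have hins : insert F (A.erase F) = A := Finset.insert_erase hFA
    have hne : (A.erase F).Nonempty := by
      rcases (A.erase F).eq_empty_or_nonempty with h | h
      · exfalso
        apply hFnot
        have : A = {F} := by
          rw [← hins, h]; rfl
        rwa [this] at hAsat
      · exact h
    rw [Finset.mem_biUnion]
    exact ⟨A.erase F, Finset.mem_powerset.mpr hA'sub,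
      Finset.mem_filter.mpr ⟨mem_univ F, Finset.notMem_erase F A, hne, by rw [hins]; exact hAsat⟩⟩
  calc (T.card : ℝ)
      ≤ ((𝒜.powerset.biUnion (fun A' => univ.filter (fun F : Finset (Fin n) =>
          F ∉ A' ∧ A'.Nonempty ∧ Saturated k δ m H (insert F A')))).card : ℝ) := by
        exact_mod_cast card_le_card hsub
    _ ≤ ∑ A' ∈ 𝒜.powerset, ((univ.filter (fun F : Finset (Fin n) =>
          F ∉ A' ∧ A'.Nonempty ∧ Saturated k δ m H (insert F A'))).card : ℝ) := by
        exact_mod_cast Finset.card_biUnion_le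
    _ ≤ ∑ _A' ∈ 𝒜.powerset, (2 * δ * k * m) := Finset.sum_le_sum (fun A' _ => key A')
    _ = 2 ^ 𝒜.card * (2 * δ * k * m) := by
        rw [Finset.sum_const, Finset.card_powerset, nsmul_eq_mul]
        push_cast
        ring
end

section
/- Let k ≥ 2 be an integer, let δ > 0 and let m be a real number with δ·m ≥ 1. Let ℋ be a k-uniform hypergraph whose vertices are subsets of {1,…,n}, all of whose edges are k-chains, and suppose e(ℋ) ≤ δ^k·m^{k−1}·C(n,⌊n/2⌋). Then the number of sets F ⊆ {1,…,n} such that the singleton family {F} is saturated, i.e. such that d({F}) = ⌊(δm)^{k−1}⌋, is at most 2δk·C(n,⌊n/2⌋). -/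
open Finset

/-- If `e(ℋ) ≤ δ^k m^{k-1} C(n,n/2)`, the number of sets `F` with `{F}` saturated is at most
`2δk C(n,n/2)`. -/
theorem statement8 (n k : ℕ) (hk : 2 ≤ k) (δ m : ℝ) (hδ : 0 < δ) (hδm : 1 ≤ δ * m)
    (H : Finset (Finset (Finset (Fin n))))
    (hedges : ∀ e ∈ H, IsKChain k e)
    (hsize : (H.card : ℝ) ≤ δ ^ k * m ^ (k - 1) * (n.choose (n / 2))) :
    (Set.ncard {F : Finset (Fin n) | degH H {F} = ⌊(δ * m) ^ (k - 1)⌋₊} : ℝ)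
      ≤ 2 * δ * k * (n.choose (n / 2)) := by
  classical
  set x : ℝ := (δ * m) ^ (k - 1) with hxdef
  set N : ℕ := ⌊x⌋₊ with hNdef
  have hx1 : (1:ℝ) ≤ x := one_le_pow₀ hδm
  have hx0 : 0 < x := lt_of_lt_of_le one_pos hx1
  -- the set as a finset
  have hset : {F : Finset (Fin n) | degH H {F} = N} =
      ↑(univ.filter (fun F : Finset (Fin n) => degH H {F} = N)) := by
    ext F; simp
  rw [hset, Set.ncard_coe_finset]
  set S := univ.filter (fun F : Finset (Fin n) => degH H {F} = N) with hS
  -- double counting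
  have hsum : S.card * N ≤ k * H.card := by
    have h1 : S.card * N = ∑ F ∈ S, degH H {F} := by
      rw [Finset.sum_congr rfl (fun F hF => (Finset.mem_filter.mp hF).2),
        Finset.sum_const, smul_eq_mul]
    have h2 : ∑ F ∈ S, degH H {F} ≤ ∑ F ∈ (univ : Finset (Finset (Fin n))), degH H {F} :=
      Finset.sum_le_sum_of_subset (Finset.subset_univ S)
    have h3 : ∑ F ∈ (univ : Finset (Finset (Fin n))), degH H {F} = ∑ e ∈ H, e.card := by
      simp only [degH, Finset.card_filter]
      rw [Finset.sum_comm]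
      refine Finset.sum_congr rfl (fun e he => ?_)
      rw [← Finset.card_filter]
      congr 1
      ext F
      simp [Finset.singleton_subset_iff]
    have h4 : ∑ e ∈ H, e.card = k * H.card := by
      rw [Finset.sum_congr rfl (fun e he => (hedges e he).1), Finset.sum_const,
        smul_eq_mul, mul_comm]
    omega
  -- N ≥ x / 2
  have hN2 : x / 2 ≤ (N : ℝ) := by
    rcases lt_or_ge x 2 with h | h
    · have : (1:ℕ) ≤ N := Nat.le_floor (by simpa using hx1)
      have : (1:ℝ) ≤ (N:ℝ) := by exact_mod_cast this
      linarith
    · have := Nat.sub_one_lt_floor x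
      have hNx : x - 1 < (N:ℝ) := this
      linarith
  -- real inequality
  have hkey : (S.card : ℝ) * (x / 2) ≤ (k : ℝ) * (δ ^ k * m ^ (k - 1) * (n.choose (n / 2))) := by
    calc (S.card : ℝ) * (x / 2) ≤ (S.card : ℝ) * N := by
          exact mul_le_mul_of_nonneg_left hN2 (by positivity)
      _ ≤ (k : ℝ) * H.card := by exact_mod_cast hsum
      _ ≤ (k : ℝ) * (δ ^ k * m ^ (k - 1) * (n.choose (n / 2))) := by
          refine mul_le_mul_of_nonneg_left hsize (by positivity)
  have hδk : δ ^ k * m ^ (k - 1) = δ * x := by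
    rw [hxdef, mul_pow, ← mul_assoc]
    congr 1
    rw [← pow_succ']
    congr 1
    omega
  rw [hδk] at hkey
  have hfin : (S.card : ℝ) * x ≤ (2 * δ * k * (n.choose (n / 2))) * x := by
    nlinarith [hkey]
  exact le_of_mul_le_mul_right (by linarith) hx0
end

section
/- Let ℱ be a family of subsets of {1,…,n} and let 1 ≤ i < j be integers. Then Σ_{F ∈ ℱ} (c_i(F) − c_j(F)) / C(n,|F|) ≤ max_{s ∈ ℕ} [C(s,i) − C(s,j)]. -/
open Finset

/-- The weight of a chain tuple `F₁ ⊋ F₂ ⊋ ⋯ ⊋ F_ℓ`: the product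
`C(|F₁|,|F₂|)⁻¹ ⋯ C(|F_{ℓ-1}|,|F_ℓ|)⁻¹` of reciprocals of consecutive binomial coefficients. -/
noncomputable def chainWeight {n ℓ : ℕ} (G : Fin ℓ → Finset (Fin n)) : ℝ :=
  ∏ i : Fin ℓ, if h : (i : ℕ) + 1 < ℓ then
    (((G i).card.choose (G ⟨(i : ℕ) + 1, h⟩).card : ℕ) : ℝ)⁻¹ else 1

open scoped Classical in
/-- The `ℓ`-chain density of `F₁` with respect to the family `𝓕`: the sum of `chainWeight`
over all chains `F₁ ⊋ F₂ ⊋ ⋯ ⊋ F_ℓ` with `F₂, …, F_ℓ ∈ 𝓕`.  In particular the `1`-chain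
density is always `1`. -/
noncomputable def chainDensity {n : ℕ} (𝓕 : Finset (Finset (Fin n))) (ℓ : ℕ)
    (F₁ : Finset (Fin n)) : ℝ :=
  ∑ G : Fin ℓ → Finset (Fin n),
    if (∀ h : 0 < ℓ, G ⟨0, h⟩ = F₁) ∧ (∀ i : Fin ℓ, (i : ℕ) ≠ 0 → G i ∈ 𝓕) ∧
        (∀ i j : Fin ℓ, i < j → G j ⊂ G i)
      then chainWeight G else 0

namespace DGS

open Nat

/-- card of `{x : Fin n | x < b}` when `b ≤ n`. -/
lemma card_filter_lt (n b : ℕ) (hb : b ≤ n) :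
    ((univ : Finset (Fin n)).filter fun x : Fin n => (x : ℕ) < b).card = b := by
  have h : ((univ : Finset (Fin n)).filter fun x : Fin n => (x : ℕ) < b)
      = (Finset.range b).attachFin (fun m hm => lt_of_lt_of_le (Finset.mem_range.1 hm) hb) := by
    ext x
    simp [Finset.mem_attachFin]
  rw [h, Finset.card_attachFin, Finset.card_range]

lemma card_filter_Ico (n a b : ℕ) (hb : b ≤ n) (hab : a ≤ b) :
    ((univ : Finset (Fin n)).filter fun x : Fin n => a ≤ (x : ℕ) ∧ (x : ℕ) < b).card = b - a := by
  classical
  have h1 : ((univ : Finset (Fin n)).filter fun x : Fin n => a ≤ (x : ℕ) ∧ (x : ℕ) < b)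
      = ((univ : Finset (Fin n)).filter fun x : Fin n => (x : ℕ) < b) \
        ((univ : Finset (Fin n)).filter fun x : Fin n => (x : ℕ) < a) := by
    ext x; simp only [Finset.mem_filter, Finset.mem_sdiff, Finset.mem_univ, true_and]
    omega
  rw [h1, Finset.card_sdiff_of_subset, card_filter_lt n b hb, card_filter_lt n a (le_trans hab hb)]
  intro x hx
  simp only [Finset.mem_filter, Finset.mem_univ, true_and] at hx ⊢
  omega

/-- downward-closed predicate on `Fin ℓ`: membership iff index below count. -/
lemma dc_mem_iff {ℓ : ℕ} (P : Fin ℓ → Prop) [DecidablePred P]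
    (hdc : ∀ a b : Fin ℓ, a ≤ b → P b → P a) (k : Fin ℓ) :
    P k ↔ (k : ℕ) < (univ.filter P).card := by
  constructor
  · intro hk
    have hsub : Finset.Iic k ⊆ univ.filter P := by
      intro a ha
      simp only [Finset.mem_Iic] at ha
      exact Finset.mem_filter.2 ⟨Finset.mem_univ _, hdc a k ha hk⟩
    have := Finset.card_le_card hsub
    rwa [Fin.card_Iic, Nat.succ_le_iff] at this
  · intro hk
    by_contra hP
    have hsub : univ.filter P ⊆ Finset.Iio k := by
      intro a ha
      simp only [Finset.mem_filter] at ha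
      simp only [Finset.mem_Iio]
      by_contra hak
      exact hP (hdc k a (le_of_not_gt hak) ha.2)
    have := Finset.card_le_card hsub
    rw [Fin.card_Iio] at this
    omega

lemma dc_count_eq {ℓ : ℕ} (P : Fin ℓ → Prop) [DecidablePred P]
    (hdc : ∀ a b : Fin ℓ, a ≤ b → P b → P a) (t : ℕ) (ht : t ≤ ℓ) :
    (univ.filter P).card = t ↔ ∀ k : Fin ℓ, (P k ↔ (k : ℕ) < t) := by
  constructor
  · intro h k; rw [dc_mem_iff P hdc k, h]
  · intro h
    have : univ.filter P = univ.filter (fun k : Fin ℓ => (k : ℕ) < t) := by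
      ext k; simp [h k]
    rw [this, card_filter_lt ℓ t ht]

/-- telescoping factorial-binomial identity. -/
lemma tele (n : ℕ) (m : ℕ → ℕ) (L : ℕ) (hmono : ∀ k < L, m (k + 1) ≤ m k) (hn : m 0 ≤ n) :
    (n - m 0)! * (∏ t ∈ range L, (m t - m (t + 1))!) * (m L)! *
      (n.choose (m 0) * ∏ k ∈ range L, (m k).choose (m (k + 1))) = n ! := by
  induction L with
  | zero =>
      simp only [Finset.range_zero, Finset.prod_empty, mul_one, one_mul]
      rw [show (n - m 0)! * (m 0)! * n.choose (m 0)
            = n.choose (m 0) * (m 0)! * (n - m 0)! by ring]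
      exact Nat.choose_mul_factorial_mul_factorial hn
  | succ L ih =>
      have hL : m (L + 1) ≤ m L := hmono L (Nat.lt_succ_self L)
      have ih' := ih (fun k hk => hmono k (hk.trans (Nat.lt_succ_self L)))
      rw [Finset.prod_range_succ, Finset.prod_range_succ]
      calc (n - m 0)! * ((∏ t ∈ range L, (m t - m (t + 1))!) * (m L - m (L + 1))!) *
            (m (L + 1))! *
            (n.choose (m 0) * ((∏ k ∈ range L, (m k).choose (m (k + 1))) *
              (m L).choose (m (L + 1))))
          = ((m L).choose (m (L + 1)) * (m (L + 1))! * (m L - m (L + 1))!) *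
            ((n - m 0)! * (∏ t ∈ range L, (m t - m (t + 1))!) *
              (n.choose (m 0) * ∏ k ∈ range L, (m k).choose (m (k + 1)))) := by ring
        _ = (m L)! * ((n - m 0)! * (∏ t ∈ range L, (m t - m (t + 1))!) *
              (n.choose (m 0) * ∏ k ∈ range L, (m k).choose (m (k + 1)))) := by
            rw [Nat.choose_mul_factorial_mul_factorial hL]
        _ = n ! := by rw [← ih']; ring

variable {α ι : Type*} [Fintype α] [DecidableEq α] [Fintype ι] [DecidableEq ι]

/-- bijections compatible with fiber data ≃ families of fiberwise bijections -/
noncomputable def permEquiv (p q : α → ι) :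
    {σ : Equiv.Perm α // ∀ x, q (σ x) = p x} ≃ ∀ t : ι, {x // p x = t} ≃ {y // q y = t} where
  toFun := fun ⟨σ, h⟩ t =>
    { toFun := fun x => ⟨σ x, by rw [h]; exact x.2⟩
      invFun := fun y => ⟨σ.symm y, by
        have h2 := h (σ.symm y)
        rw [Equiv.apply_symm_apply] at h2
        rw [← h2]; exact y.2⟩
      left_inv := fun x => by simp
      right_inv := fun y => by simp }
  invFun := fun f =>
    ⟨{ toFun := fun x => (f (p x) ⟨x, rfl⟩).1
       invFun := fun y => ((f (q y)).symm ⟨y, rfl⟩).1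
       left_inv := fun x => by
         have h2 : q ((f (p x) ⟨x, rfl⟩).1 : α) = p x := (f (p x) ⟨x, rfl⟩).2
         have key : ∀ (t : ι) (y : α) (hy : q y = t),
             ((f t).symm ⟨y, hy⟩ : α) = ((f (q y)).symm ⟨y, rfl⟩ : α) := by
           intro t y hy; cases hy; rfl
         dsimp only
         rw [← key (p x) _ h2]
         have : (f (p x)).symm ⟨(f (p x) ⟨x, rfl⟩).1, h2⟩ = ⟨x, rfl⟩ := by
           rw [Equiv.symm_apply_eq]
         rw [this]
       right_inv := fun y => by
         have h2 : p (((f (q y)).symm ⟨y, rfl⟩ : α)) = q y := ((f (q y)).symm ⟨y, rfl⟩).2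
         have key : ∀ (t : ι) (x : α) (hx : p x = t),
             ((f t) ⟨x, hx⟩ : α) = ((f (p x)) ⟨x, rfl⟩ : α) := by
           intro t x hx; cases hx; rfl
         dsimp only
         rw [← key (q y) _ h2]
         have : (f (q y)) ⟨((f (q y)).symm ⟨y, rfl⟩ : α), h2⟩ = ⟨y, rfl⟩ := by
           rw [Equiv.apply_eq_iff_eq_symm_apply]
         rw [this] },
     fun x => (f (p x) ⟨x, rfl⟩).2⟩
  left_inv := fun ⟨σ, h⟩ => by
    apply Subtype.ext
    apply Equiv.ext
    intro x
    rfl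
  right_inv := fun f => by
    funext t
    apply Equiv.ext
    intro x
    apply Subtype.ext
    obtain ⟨x, hx⟩ := x
    cases hx
    rfl

lemma card_perm_fiber (p q : α → ι)
    (hpq : ∀ t, (univ.filter fun x => p x = t).card = (univ.filter fun y => q y = t).card) :
    (univ.filter fun σ : Equiv.Perm α => ∀ x, q (σ x) = p x).card
      = ∏ t, (univ.filter fun x => p x = t).card ! := by
  classical
  rw [← Fintype.card_subtype]
  rw [Fintype.card_congr (permEquiv p q)]
  rw [Fintype.card_pi]
  refine Finset.prod_congr rfl fun t _ => ?_
  have e : {x // p x = t} ≃ {y // q y = t} := by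
    apply Fintype.equivOfCardEq
    rw [Fintype.card_subtype, Fintype.card_subtype]
    exact hpq t
  rw [Fintype.card_equiv e, Fintype.card_subtype]

section main

open scoped Classical

variable {n : ℕ}

def initSeg (σ : Equiv.Perm (Fin n)) (m : ℕ) : Finset (Fin n) :=
  univ.filter fun x => ((σ.symm x : Fin n) : ℕ) < m

lemma card_initSeg (σ : Equiv.Perm (Fin n)) {m : ℕ} (hm : m ≤ n) :
    (initSeg σ m).card = m := by
  have h : initSeg σ m = (univ.filter fun y : Fin n => (y : ℕ) < m).image σ := by
    ext x
    simp only [initSeg, Finset.mem_filter, Finset.mem_univ, true_and, Finset.mem_image]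
    constructor
    · intro h; exact ⟨σ.symm x, h, σ.apply_symm_apply x⟩
    · rintro ⟨y, hy, rfl⟩; rwa [Equiv.symm_apply_apply]
  rw [h, Finset.card_image_of_injective _ σ.injective, card_filter_lt n m hm]

lemma initSeg_subset (σ : Equiv.Perm (Fin n)) {m m' : ℕ} (h : m ≤ m') :
    initSeg σ m ⊆ initSeg σ m' := by
  intro x hx
  simp only [initSeg, Finset.mem_filter, Finset.mem_univ, true_and] at hx ⊢
  omega

def chainF (σ : Equiv.Perm (Fin n)) : Finset (Finset (Fin n)) :=
  (range (n + 1)).image (initSeg σ)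

lemma card_le_n (F : Finset (Fin n)) : F.card ≤ n := by
  have := Finset.card_le_univ F
  simpa using this

lemma mem_chainF {σ : Equiv.Perm (Fin n)} {F : Finset (Fin n)} :
    F ∈ chainF σ ↔ initSeg σ F.card = F := by
  constructor
  · intro h
    obtain ⟨m, hm, rfl⟩ := Finset.mem_image.1 h
    rw [Finset.mem_range] at hm
    rw [card_initSeg σ (by omega : m ≤ n)]
  · intro h
    exact Finset.mem_image.2 ⟨F.card, Finset.mem_range.2 (Nat.lt_succ_of_le (card_le_n F)), h⟩

lemma chainF_isChain {σ : Equiv.Perm (Fin n)} {F F' : Finset (Fin n)}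
    (hF : F ∈ chainF σ) (hF' : F' ∈ chainF σ) (hne : F ≠ F') : F ⊂ F' ∨ F' ⊂ F := by
  rw [mem_chainF] at hF hF'
  rcases le_total F.card F'.card with h | h
  · left
    refine Finset.ssubset_iff_subset_ne.2 ⟨?_, hne⟩
    calc F = initSeg σ F.card := hF.symm
      _ ⊆ initSeg σ F'.card := initSeg_subset σ h
      _ = F' := hF'
  · right
    refine Finset.ssubset_iff_subset_ne.2 ⟨?_, hne.symm⟩
    calc F' = initSeg σ F'.card := hF'.symm
      _ ⊆ initSeg σ F.card := initSeg_subset σ h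
      _ = F := hF

def mfun {ℓ : ℕ} (G : Fin ℓ → Finset (Fin n)) : ℕ → ℕ :=
  fun k => if h : k < ℓ then (G ⟨k, h⟩).card else 0

lemma mfun_anti {ℓ : ℕ} {G : Fin ℓ → Finset (Fin n)}
    (hdec : ∀ a b : Fin ℓ, a < b → G b ⊂ G a) {a b : ℕ} (hab : a ≤ b) :
    mfun G b ≤ mfun G a := by
  unfold mfun
  by_cases hb : b < ℓ
  · have ha : a < ℓ := lt_of_le_of_lt hab hb
    rw [dif_pos hb, dif_pos ha]
    rcases eq_or_lt_of_le hab with rfl | hlt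
    · exact le_refl _
    · exact le_of_lt (Finset.card_lt_card (hdec ⟨a, ha⟩ ⟨b, hb⟩ (Fin.mk_lt_mk.2 hlt)))
  · rw [dif_neg hb]; exact Nat.zero_le _

lemma mfun_le_n {ℓ : ℕ} (G : Fin ℓ → Finset (Fin n)) (k : ℕ) : mfun G k ≤ n := by
  unfold mfun
  split_ifs with h
  · exact card_le_n _
  · exact Nat.zero_le _

lemma mfun_eq {ℓ : ℕ} (G : Fin ℓ → Finset (Fin n)) (k : Fin ℓ) :
    mfun G (k : ℕ) = (G k).card := by
  unfold mfun
  rw [dif_pos k.isLt]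

lemma countPerms {ℓ : ℕ} (hℓ : 0 < ℓ) (G : Fin ℓ → Finset (Fin n))
    (hdec : ∀ a b : Fin ℓ, a < b → G b ⊂ G a) :
    (univ.filter fun σ : Equiv.Perm (Fin n) =>
        ∀ k : Fin ℓ, initSeg σ ((G k).card) = G k).card
        * (n.choose (mfun G 0) * ∏ k ∈ range (ℓ - 1), (mfun G k).choose (mfun G (k + 1)))
      = n ! := by
  set m : ℕ → ℕ := mfun G with hm
  have hanti : ∀ {a b : ℕ}, a ≤ b → m b ≤ m a := fun h => mfun_anti hdec h
  have hm0n : m 0 ≤ n := mfun_le_n G 0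
  have hsub : ∀ a b : Fin ℓ, a ≤ b → G b ⊆ G a := by
    intro a b hab
    rcases eq_or_lt_of_le hab with rfl | h
    · exact subset_rfl
    · exact (hdec a b h).subset
  -- the fiber maps
  have hcardle : ∀ (P : Fin ℓ → Prop) (inst : DecidablePred P),
      (@Finset.filter _ P inst univ).card < ℓ + 1 := by
    intro P inst
    have := @Finset.card_filter_le _ (univ : Finset (Fin ℓ)) P inst
    simp only [Finset.card_univ, Fintype.card_fin] at this
    omega
  set p : Fin n → Fin (ℓ + 1) :=
    fun x => ⟨(univ.filter fun k : Fin ℓ => (x : ℕ) < m k).card, hcardle _ _⟩ with hp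
  set q : Fin n → Fin (ℓ + 1) :=
    fun y => ⟨(univ.filter fun k : Fin ℓ => y ∈ G k).card, hcardle _ _⟩ with hq
  have hdcp : ∀ x : Fin n, ∀ a b : Fin ℓ, a ≤ b → ((x : ℕ) < m b) → ((x : ℕ) < m a) := by
    intro x a b hab h
    exact lt_of_lt_of_le h (hanti hab)
  have hdcq : ∀ y : Fin n, ∀ a b : Fin ℓ, a ≤ b → (y ∈ G b) → (y ∈ G a) := by
    intro y a b hab h
    exact hsub a b hab h
  -- condition equivalence
  have hcond : ∀ σ : Equiv.Perm (Fin n),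
      (∀ k : Fin ℓ, initSeg σ ((G k).card) = G k) ↔ (∀ x, q (σ x) = p x) := by
    intro σ
    constructor
    · intro h x
      apply Fin.ext
      show (univ.filter fun k : Fin ℓ => σ x ∈ G k).card
        = (univ.filter fun k : Fin ℓ => (x : ℕ) < m k).card
      congr 1
      ext k
      simp only [Finset.mem_filter, Finset.mem_univ, true_and]
      rw [hm, mfun_eq G k]
      conv_lhs => rw [← h k]
      simp [initSeg]
    · intro h k
      ext y
      have hx : σ (σ.symm y) = y := σ.apply_symm_apply y
      have d1 := dc_mem_iff (fun k : Fin ℓ => ((σ.symm y : Fin n) : ℕ) < m k)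
        (hdcp (σ.symm y)) k
      have d2 := dc_mem_iff (fun k : Fin ℓ => y ∈ G k) (hdcq y) k
      have hval : (q y : ℕ) = (p (σ.symm y) : ℕ) := by
        rw [← hx]
        rw [h (σ.symm y), hx]
      simp only [initSeg, Finset.mem_filter, Finset.mem_univ, true_and]
      rw [← mfun_eq G k, ← hm]
      rw [d1, d2]
      show ((k : ℕ) < (p (σ.symm y) : ℕ)) ↔ ((k : ℕ) < (q y : ℕ))
      rw [hval]
  -- define hi
  set hi : ℕ → ℕ := fun t => if t = 0 then n else m (t - 1) with hhi
  have hi_le_n : ∀ t : ℕ, hi t ≤ n := by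
    intro t
    simp only [hhi]
    split_ifs with h
    · exact le_refl n
    · exact le_trans (hanti (Nat.zero_le _)) hm0n
  have m_le_hi : ∀ t : ℕ, m t ≤ hi t := by
    intro t
    simp only [hhi]
    split_ifs with h
    · subst h; exact hm0n
    · exact hanti (by omega)
  -- p fibers
  have hp_fiber : ∀ t : Fin (ℓ + 1),
      (univ.filter fun x => p x = t).card = hi (t : ℕ) - m (t : ℕ) := by
    intro t
    have hfilter : (univ.filter fun x => p x = t)
        = univ.filter fun x : Fin n => m (t : ℕ) ≤ (x : ℕ) ∧ (x : ℕ) < hi (t : ℕ) := by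
      ext x
      simp only [Finset.mem_filter, Finset.mem_univ, true_and]
      rw [Fin.ext_iff]
      show (univ.filter fun k : Fin ℓ => (x : ℕ) < m k).card = (t : ℕ) ↔ _
      rw [dc_count_eq _ (hdcp x) (t : ℕ) (by omega)]
      constructor
      · intro h
        constructor
        · by_cases ht : (t : ℕ) < ℓ
          · refine le_of_not_gt fun hlt => ?_
            have h2 := (h ⟨(t : ℕ), ht⟩).1 hlt
            exact absurd h2 (lt_irrefl _)
          · have : m (t : ℕ) = 0 := by simp [hm, mfun, ht]
            omega
        · by_cases ht : (t : ℕ) = 0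
          · simp [hhi, ht, x.isLt]
          · have htℓ : (t : ℕ) - 1 < ℓ := by omega
            have := (h ⟨(t : ℕ) - 1, htℓ⟩).2 (show ((t : ℕ) - 1) < (t : ℕ) by omega)
            simp only [hhi, if_neg ht]
            exact this
      · rintro ⟨h1, h2⟩ k
        constructor
        · intro hxk
          by_contra hkt
          push_neg at hkt
          have : m (k : ℕ) ≤ m (t : ℕ) := hanti hkt
          omega
        · intro hkt
          have ht0 : (t : ℕ) ≠ 0 := by omega
          have : m ((t : ℕ) - 1) ≤ m (k : ℕ) := hanti (by omega)
          simp only [hhi, if_neg ht0] at h2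
          omega
    rw [hfilter, card_filter_Ico n _ _ (hi_le_n _) (m_le_hi _)]
  -- q fibers
  have hq_fiber : ∀ t : Fin (ℓ + 1),
      (univ.filter fun y => q y = t).card = hi (t : ℕ) - m (t : ℕ) := by
    intro t
    have ht1 : 0 < (t : ℕ) → (t : ℕ) - 1 < ℓ := by have := t.isLt; omega
    set A : Finset (Fin n) :=
      if h : 0 < (t : ℕ) then G ⟨(t : ℕ) - 1, ht1 h⟩ else univ with hA
    set B : Finset (Fin n) :=
      if h : (t : ℕ) < ℓ then G ⟨(t : ℕ), h⟩ else ∅ with hB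
    have hBA : B ⊆ A := by
      simp only [hA, hB]
      by_cases h1 : (t : ℕ) < ℓ
      · rw [dif_pos h1]
        by_cases h2 : 0 < (t : ℕ)
        · rw [dif_pos h2]
          exact hsub _ _ (Fin.le_def.2 (Nat.sub_le _ _))
        · rw [dif_neg h2]
          exact Finset.subset_univ _
      · rw [dif_neg h1]
        exact Finset.empty_subset _
    have hcardA : A.card = hi (t : ℕ) := by
      simp only [hA, hhi]
      by_cases h1 : 0 < (t : ℕ)
      · rw [dif_pos h1, if_neg (by omega : ¬(t : ℕ) = 0), hm]
        exact (mfun_eq G ⟨(t : ℕ) - 1, ht1 h1⟩).symm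
      · rw [dif_neg h1, if_pos (by omega : (t : ℕ) = 0)]
        simp
    have hcardB : B.card = m (t : ℕ) := by
      simp only [hB]
      by_cases h1 : (t : ℕ) < ℓ
      · rw [dif_pos h1, hm]
        exact (mfun_eq G ⟨(t : ℕ), h1⟩).symm
      · rw [dif_neg h1, hm]
        simp [mfun, h1]
    have hfilter : (univ.filter fun y => q y = t) = A \ B := by
      ext y
      simp only [Finset.mem_filter, Finset.mem_univ, true_and, Finset.mem_sdiff]
      rw [Fin.ext_iff]
      show (univ.filter fun k : Fin ℓ => y ∈ G k).card = (t : ℕ) ↔ _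
      rw [dc_count_eq _ (hdcq y) (t : ℕ) (by omega)]
      constructor
      · intro h
        constructor
        · rw [hA]
          split_ifs with h1
          · exact (h ⟨(t : ℕ) - 1, ht1 h1⟩).2 (show ((t : ℕ) - 1) < (t : ℕ) by omega)
          · exact Finset.mem_univ _
        · rw [hB]
          split_ifs with h1
          · intro hy
            have h2 := (h ⟨(t : ℕ), h1⟩).1 hy
            exact absurd h2 (lt_irrefl _)
          · exact Finset.notMem_empty _
      · rintro ⟨hyA, hyB⟩ k
        constructor
        · intro hyk
          by_contra hkt
          push_neg at hkt
          have hlt : (t : ℕ) < ℓ := lt_of_le_of_lt hkt k.isLt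
          apply hyB
          rw [hB, dif_pos hlt]
          exact hsub ⟨(t : ℕ), hlt⟩ k (Fin.le_def.2 hkt) hyk
        · intro hkt
          have h0 : 0 < (t : ℕ) := by omega
          rw [hA, dif_pos h0] at hyA
          exact hsub k ⟨(t : ℕ) - 1, ht1 h0⟩
            (Fin.le_def.2 (show (k : ℕ) ≤ (t : ℕ) - 1 by omega)) hyA
    rw [hfilter, Finset.card_sdiff_of_subset hBA, hcardA, hcardB]
  -- put it together
  have hpq' : ∀ t, (univ.filter fun x => p x = t).card
      = (univ.filter fun y => q y = t).card :=
    fun t => by rw [hp_fiber t, hq_fiber t]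
  have hcpf := card_perm_fiber p q hpq'
  have hcount : (univ.filter fun σ : Equiv.Perm (Fin n) =>
      ∀ k : Fin ℓ, initSeg σ ((G k).card) = G k).card
      = ∏ t ∈ range (ℓ + 1), (hi t - m t)! := by
    rw [← Fin.prod_univ_eq_prod_range (fun t => (hi t - m t)!) (ℓ + 1)]
    rw [show (∏ t : Fin (ℓ + 1), (hi (t : ℕ) - m (t : ℕ))!)
        = ∏ t : Fin (ℓ + 1), (univ.filter fun x => p x = t).card ! from
      Finset.prod_congr rfl fun t _ => by rw [hp_fiber t]]
    rw [← hcpf]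
    congr 1
    ext σ
    simp only [Finset.mem_filter, Finset.mem_univ, true_and]
    exact hcond σ
  rw [hcount]
  rw [Finset.prod_range_succ']
  have h0 : hi 0 - m 0 = n - m 0 := by simp [hhi]
  have hsucc : ∀ t : ℕ, hi (t + 1) - m (t + 1) = m t - m (t + 1) := by
    intro t; simp [hhi]
  simp only [hsucc, h0]
  have hL : ℓ - 1 + 1 = ℓ := by omega
  rw [← hL, Finset.prod_range_succ]
  have hml : m (ℓ - 1 + 1) = 0 := by
    rw [hL, hm]
    simp [mfun]
  rw [hml, Nat.sub_zero]
  have htele := tele n m (ℓ - 1) (fun k _ => hanti (Nat.le_succ k)) hm0n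
  rw [← htele]
  simp only [Nat.add_sub_cancel]
  ring


lemma chain_card_inj {T : Finset (Finset (Fin n))}
    (hT : ∀ F ∈ T, ∀ F' ∈ T, F ≠ F' → F ⊂ F' ∨ F' ⊂ F)
    {F F' : Finset (Fin n)} (hF : F ∈ T) (hF' : F' ∈ T) (h : F.card = F'.card) :
    F = F' := by
  by_contra hne
  rcases hT F hF F' hF' hne with hss | hss
  · exact absurd h (Nat.ne_of_lt (Finset.card_lt_card hss))
  · exact absurd h.symm (Nat.ne_of_lt (Finset.card_lt_card hss))

lemma countChains (T : Finset (Finset (Fin n)))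
    (hT : ∀ F ∈ T, ∀ F' ∈ T, F ≠ F' → F ⊂ F' ∨ F' ⊂ F) (ℓ : ℕ) :
    (univ.filter fun G : Fin ℓ → Finset (Fin n) =>
      (∀ k, G k ∈ T) ∧ ∀ a b : Fin ℓ, a < b → G b ⊂ G a).card
    = T.card.choose ℓ := by
  rw [← Finset.card_powersetCard ℓ T]
  have hGinj : ∀ (G : Fin ℓ → Finset (Fin n)),
      (∀ a b : Fin ℓ, a < b → G b ⊂ G a) → Function.Injective G := by
    intro G hdec a b hab
    by_contra hne
    rcases lt_or_gt_of_ne hne with h | h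
    · exact (hdec a b h).ne (hab.symm)
    · exact (hdec b a h).ne hab
  apply Finset.card_bij (fun G _ => Finset.image G univ)
  · -- maps into powersetCard
    intro G hG
    simp only [Finset.mem_filter, Finset.mem_univ, true_and] at hG
    obtain ⟨hmem, hdec⟩ := hG
    rw [Finset.mem_powersetCard]
    constructor
    · intro S hS
      obtain ⟨k, _, rfl⟩ := Finset.mem_image.1 hS
      exact hmem k
    · rw [Finset.card_image_of_injective _ (hGinj G hdec), Finset.card_univ,
        Fintype.card_fin]
  · -- injective
    intro G hG G' hG' himg
    simp only [Finset.mem_filter, Finset.mem_univ, true_and] at hG hG'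
    obtain ⟨hmem, hdec⟩ := hG
    obtain ⟨hmem', hdec'⟩ := hG'
    have hcardinj : Function.Injective (fun k : Fin ℓ => (G k).card) := by
      intro a b hab
      exact hGinj G hdec (chain_card_inj hT (hmem a) (hmem b) hab)
    have hcardinj' : Function.Injective (fun k : Fin ℓ => (G' k).card) := by
      intro a b hab
      exact hGinj G' hdec' (chain_card_inj hT (hmem' a) (hmem' b) hab)
    set N : Finset ℕ := (Finset.image G univ).image Finset.card with hN
    have hNcard : N.card = ℓ := by
      rw [hN, Finset.image_image]
      rw [show (Finset.card ∘ G) = (fun k : Fin ℓ => (G k).card) from rfl]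
      rw [Finset.card_image_of_injective _ hcardinj, Finset.card_univ, Fintype.card_fin]
    have hmono : StrictMono (fun k : Fin ℓ => (G (Fin.rev k)).card) := by
      intro a b hab
      exact Finset.card_lt_card (hdec (Fin.rev b) (Fin.rev a) (Fin.rev_lt_rev.2 hab))
    have hmono' : StrictMono (fun k : Fin ℓ => (G' (Fin.rev k)).card) := by
      intro a b hab
      exact Finset.card_lt_card (hdec' (Fin.rev b) (Fin.rev a) (Fin.rev_lt_rev.2 hab))
    have hvals : ∀ k : Fin ℓ, (G (Fin.rev k)).card ∈ N := by
      intro k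
      rw [hN]
      exact Finset.mem_image_of_mem _ (Finset.mem_image_of_mem _ (Finset.mem_univ _))
    have hvals' : ∀ k : Fin ℓ, (G' (Fin.rev k)).card ∈ N := by
      intro k
      rw [hN, himg]
      exact Finset.mem_image_of_mem _ (Finset.mem_image_of_mem _ (Finset.mem_univ _))
    have he := Finset.orderEmbOfFin_unique hNcard hvals hmono
    have he' := Finset.orderEmbOfFin_unique hNcard hvals' hmono'
    have hcards : ∀ k : Fin ℓ, (G k).card = (G' k).card := by
      intro k
      have h1 := congrFun (he.trans he'.symm) (Fin.rev k)
      simpa [Fin.rev_rev] using h1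
    funext k
    exact chain_card_inj hT (hmem k) (hmem' k) (hcards k)
  · -- surjective
    intro S hS
    rw [Finset.mem_powersetCard] at hS
    obtain ⟨hST, hScard⟩ := hS
    set N : Finset ℕ := S.image Finset.card with hN
    have hinjOn : Set.InjOn Finset.card (S : Set (Finset (Fin n))) := by
      intro a ha b hb hab
      exact chain_card_inj hT (hST (by exact_mod_cast ha)) (hST (by exact_mod_cast hb)) hab
    have hNcard : N.card = ℓ := by
      rw [hN, Finset.card_image_of_injOn hinjOn, hScard]
    have huniq : ∀ v : ℕ, v ∈ N → ∃! F, F ∈ S ∧ F.card = v := by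
      intro v hv
      obtain ⟨F, hF, rfl⟩ := Finset.mem_image.1 hv
      refine ⟨F, ⟨hF, rfl⟩, ?_⟩
      rintro F' ⟨hF', hcard⟩
      exact chain_card_inj hT (hST hF') (hST hF) hcard
    have hemem : ∀ k : Fin ℓ, N.orderEmbOfFin hNcard k ∈ N := fun k =>
      Finset.orderEmbOfFin_mem N hNcard k
    set G : Fin ℓ → Finset (Fin n) := fun k =>
      Finset.choose (fun F => F.card = N.orderEmbOfFin hNcard (Fin.rev k)) S
        (huniq _ (hemem (Fin.rev k))) with hG
    have hGS : ∀ k, G k ∈ S := fun k =>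
      Finset.choose_mem (fun F : Finset (Fin n) =>
        F.card = N.orderEmbOfFin hNcard (Fin.rev k)) S (huniq _ (hemem (Fin.rev k)))
    have hGcard : ∀ k, (G k).card = N.orderEmbOfFin hNcard (Fin.rev k) := fun k =>
      Finset.choose_property (fun F : Finset (Fin n) =>
        F.card = N.orderEmbOfFin hNcard (Fin.rev k)) S (huniq _ (hemem (Fin.rev k)))
    have hdec : ∀ a b : Fin ℓ, a < b → G b ⊂ G a := by
      intro a b hab
      have hlt : (G b).card < (G a).card := by
        rw [hGcard, hGcard]
        exact (N.orderEmbOfFin hNcard).strictMono (Fin.rev_lt_rev.2 hab)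
      have hne : G b ≠ G a := fun h => absurd (congrArg Finset.card h) (Nat.ne_of_lt hlt)
      rcases hT (G b) (hST (hGS b)) (G a) (hST (hGS a)) hne with h | h
      · exact h
      · exact absurd (Finset.card_lt_card h) (by omega)
    refine ⟨G, ?_, ?_⟩
    · simp only [Finset.mem_filter, Finset.mem_univ, true_and]
      exact ⟨fun k => hST (hGS k), hdec⟩
    · -- image G univ = S
      have hinj : Function.Injective G := hGinj G hdec
      apply Finset.eq_of_subset_of_card_le
      · intro x hx
        obtain ⟨k, _, rfl⟩ := Finset.mem_image.1 hx
        exact hGS k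
      · rw [Finset.card_image_of_injective _ hinj, Finset.card_univ, Fintype.card_fin,
          hScard]


lemma chainWeight_eq {ℓ : ℕ} (hℓ : 0 < ℓ) (G : Fin ℓ → Finset (Fin n)) :
    chainWeight G
      = (((∏ k ∈ range (ℓ - 1), (mfun G k).choose (mfun G (k + 1))) : ℕ) : ℝ)⁻¹ := by
  obtain ⟨L, rfl⟩ : ∃ L, ℓ = L + 1 := ⟨ℓ - 1, by omega⟩
  unfold chainWeight
  have hpt : ∀ i : Fin (L + 1),
      (if h : (i : ℕ) + 1 < L + 1 then
        (((G i).card.choose (G ⟨(i : ℕ) + 1, h⟩).card : ℕ) : ℝ)⁻¹ else 1)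
      = (fun t => if h : t + 1 < L + 1 then
          (((mfun G t).choose (mfun G (t + 1)) : ℕ) : ℝ)⁻¹ else 1) (i : ℕ) := by
    intro i
    by_cases h : (i : ℕ) + 1 < L + 1
    · rw [dif_pos h]
      show _ = (if h : (i : ℕ) + 1 < L + 1 then
          (((mfun G (i : ℕ)).choose (mfun G ((i : ℕ) + 1)) : ℕ) : ℝ)⁻¹ else 1)
      rw [dif_pos h]
      simp only [mfun]
      rw [dif_pos (show (i : ℕ) < L + 1 from i.isLt), dif_pos h, Fin.eta]
    · rw [dif_neg h]
      show _ = (if h : (i : ℕ) + 1 < L + 1 then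
          (((mfun G (i : ℕ)).choose (mfun G ((i : ℕ) + 1)) : ℕ) : ℝ)⁻¹ else 1)
      rw [dif_neg h]
  rw [Finset.prod_congr rfl fun i _ => hpt i]
  rw [Fin.prod_univ_eq_prod_range
    (fun t => if h : t + 1 < L + 1 then
      (((mfun G t).choose (mfun G (t + 1)) : ℕ) : ℝ)⁻¹ else 1) (L + 1)]
  rw [Finset.prod_range_succ, dif_neg (lt_irrefl (L + 1)), mul_one]
  rw [Finset.prod_congr rfl (fun t ht => dif_pos (by
    have := Finset.mem_range.1 ht; omega : t + 1 < L + 1))]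
  rw [Nat.add_sub_cancel, Nat.cast_prod, ← Finset.prod_inv_distrib]

lemma W_pos {ℓ : ℕ} {G : Fin ℓ → Finset (Fin n)}
    (hdec : ∀ a b : Fin ℓ, a < b → G b ⊂ G a) :
    0 < ∏ k ∈ range (ℓ - 1), (mfun G k).choose (mfun G (k + 1)) := by
  apply Finset.prod_pos
  intro k _
  exact Nat.choose_pos (mfun_anti hdec (Nat.le_succ k))

lemma master (𝓕 : Finset (Finset (Fin n))) {ℓ : ℕ} (hℓ : 0 < ℓ) :
    (∑ F ∈ 𝓕, chainDensity 𝓕 ℓ F / (n.choose F.card : ℝ)) * (n ! : ℝ)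
      = ∑ σ : Equiv.Perm (Fin n), (((𝓕 ∩ chainF σ).card.choose ℓ : ℕ) : ℝ) := by
  classical
  set Q : (Fin ℓ → Finset (Fin n)) → Prop := fun G =>
    (∀ k, G k ∈ 𝓕) ∧ ∀ a b : Fin ℓ, a < b → G b ⊂ G a with hQ
  -- Step 1 : single sum over tuples
  have h1 : (∑ F ∈ 𝓕, chainDensity 𝓕 ℓ F / (n.choose F.card : ℝ))
      = ∑ G : Fin ℓ → Finset (Fin n),
          if Q G then chainWeight G / (n.choose ((G ⟨0, hℓ⟩).card) : ℝ) else 0 := by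
    unfold chainDensity
    rw [Finset.sum_congr rfl fun F _ => Finset.sum_div _ _ ((n.choose F.card : ℝ))]
    rw [Finset.sum_comm]
    refine Finset.sum_congr rfl fun G _ => ?_
    set B : Prop := (∀ i : Fin ℓ, (i : ℕ) ≠ 0 → G i ∈ 𝓕) ∧
      (∀ a b : Fin ℓ, a < b → G b ⊂ G a) with hB
    have step1 : ∀ F ∈ 𝓕,
        (if (∀ h : 0 < ℓ, G ⟨0, h⟩ = F) ∧ B then chainWeight G else 0)
            / (n.choose F.card : ℝ)
        = if F = G ⟨0, hℓ⟩
          then (if B then chainWeight G / (n.choose F.card : ℝ) else 0) else 0 := by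
      intro F _
      have hc : ((∀ h : 0 < ℓ, G ⟨0, h⟩ = F) ∧ B) ↔ (F = G ⟨0, hℓ⟩ ∧ B) := by
        constructor
        · rintro ⟨ha, hb⟩; exact ⟨(ha hℓ).symm, hb⟩
        · rintro ⟨ha, hb⟩; exact ⟨fun _ => ha.symm, hb⟩
      rw [if_congr hc rfl rfl]
      by_cases hF : F = G ⟨0, hℓ⟩
      · by_cases hb : B
        · rw [if_pos ⟨hF, hb⟩, if_pos hF, if_pos hb]
        · rw [if_neg (fun h => hb h.2), if_pos hF, if_neg hb, zero_div]
      · rw [if_neg (fun h => hF h.1), if_neg hF, zero_div]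
    rw [Finset.sum_congr rfl step1]
    rw [Finset.sum_ite_eq' 𝓕 (G ⟨0, hℓ⟩)
      (fun F => if B then chainWeight G / (n.choose F.card : ℝ) else 0)]
    have hiff : (G ⟨0, hℓ⟩ ∈ 𝓕 ∧ B) ↔ Q G := by
      rw [hB, hQ]
      constructor
      · rintro ⟨h0, h1', h2⟩
        refine ⟨fun k => ?_, h2⟩
        by_cases hk : (k : ℕ) = 0
        · have hk' : k = ⟨0, hℓ⟩ := Fin.ext hk
          rw [hk']; exact h0
        · exact h1' k hk
      · rintro ⟨h1', h2⟩
        exact ⟨h1' _, fun i _ => h1' i, h2⟩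
    by_cases h0 : G ⟨0, hℓ⟩ ∈ 𝓕
    · by_cases hb : B
      · rw [if_pos h0, if_pos hb, if_pos (hiff.1 ⟨h0, hb⟩)]
      · rw [if_pos h0, if_neg hb, if_neg (fun hq => hb (hiff.2 hq).2)]
    · rw [if_neg h0, if_neg (fun hq => h0 (hiff.2 hq).1)]
  -- Step 2 : weight times n! equals permutation count
  have h2 : ∀ G : Fin ℓ → Finset (Fin n), Q G →
      chainWeight G / (n.choose ((G ⟨0, hℓ⟩).card) : ℝ) * (n ! : ℝ)
      = ((univ.filter fun σ : Equiv.Perm (Fin n) =>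
          ∀ k : Fin ℓ, initSeg σ ((G k).card) = G k).card : ℝ) := by
    intro G hGQ
    obtain ⟨hmem, hdec⟩ := hGQ
    have hcp := countPerms hℓ G hdec
    have hWpos : (0:ℝ) < ((∏ k ∈ range (ℓ - 1), (mfun G k).choose (mfun G (k + 1)) : ℕ) : ℝ) := by
      exact_mod_cast W_pos hdec
    have hCpos : (0:ℝ) < ((n.choose (mfun G 0) : ℕ) : ℝ) := by
      exact_mod_cast Nat.choose_pos (mfun_le_n G 0)
    have hcast : ((univ.filter fun σ : Equiv.Perm (Fin n) =>
          ∀ k : Fin ℓ, initSeg σ ((G k).card) = G k).card : ℝ)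
        * ((n.choose (mfun G 0) : ℕ) : ℝ)
        * ((∏ k ∈ range (ℓ - 1), (mfun G k).choose (mfun G (k + 1)) : ℕ) : ℝ)
        = (n ! : ℝ) := by
      push_cast
      exact_mod_cast congrArg (fun x : ℕ => (x : ℝ)) (by rw [← hcp]; ring)
    have hm0 : (G ⟨0, hℓ⟩).card = mfun G 0 := (mfun_eq G ⟨0, hℓ⟩).symm
    rw [chainWeight_eq hℓ G, hm0, eq_comm, div_mul_eq_mul_div, inv_mul_eq_div, div_div,
      eq_div_iff (ne_of_gt (mul_pos hWpos hCpos))]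
    linear_combination hcast
  -- Step 3 : count as sum over permutations, then swap
  have h3 : ∀ G : Fin ℓ → Finset (Fin n),
      (if Q G then chainWeight G / (n.choose ((G ⟨0, hℓ⟩).card) : ℝ) else 0) * (n ! : ℝ)
      = ∑ σ : Equiv.Perm (Fin n),
          if Q G ∧ ∀ k : Fin ℓ, G k ∈ chainF σ then (1 : ℝ) else 0 := by
    intro G
    by_cases hGQ : Q G
    · rw [if_pos hGQ, h2 G hGQ]
      have hcf : (univ.filter fun σ : Equiv.Perm (Fin n) =>
            ∀ k : Fin ℓ, initSeg σ ((G k).card) = G k)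
          = univ.filter fun σ : Equiv.Perm (Fin n) => ∀ k : Fin ℓ, G k ∈ chainF σ := by
        ext σ
        simp only [Finset.mem_filter, Finset.mem_univ, true_and]
        constructor
        · intro h k; exact mem_chainF.2 (h k)
        · intro h k; exact mem_chainF.1 (h k)
      rw [hcf, Finset.card_filter]
      push_cast
      refine Finset.sum_congr rfl fun σ _ => ?_
      by_cases hσ : ∀ k : Fin ℓ, G k ∈ chainF σ
      · rw [if_pos hσ, if_pos ⟨hGQ, hσ⟩]
      · rw [if_neg hσ, if_neg (fun hc => hσ hc.2)]
    · rw [if_neg hGQ, zero_mul]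
      symm
      apply Finset.sum_eq_zero
      intro σ _
      rw [if_neg (fun hc => hGQ hc.1)]
  rw [h1, Finset.sum_mul]
  rw [Finset.sum_congr rfl fun G _ => h3 G]
  rw [Finset.sum_comm]
  refine Finset.sum_congr rfl fun σ _ => ?_
  -- inner sum over G equals choose
  have hT : ∀ F ∈ 𝓕 ∩ chainF σ, ∀ F' ∈ 𝓕 ∩ chainF σ, F ≠ F' → F ⊂ F' ∨ F' ⊂ F := by
    intro F hF F' hF' hne
    exact chainF_isChain (Finset.mem_inter.1 hF).2 (Finset.mem_inter.1 hF').2 hne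
  rw [← countChains (𝓕 ∩ chainF σ) hT ℓ, Finset.card_filter]
  push_cast
  refine Finset.sum_congr rfl fun G _ => ?_
  have hc : (Q G ∧ ∀ k : Fin ℓ, G k ∈ chainF σ)
      ↔ ((∀ k, G k ∈ 𝓕 ∩ chainF σ) ∧ ∀ a b : Fin ℓ, a < b → G b ⊂ G a) := by
    rw [hQ]
    constructor
    · rintro ⟨⟨ha, hb⟩, hcc⟩
      exact ⟨fun k => Finset.mem_inter.2 ⟨ha k, hcc k⟩, hb⟩
    · rintro ⟨ha, hb⟩
      exact ⟨⟨fun k => (Finset.mem_inter.1 (ha k)).1, hb⟩,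
        fun k => (Finset.mem_inter.1 (ha k)).2⟩
  rw [if_congr hc rfl rfl]


lemma choose_le_choose_of_le_half {s a b : ℕ} (hab : a ≤ b) (hb : 2 * b ≤ s) :
    s.choose a ≤ s.choose b := by
  induction b, hab using Nat.le_induction with
  | base => exact le_refl _
  | succ b hab ih =>
      have h1 : s.choose a ≤ s.choose b := ih (by omega)
      have h2 : s.choose b ≤ s.choose (b + 1) :=
        Nat.choose_le_succ_of_lt_half_left (by omega)
      omega

lemma bdd (i j : ℕ) (hij : i < j) :
    BddAbove (Set.range fun s : ℕ => ((s.choose i : ℝ) - (s.choose j : ℝ))) := by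
  refine ⟨(((2 * j).choose i : ℕ) : ℝ), ?_⟩
  rintro x ⟨s, rfl⟩
  by_cases hs : 2 * j ≤ s
  · have h1 : s.choose i ≤ s.choose j := choose_le_choose_of_le_half (le_of_lt hij) hs
    have h2 : (s.choose i : ℝ) ≤ (s.choose j : ℝ) := by exact_mod_cast h1
    have h3 : (0 : ℝ) ≤ (((2 * j).choose i : ℕ) : ℝ) := Nat.cast_nonneg _
    simp only
    linarith
  · push_neg at hs
    have h1 : s.choose i ≤ (2 * j).choose i := Nat.choose_le_choose i (le_of_lt hs)
    have h2 : (s.choose i : ℝ) ≤ (((2 * j).choose i : ℕ) : ℝ) := by exact_mod_cast h1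
    have h3 : (0 : ℝ) ≤ (s.choose j : ℝ) := Nat.cast_nonneg _
    simp only
    linarith

end main

end DGS

/-- Das–Gan–Sudakov: `Σ_{F ∈ 𝓕} (c_i(F) - c_j(F))/C(n,|F|) ≤ max_s (C(s,i) - C(s,j))`. -/
theorem statement9 (n : ℕ) (𝓕 : Finset (Finset (Fin n))) (i j : ℕ)
    (hi : 1 ≤ i) (hij : i < j) :
    ∑ F ∈ 𝓕, (chainDensity 𝓕 i F - chainDensity 𝓕 j F) / (n.choose F.card : ℝ)
      ≤ ⨆ s : ℕ, ((s.choose i : ℝ) - (s.choose j : ℝ)) := by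
  classical
  have hfact : (0 : ℝ) < ((n.factorial : ℕ) : ℝ) := by
    exact_mod_cast Nat.factorial_pos n
  have hmi := DGS.master 𝓕 (show 0 < i by omega)
  have hmj := DGS.master 𝓕 (show 0 < j by omega)
  have hbdd := DGS.bdd i j hij
  have hsum : (∑ F ∈ 𝓕, (chainDensity 𝓕 i F - chainDensity 𝓕 j F) / (n.choose F.card : ℝ))
        * ((n.factorial : ℕ) : ℝ)
      = ∑ σ : Equiv.Perm (Fin n),
          ((((𝓕 ∩ DGS.chainF σ).card.choose i : ℕ) : ℝ)
            - (((𝓕 ∩ DGS.chainF σ).card.choose j : ℕ) : ℝ)) := by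
    rw [Finset.sum_congr rfl fun F _ =>
      sub_div (chainDensity 𝓕 i F) (chainDensity 𝓕 j F) ((n.choose F.card : ℝ))]
    rw [Finset.sum_sub_distrib, sub_mul, hmi, hmj, ← Finset.sum_sub_distrib]
  have hle : ∑ σ : Equiv.Perm (Fin n),
        ((((𝓕 ∩ DGS.chainF σ).card.choose i : ℕ) : ℝ)
          - (((𝓕 ∩ DGS.chainF σ).card.choose j : ℕ) : ℝ))
      ≤ ((n.factorial : ℕ) : ℝ) * ⨆ s : ℕ, ((s.choose i : ℝ) - (s.choose j : ℝ)) := by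
    calc ∑ σ : Equiv.Perm (Fin n),
          ((((𝓕 ∩ DGS.chainF σ).card.choose i : ℕ) : ℝ)
            - (((𝓕 ∩ DGS.chainF σ).card.choose j : ℕ) : ℝ))
        ≤ ∑ _σ : Equiv.Perm (Fin n), ⨆ s : ℕ, ((s.choose i : ℝ) - (s.choose j : ℝ)) := by
          refine Finset.sum_le_sum fun σ _ => ?_
          exact le_ciSup hbdd ((𝓕 ∩ DGS.chainF σ).card)
      _ = ((n.factorial : ℕ) : ℝ) * ⨆ s : ℕ, ((s.choose i : ℝ) - (s.choose j : ℝ)) := by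
          rw [Finset.sum_const, Finset.card_univ, Fintype.card_perm, Fintype.card_fin,
            nsmul_eq_mul]
  have hfin : (∑ F ∈ 𝓕, (chainDensity 𝓕 i F - chainDensity 𝓕 j F) / (n.choose F.card : ℝ))
        * ((n.factorial : ℕ) : ℝ)
      ≤ (⨆ s : ℕ, ((s.choose i : ℝ) - (s.choose j : ℝ))) * ((n.factorial : ℕ) : ℝ) := by
    rw [hsum, mul_comm]
    exact hle
  exact le_of_mul_le_mul_right hfin hfact
end

section
/- Let ℱ be a family of subsets of {1,…,n} and let ℓ ≥ 1. For a permutation π of {1,…,n}, let X_ℓ(π) denote the number of chains F₁ ⊋ F₂ ⊋ ⋯ ⊋ F_ℓ with all F_i ∈ ℱ such that every F_i is contained in π. Then the average of X_ℓ over all n! permutations equals Σ_{F ∈ ℱ} c_ℓ(F) / C(n,|F|). -/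
/-!
Exchanging the sums, the left side becomes the sum, over chains `F₁ ⊋ ⋯ ⊋ F_ℓ` in `𝓕`, of the
proportion of permutations containing every `Fᵢ`. A permutation contains all the `Fᵢ` exactly
when it carries the level function `x ↦ #{i | x ∈ Fᵢ}` of the chain onto the level function of
the chain of initial segments of the same sizes, i.e. maps each fibre of the latter onto the
corresponding fibre of the former. So there are `(n - |F₁|)! (|F₁| - |F₂|)! ⋯ |F_ℓ|!` such
permutations, and dividing by `n!` leaves `1 / (C(n,|F₁|) C(|F₁|,|F₂|) ⋯ C(|F_{ℓ-1}|,|F_ℓ|))`,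
the weight of the chain in `c_ℓ(F₁) / C(n,|F₁|)`.
-/

open Finset

/-- A permutation `π` of `{1,…,n}` contains a set `F` if `F = {π(1), …, π(|F|)}`,
i.e. `F` is the image under `π` of the first `|F|` elements. -/
def ContainsSet {n : ℕ} (π : Equiv.Perm (Fin n)) (F : Finset (Fin n)) : Prop :=
  F = Finset.image π (Finset.univ.filter (fun j : Fin n => (j : ℕ) < F.card))

open Equiv
open scoped Nat

theorem Nat.prod_choose_mul_factorial_sub_mul_factorial (c : ℕ → ℕ) (m : ℕ)
    (hc : ∀ i < m, c (i + 1) ≤ c i) :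
    (∏ i ∈ range m, (c i).choose (c (i + 1)) * (c i - c (i + 1))!) * (c m)! = (c 0)! := by
  induction m with
  | zero => simp
  | succ m ih =>
    rw [prod_range_succ, mul_assoc, mul_right_comm _ _ (c (m + 1))!,
      Nat.choose_mul_factorial_mul_factorial (hc m m.lt_succ_self)]
    exact ih fun i hi => hc i (by omega)

section PermFiber

variable {α ι : Type*} [Fintype α] [DecidableEq α] [DecidableEq ι]

theorem Equiv.Perm.card_comp_eq_of_card_fiber (f g : α → ι)
    (h : ∀ c, Fintype.card {a // g a = c} = Fintype.card {a // f a = c}) :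
    Fintype.card {π : Perm α // f ∘ π = g} = Fintype.card {π : Perm α // f ∘ π = f} := by
  -- `π ↦ π σ⁻¹` for any `σ` carrying the fibres of `g` onto those of `f`
  let σ : Perm α := Equiv.ofFiberEquiv fun c => Fintype.equivOfCardEq (h c)
  have hσ : f ∘ σ = g := funext (Equiv.ofFiberEquiv_map _)
  refine Fintype.card_congr ((Equiv.mulRight σ⁻¹).subtypeEquiv fun π => ?_)
  rw [← hσ]
  constructor
  · intro hπ; ext a; simpa using congrFun hπ (σ.symm a)
  · intro hπ; ext a; simpa using congrFun hπ (σ a)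

theorem card_fiber_eq_card_le_sub_card_succ_le (f : α → ℕ) (b : ℕ) :
    #{a | f a = b} = #{a | b ≤ f a} - #{a | b + 1 ≤ f a} := by
  rw [← card_sdiff_of_subset (monotone_filter_right _ fun a _ h => by omega)]
  congr 1; ext a; simp only [mem_filter, mem_univ, true_and, mem_sdiff]; omega

theorem Equiv.Perm.card_comp_eq_self_eq_prod_range (f : α → ℕ) {N : ℕ} (hf : ∀ a, f a < N) :
    Fintype.card {π : Perm α // f ∘ π = f} = ∏ b ∈ range N, (#{a | f a = b})! := by
  rw [DomMulAct.stabilizer_card']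
  simp only [Fintype.card_subtype]
  refine prod_subset (fun b hb => ?_) fun b _ hb => ?_
  · obtain ⟨a, -, rfl⟩ := mem_image.mp hb
    exact mem_range.mpr (hf a)
  · rw [filter_false_of_mem fun a _ hab => hb (mem_image.mpr ⟨a, mem_univ a, hab⟩)]
    rfl

end PermFiber

section ChainLevel

variable {α : Type*} [DecidableEq α] {ℓ : ℕ}

def chainLevel (G : Fin ℓ → Finset α) (a : α) : ℕ := #{i | a ∈ G i}

theorem chainLevel_le (G : Fin ℓ → Finset α) (a : α) : chainLevel G a ≤ ℓ :=
  (card_filter_le _ _).trans (card_fin ℓ).le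

variable {G H : Fin ℓ → Finset α}

theorem lt_chainLevel_iff (hG : Antitone G) (i : Fin ℓ) (a : α) :
    i < chainLevel G a ↔ a ∈ G i :=
  Fin.lt_card_filter_univ_iff_apply_of_imp _ fun _ _ hji ha => hG hji ha

theorem chainLevel_eq_chainLevel_iff (hG : Antitone G) (hH : Antitone H) (a b : α) :
    chainLevel G a = chainLevel H b ↔ ∀ i, a ∈ G i ↔ b ∈ H i := by
  refine ⟨fun h i => ?_, fun h => congrArg card (filter_congr fun i _ => h i)⟩
  rw [← lt_chainLevel_iff hG, ← lt_chainLevel_iff hH, h]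

variable [Fintype α]

def chainCard (G : Fin ℓ → Finset α) (b : ℕ) : ℕ := #{a | b ≤ chainLevel G a}

theorem chainCard_zero (G : Fin ℓ → Finset α) : chainCard G 0 = Fintype.card α := by
  simp [chainCard]

theorem chainCard_succ (hG : Antitone G) (i : Fin ℓ) : chainCard G (i + 1) = #(G i) := by
  simp only [chainCard, Nat.add_one_le_iff, lt_chainLevel_iff hG, filter_mem_eq_inter,
    univ_inter]

theorem chainCard_eq_zero (G : Fin ℓ → Finset α) {b : ℕ} (hb : ℓ < b) : chainCard G b = 0 := by
  simp only [chainCard, card_eq_zero, filter_eq_empty_iff, mem_univ, true_implies]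
  exact fun a => by have := chainLevel_le G a; omega

theorem antitone_chainCard (G : Fin ℓ → Finset α) : Antitone (chainCard G) :=
  fun _ _ hbc => card_le_card (monotone_filter_right _ fun _ _ h => hbc.trans h)

theorem chainCard_congr (hG : Antitone G) (hH : Antitone H) (hGH : ∀ i, #(G i) = #(H i)) :
    chainCard G = chainCard H := by
  ext (_ | b)
  · rw [chainCard_zero, chainCard_zero]
  · by_cases hb : b < ℓ
    · exact (chainCard_succ hG ⟨b, hb⟩).trans ((hGH _).trans (chainCard_succ hH ⟨b, hb⟩).symm)
    · rw [chainCard_eq_zero G (by omega), chainCard_eq_zero H (by omega)]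

theorem card_perm_chainLevel_comp_eq (hG : Antitone G) (hH : Antitone H)
    (hGH : ∀ i, #(G i) = #(H i)) :
    #{π : Perm α | chainLevel G ∘ π = chainLevel H}
      = ∏ b ∈ range (ℓ + 1), (chainCard G b - chainCard G (b + 1))! := by
  rw [← Fintype.card_subtype, Perm.card_comp_eq_of_card_fiber,
    Perm.card_comp_eq_self_eq_prod_range _ fun a => Nat.lt_succ_of_le (chainLevel_le G a)]
  · simp only [card_fiber_eq_card_le_sub_card_succ_le]; rfl
  · intro b
    simp only [Fintype.card_subtype, card_fiber_eq_card_le_sub_card_succ_le]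
    exact congrArg₂ (· - ·) (congrFun (chainCard_congr hH hG fun i => (hGH i).symm) b)
      (congrFun (chainCard_congr hH hG fun i => (hGH i).symm) (b + 1))

theorem prod_factorial_chainCard_mul_prod_choose (G : Fin ℓ → Finset α) :
    (∏ b ∈ range (ℓ + 1), (chainCard G b - chainCard G (b + 1))!)
      * ∏ b ∈ range ℓ, (chainCard G b).choose (chainCard G (b + 1)) = (Fintype.card α)! := by
  rw [← chainCard_zero G, ← Nat.prod_choose_mul_factorial_sub_mul_factorial _ ℓ
    fun i _ => antitone_chainCard G i.le_succ, prod_range_succ, prod_mul_distrib,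
    chainCard_eq_zero G ℓ.lt_succ_self, Nat.sub_zero]
  ring

end ChainLevel

section ContainsSet

variable {n ℓ : ℕ}

instance (π : Perm (Fin n)) (F : Finset (Fin n)) : Decidable (ContainsSet π F) :=
  inferInstanceAs (Decidable (F = _))

theorem containsSet_iff (π : Perm (Fin n)) (F : Finset (Fin n)) :
    ContainsSet π F ↔ ∀ j, π j ∈ F ↔ (j : ℕ) < #F := by
  refine ⟨fun h j => ?_, fun h => ?_⟩
  · conv_lhs => rw [h]
    simp [π.injective.mem_finset_image]
  · ext x
    obtain ⟨j, rfl⟩ := π.surjective x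
    simpa [π.injective.mem_finset_image] using h j

def prefixChain (G : Fin ℓ → Finset (Fin n)) (i : Fin ℓ) : Finset (Fin n) :=
  {j | (j : ℕ) < #(G i)}

variable {G : Fin ℓ → Finset (Fin n)}

theorem antitone_prefixChain (hG : Antitone G) : Antitone (prefixChain G) :=
  fun _ _ hij => monotone_filter_right _ fun _ _ h => h.trans_le (card_le_card (hG hij))

theorem card_prefixChain (G : Fin ℓ → Finset (Fin n)) (i : Fin ℓ) :
    #(prefixChain G i) = #(G i) := by
  simpa [prefixChain, Fin.card_filter_val_lt] using card_le_univ (G i)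

theorem forall_containsSet_iff (hG : Antitone G) (π : Perm (Fin n)) :
    (∀ i, ContainsSet π (G i)) ↔ chainLevel G ∘ π = chainLevel (prefixChain G) := by
  simp only [funext_iff, Function.comp_apply,
    chainLevel_eq_chainLevel_iff hG (antitone_prefixChain hG), containsSet_iff, prefixChain,
    mem_filter, mem_univ, true_and]
  exact forall_comm

theorem card_forall_containsSet_mul_prod_choose (hG : Antitone G) :
    #{π : Perm (Fin n) | ∀ i, ContainsSet π (G i)}
      * ∏ b ∈ range ℓ, (chainCard G b).choose (chainCard G (b + 1)) = n ! := by
  simp_rw [forall_containsSet_iff hG]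
  rw [card_perm_chainLevel_comp_eq hG (antitone_prefixChain hG)
    fun i => (card_prefixChain G i).symm, prod_factorial_chainCard_mul_prod_choose,
    Fintype.card_fin]

end ContainsSet

theorem chainWeight_eq_prod {n m : ℕ} (G : Fin (m + 1) → Finset (Fin n)) :
    chainWeight G = (∏ i : Fin m, ((#(G i.castSucc)).choose #(G i.succ) : ℝ))⁻¹ := by
  rw [chainWeight, Fin.prod_univ_castSucc, ← prod_inv_distrib]
  simp [Fin.succ]

theorem prod_choose_chainCard {n m : ℕ} {G : Fin (m + 1) → Finset (Fin n)} (hG : Antitone G) :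
    ∏ b ∈ range (m + 1), (chainCard G b).choose (chainCard G (b + 1))
      = n.choose #(G 0) * ∏ i : Fin m, (#(G i.castSucc)).choose #(G i.succ) := by
  have h1 : chainCard G 1 = #(G 0) := by simpa using chainCard_succ hG 0
  rw [prod_range_succ', ← Fin.prod_univ_eq_prod_range, mul_comm, chainCard_zero, Fintype.card_fin,
    zero_add, h1]
  congr 1
  refine prod_congr rfl fun i _ => ?_
  rw [← chainCard_succ hG i.castSucc, ← chainCard_succ hG i.succ, Fin.val_castSucc, Fin.val_succ]

theorem card_forall_containsSet_div_factorial {n m : ℕ} {G : Fin (m + 1) → Finset (Fin n)}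
    (hG : Antitone G) :
    (#{π : Perm (Fin n) | ∀ i, ContainsSet π (G i)} : ℝ) / n !
      = chainWeight G / n.choose #(G 0) := by
  have hcount := card_forall_containsSet_mul_prod_choose hG
  rw [prod_choose_chainCard hG] at hcount
  have hP : (∏ i : Fin m, ((#(G i.castSucc)).choose #(G i.succ) : ℝ)) ≠ 0 :=
    prod_ne_zero_iff.mpr fun i _ =>
      Nat.cast_ne_zero.mpr (Nat.choose_pos (card_le_card (hG Fin.castSucc_lt_succ.le))).ne'
  have hC : (n.choose #(G 0) : ℝ) ≠ 0 := Nat.cast_ne_zero.mpr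
    (Nat.choose_pos ((card_le_univ (G 0)).trans_eq (Fintype.card_fin n))).ne'
  rw [div_eq_div_iff (by positivity) hC, chainWeight_eq_prod, ← Nat.cast_inj (R := ℝ).mpr hcount]
  push_cast
  field_simp

theorem sum_chainDensity_div {n m : ℕ} (𝓕 : Finset (Finset (Fin n)))
    (w : Finset (Fin n) → ℝ) [DecidablePred fun G : Fin (m + 1) → Finset (Fin n) =>
      (∀ i, G i ∈ 𝓕) ∧ StrictAnti G] :
    ∑ F ∈ 𝓕, chainDensity 𝓕 (m + 1) F / w F
      = ∑ G : Fin (m + 1) → Finset (Fin n) with (∀ i, G i ∈ 𝓕) ∧ StrictAnti G,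
          chainWeight G / w (G 0) := by
  simp only [chainDensity, sum_div, ite_div, zero_div]
  rw [sum_comm, sum_filter]
  refine sum_congr rfl fun G _ => ?_
  have h0 (F : Finset (Fin n)) : (∀ h : 0 < m + 1, G ⟨0, h⟩ = F) ↔ G 0 = F :=
    forall_prop_of_true m.succ_pos
  have hmem : (∀ i, G i ∈ 𝓕) ↔ G 0 ∈ 𝓕 ∧ ∀ i : Fin (m + 1), (i : ℕ) ≠ 0 → G i ∈ 𝓕 := by
    refine ⟨fun h => ⟨h 0, fun i _ => h i⟩, fun h i => ?_⟩
    rcases eq_or_ne i 0 with rfl | hi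
    exacts [h.1, h.2 i (Fin.val_ne_zero_iff.mpr hi)]
  simp_rw [h0, hmem, and_assoc, ite_and, sum_ite_eq]
  rfl

/-- The average, over all `n!` permutations `π`, of the number of `ℓ`-chains from `𝓕`
contained in `π`, equals `Σ_{F ∈ 𝓕} c_ℓ(F)/C(n,|F|)`. -/
theorem statement11 (n ℓ : ℕ) (hℓ : 1 ≤ ℓ) (𝓕 : Finset (Finset (Fin n))) :
    (∑ π : Equiv.Perm (Fin n), (Set.ncard {G : Fin ℓ → Finset (Fin n) |
        (∀ i, G i ∈ 𝓕) ∧ (∀ i j : Fin ℓ, i < j → G j ⊂ G i) ∧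
        (∀ i, ContainsSet π (G i))} : ℝ)) / (n.factorial : ℝ)
      = ∑ F ∈ 𝓕, chainDensity 𝓕 ℓ F / (n.choose F.card : ℝ) := by
  classical
  obtain ⟨m, rfl⟩ := Nat.exists_eq_add_of_le' hℓ
  set chains := ({G | (∀ i, G i ∈ 𝓕) ∧ StrictAnti G} : Finset (Fin (m + 1) → Finset (Fin n)))
  have hncard (π : Perm (Fin n)) :
      Set.ncard {G : Fin (m + 1) → Finset (Fin n) | (∀ i, G i ∈ 𝓕) ∧
        (∀ i j : Fin (m + 1), i < j → G j ⊂ G i) ∧ ∀ i, ContainsSet π (G i)}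
        = #(chains.bipartiteAbove (fun π G => ∀ i, ContainsSet π (G i)) π) := by
    rw [Set.ncard_eq_toFinset_card', Set.toFinset_ofPred, bipartiteAbove, filter_filter]
    simp only [and_assoc]
    rfl
  simp_rw [hncard, sum_chainDensity_div, ← Nat.cast_sum,
    sum_card_bipartiteAbove_eq_sum_card_bipartiteBelow, Nat.cast_sum, sum_div]
  exact sum_congr rfl fun G hG =>
    card_forall_containsSet_div_factorial (mem_filter.mp hG).2.2.antitone
end

section
/- Let k ≥ 2 be an integer, let ℱ be a family of subsets of {1,…,n}, let F ∈ ℱ and let 1 ≤ ℓ < k. Then c_ℓ(F) ≤ c_k(F) + 4^k. -/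
open Finset

/-!
Maximal chains of subsets of `Fin n` correspond to permutations `σ`, the chain of `σ` consisting of
the prefixes `{σ 0, …, σ (j - 1)}`. For a chain `F = G₀ ⊋ G₁ ⊋ ⋯ ⊋ G_m`, the proportion of the
maximal chains through `F` that pass through all of `G₁, …, G_m` is exactly the weight
`∏ C(|G_i|, |G_{i+1}|)⁻¹`: given the chain down to `G_i`, permutations fixing `G_i` setwise act
transitively on its subsets of size `|G_{i+1}|`. Double counting then shows that `c_{m+1}(F)` is the
average, over the maximal chains through `F`, of `C(Z, m)`, where `Z` is the number of members of
`𝓕` strictly below `F` on the chain. Finally `C(Z, ℓ - 1) ≤ C(Z, k - 1) + 4^k` pointwise: for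
`Z ≤ 2k` the left side is at most `2^Z ≤ 4^k`, and otherwise `C(Z, ·)` increases up to `Z / 2`.
-/

open Equiv

theorem Finset.exists_perm_map_eq_of_card_eq {α : Type*} [DecidableEq α] {A B B' : Finset α}
    (hB : B ⊆ A) (hB' : B' ⊆ A) (hcard : #B = #B') :
    ∃ τ : Perm α, B.map τ.toEmbedding = B' ∧ ∀ X, A ⊆ X → X.map τ.toEmbedding = X := by
  have hsub {C : Finset α} (hC : C ⊆ A) : C.subtype (· ∈ A) ∈ Set.powersetCard A #C := by
    simp [Set.powersetCard, card_subtype, filter_true_of_mem hC]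
  have := Set.powersetCard.isPretransitive (α := A) (n := #B)
  obtain ⟨g, hg⟩ := MulAction.exists_smul_eq (Perm A) (⟨_, hsub hB⟩ : Set.powersetCard A #B)
    ⟨_, hcard ▸ hsub hB'⟩
  have hgB : (B.subtype (· ∈ A)).map g.toEmbedding = B'.subtype (· ∈ A) := by
    have := congrArg Subtype.val hg
    rw [Set.powersetCard.coe_smul, smul_finset_def] at this
    simpa [map_eq_image, Perm.smul_def] using this
  refine ⟨Perm.ofSubtype g, ?_, fun X hAX => ?_⟩
  · rw [← subtype_map_of_mem hB, ← subtype_map_of_mem hB', ← hgB, map_map, map_map]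
    congr 1
    ext x
    simp [Perm.ofSubtype_apply_coe]
  · refine eq_of_subset_of_card_le (fun y hy => ?_) (card_map _).ge
    obtain ⟨x, hx, rfl⟩ := mem_map.mp hy
    by_cases hxA : x ∈ A
    · exact hAX ((Perm.ofSubtype_apply_mem_iff_mem g x).2 hxA)
    · simpa [Perm.ofSubtype_apply_of_not_mem g hxA] using hx

namespace PermChain

variable {n : ℕ}

def permPrefix (σ : Perm (Fin n)) (m : ℕ) : Finset (Fin n) :=
  (univ.filter fun i : Fin n => (i : ℕ) < m).map σ.toEmbedding

def IsOnPermChain (σ : Perm (Fin n)) (X : Finset (Fin n)) : Prop :=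
  permPrefix σ #X = X

instance (σ : Perm (Fin n)) : DecidablePred (IsOnPermChain σ) :=
  fun X => inferInstanceAs (Decidable (permPrefix σ #X = X))

theorem permPrefix_mono (σ : Perm (Fin n)) : Monotone (permPrefix σ) :=
  fun _ _ h => map_subset_map.mpr (monotone_filter_right _ fun _ _ hi => hi.trans_le h)

theorem card_permPrefix (σ : Perm (Fin n)) {m : ℕ} (hm : m ≤ n) : #(permPrefix σ m) = m := by
  simp [permPrefix, Fin.card_filter_val_lt, hm]

theorem permPrefix_mul (τ σ : Perm (Fin n)) (m : ℕ) :
    permPrefix (τ * σ) m = (permPrefix σ m).map τ.toEmbedding := by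
  simp [permPrefix, map_map, Perm.mul_def]

theorem IsOnPermChain.subset_of_card_le {σ : Perm (Fin n)} {X Y : Finset (Fin n)}
    (hX : IsOnPermChain σ X) (hY : IsOnPermChain σ Y) (h : #X ≤ #Y) : X ⊆ Y :=
  hX ▸ hY ▸ permPrefix_mono σ h

theorem IsOnPermChain.ssubset_iff {σ : Perm (Fin n)} {X Y : Finset (Fin n)}
    (hX : IsOnPermChain σ X) (hY : IsOnPermChain σ Y) : X ⊂ Y ↔ #X < #Y :=
  ⟨card_lt_card, fun h => (hX.subset_of_card_le hY h.le).ssubset_of_ne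
    (fun hXY => h.ne (congrArg _ hXY))⟩

theorem isOnPermChain_mul_map {τ σ : Perm (Fin n)} {X : Finset (Fin n)} :
    IsOnPermChain (τ * σ) (X.map τ.toEmbedding) ↔ IsOnPermChain σ X := by
  simp [IsOnPermChain, permPrefix_mul]

def passCount {ℓ : ℕ} (G : Fin ℓ → Finset (Fin n)) : ℕ :=
  #{σ : Perm (Fin n) | ∀ i, IsOnPermChain σ (G i)}

theorem passCount_map_perm (τ : Perm (Fin n)) {ℓ : ℕ} (G : Fin ℓ → Finset (Fin n)) :
    passCount (fun i => (G i).map τ.toEmbedding) = passCount G :=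
  (card_equiv (Equiv.mulLeft τ) fun σ => by simp [isOnPermChain_mul_map]).symm

theorem passCount_snoc_eq_of_card_eq {ℓ : ℕ} (G : Fin ℓ → Finset (Fin n)) {A B B' : Finset (Fin n)}
    (hGA : ∀ i, A ⊆ G i) (hB : B ⊆ A) (hB' : B' ⊆ A) (hcard : #B = #B') :
    passCount (Fin.snoc G B) = passCount (Fin.snoc G B') := by
  obtain ⟨τ, hτB, hτG⟩ := exists_perm_map_eq_of_card_eq hB hB' hcard
  rw [← passCount_map_perm τ]
  congr 1
  funext i
  induction i using Fin.lastCases <;> simp [hτB, hτG _ (hGA _)]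

theorem passCount_eq_sum_snoc {m : ℕ} (G : Fin (m + 1) → Finset (Fin n)) {b : ℕ}
    (hb : b ≤ #(G (Fin.last m))) :
    passCount G = ∑ B ∈ (G (Fin.last m)).powersetCard b, passCount (Fin.snoc G B) := by
  have hbn : b ≤ n := hb.trans ((card_le_univ _).trans (Fintype.card_fin n).le)
  unfold passCount
  rw [card_eq_sum_card_fiberwise (f := fun σ => permPrefix σ b) fun σ hσ => ?_]
  · refine sum_congr rfl fun B hB => ?_
    rw [mem_powersetCard] at hB
    rw [filter_filter]
    congr 1
    refine filter_congr fun σ _ => ?_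
    simp [Fin.forall_fin_succ' (n := m + 1), IsOnPermChain, hB.2]
  · have hσ := (mem_filter.mp hσ).2 (Fin.last m)
    exact mem_powersetCard.mpr ⟨hσ ▸ permPrefix_mono σ hb, card_permPrefix σ hbn⟩

theorem choose_mul_passCount_snoc {m : ℕ} {G : Fin (m + 1) → Finset (Fin n)} (hG : Antitone G)
    {B : Finset (Fin n)} (hB : B ⊆ G (Fin.last m)) :
    (#(G (Fin.last m))).choose #B * passCount (Fin.snoc G B) = passCount G := by
  rw [passCount_eq_sum_snoc G (card_le_card hB), ← card_powersetCard, ← smul_eq_mul,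
    ← sum_const]
  refine sum_congr rfl fun B' hB' => ?_
  rw [mem_powersetCard] at hB'
  exact passCount_snoc_eq_of_card_eq G (fun i => hG (Fin.le_last i)) hB hB'.1 hB'.2.symm

theorem chainWeight_eq_prod {m : ℕ} (G : Fin (m + 1) → Finset (Fin n)) :
    chainWeight G = ∏ i : Fin m, ((#(G i.castSucc)).choose #(G i.succ) : ℝ)⁻¹ := by
  rw [chainWeight, Fin.prod_univ_castSucc, dif_neg (by simp), mul_one]
  exact prod_congr rfl fun i _ => dif_pos (by simp)

theorem chainWeight_snoc {m : ℕ} (G : Fin (m + 1) → Finset (Fin n)) (B : Finset (Fin n)) :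
    chainWeight (Fin.snoc G B : Fin (m + 2) → Finset (Fin n)) =
      chainWeight G * ((#(G (Fin.last m))).choose #B : ℝ)⁻¹ := by
  rw [chainWeight_eq_prod, chainWeight_eq_prod, Fin.prod_univ_castSucc]
  simp only [Fin.succ_castSucc, Fin.snoc_castSucc, Fin.succ_last, Fin.snoc_last]

theorem chainWeight_mul_passCount {m : ℕ} {G : Fin (m + 1) → Finset (Fin n)} (hG : StrictAnti G) :
    chainWeight G * passCount (fun _ : Fin 1 => G 0) = passCount G := by
  induction m with
  | zero =>
    have hG : G = fun _ => G 0 := funext fun i => congrArg G (Fin.fin_one_eq_zero i)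
    rw [← hG, chainWeight_eq_prod, Fin.prod_univ_zero, one_mul]
  | succ m ih =>
    have hinit : StrictAnti (Fin.init G) := hG.comp_strictMono Fin.strictMono_castSucc
    have hsub : G (Fin.last (m + 1)) ⊆ Fin.init G (Fin.last m) := (hG (Fin.castSucc_lt_last _)).le
    have hcount := choose_mul_passCount_snoc hinit.antitone hsub
    rw [Fin.snoc_init_self] at hcount
    have hchoose : (0 : ℝ) < (#(Fin.init G (Fin.last m))).choose #(G (Fin.last (m + 1))) :=
      Nat.cast_pos.mpr (Nat.choose_pos (card_le_card hsub))
    calc chainWeight G * passCount (fun _ : Fin 1 => G 0)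
        = chainWeight (Fin.init G) * passCount (fun _ : Fin 1 => Fin.init G 0) *
            ((#(Fin.init G (Fin.last m))).choose #(G (Fin.last (m + 1))) : ℝ)⁻¹ := by
          rw [← Fin.snoc_init_self G, chainWeight_snoc, Fin.snoc_init_self]
          simp only [Fin.init, Fin.castSucc_zero]
          ring
      _ = passCount G := by
          rw [ih hinit, ← hcount]
          push_cast
          field_simp

def IsChainFrom (𝓕 : Finset (Finset (Fin n))) (F : Finset (Fin n)) {m : ℕ}
    (G : Fin (m + 1) → Finset (Fin n)) : Prop :=
  G 0 = F ∧ (∀ i, i ≠ 0 → G i ∈ 𝓕) ∧ StrictAnti G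

instance (𝓕 : Finset (Finset (Fin n))) (F : Finset (Fin n)) {m : ℕ}
    (G : Fin (m + 1) → Finset (Fin n)) : Decidable (IsChainFrom 𝓕 F G) :=
  inferInstanceAs (Decidable (_ ∧ _ ∧ ∀ i j, i < j → G j < G i))

theorem chainDensity_succ (𝓕 : Finset (Finset (Fin n))) (m : ℕ) (F : Finset (Fin n)) :
    chainDensity 𝓕 (m + 1) F =
      ∑ G : Fin (m + 1) → Finset (Fin n), if IsChainFrom 𝓕 F G then chainWeight G else 0 := by
  refine sum_congr rfl fun G _ => if_congr ?_ rfl rfl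
  simp [IsChainFrom, StrictAnti]

theorem isChainFrom_cons_iff {𝓕 : Finset (Finset (Fin n))} {F : Finset (Fin n)} {m : ℕ}
    {G : Fin (m + 1) → Finset (Fin n)} :
    IsChainFrom 𝓕 F (Fin.cons F G) ↔ G 0 ∈ 𝓕 ∧ G 0 ⊂ F ∧ IsChainFrom 𝓕 (G 0) G := by
  have hanti : StrictAnti (Fin.cons F G : Fin (m + 2) → Finset (Fin n)) ↔ G 0 < F ∧ StrictAnti G :=
    strictAnti_vecCons
  simp only [IsChainFrom, Fin.cons_zero, Fin.forall_fin_succ, Fin.cons_succ, hanti, ne_eq,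
    not_true_eq_false, IsEmpty.forall_iff, Fin.succ_ne_zero, not_false_eq_true, forall_const,
    true_and]
  tauto

theorem sum_choose_card_filter_lt {ι α : Type*} [DecidableEq ι] [LinearOrder α] (f : ι → α)
    {s : Finset ι} (hf : Set.InjOn f s) (m : ℕ) :
    ∑ x ∈ s, (#{y ∈ s | f y < f x}).choose m = (#s).choose (m + 1) := by
  induction s using Finset.induction_on_max_value f with
  | empty => simp
  | insert a s ha hmax ih =>
    have hlt : ∀ x ∈ s, f x < f a := fun x hx =>
      (hmax x hx).lt_of_ne fun h => ha (hf (mem_insert_of_mem hx) (mem_insert_self a s) h ▸ hx)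
    have hbelow_a : {y ∈ insert a s | f y < f a} = s := by
      rw [filter_insert, if_neg (lt_irrefl _), filter_true_of_mem hlt]
    have hbelow : ∀ x ∈ s, {y ∈ insert a s | f y < f x} = {y ∈ s | f y < f x} := fun x hx => by
      rw [filter_insert, if_neg (hlt x hx).le.not_gt]
    rw [sum_insert ha, hbelow_a, sum_congr rfl fun x hx => by rw [hbelow x hx],
      ih (hf.mono (subset_insert a s)), card_insert_of_notMem ha, Nat.choose_succ_succ', add_comm]

def chainBelow (𝓕 : Finset (Finset (Fin n))) (σ : Perm (Fin n)) (F : Finset (Fin n)) :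
    Finset (Finset (Fin n)) :=
  {H ∈ 𝓕 | H ⊂ F ∧ IsOnPermChain σ H}

theorem chainBelow_eq_filter {𝓕 : Finset (Finset (Fin n))} {σ : Perm (Fin n)}
    {F H : Finset (Fin n)} (hH : H ∈ chainBelow 𝓕 σ F) :
    chainBelow 𝓕 σ H = {H' ∈ chainBelow 𝓕 σ F | #H' < #H} := by
  simp only [chainBelow, mem_filter] at hH ⊢
  ext H'
  simp only [mem_filter]
  constructor
  · rintro ⟨h𝓕, hH'H, hσ⟩
    exact ⟨⟨h𝓕, hH'H.trans hH.2.1, hσ⟩, card_lt_card hH'H⟩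
  · rintro ⟨⟨h𝓕, -, hσ⟩, hcard⟩
    exact ⟨h𝓕, (hσ.ssubset_iff hH.2.2).mpr hcard, hσ⟩

theorem sum_choose_card_chainBelow (𝓕 : Finset (Finset (Fin n))) (σ : Perm (Fin n))
    (F : Finset (Fin n)) (m : ℕ) :
    ∑ H ∈ chainBelow 𝓕 σ F, (#(chainBelow 𝓕 σ H)).choose m =
      (#(chainBelow 𝓕 σ F)).choose (m + 1) := by
  rw [sum_congr rfl fun H hH => by rw [chainBelow_eq_filter hH]]
  refine sum_choose_card_filter_lt card (fun X hX Y hY hXY => ?_) m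
  have hX := (mem_filter.mp hX).2.2
  have hY := (mem_filter.mp hY).2.2
  exact (hX.subset_of_card_le hY hXY.le).antisymm (hY.subset_of_card_le hX hXY.ge)

def chainsOnPerm (𝓕 : Finset (Finset (Fin n))) (σ : Perm (Fin n))
    (F : Finset (Fin n)) (m : ℕ) : Finset (Fin (m + 1) → Finset (Fin n)) :=
  {G | IsChainFrom 𝓕 F G ∧ ∀ i, IsOnPermChain σ (G i)}

theorem cons_mem_chainsOnPerm_iff {𝓕 : Finset (Finset (Fin n))} {σ : Perm (Fin n)}
    {F : Finset (Fin n)} {m : ℕ} {G : Fin (m + 1) → Finset (Fin n)} :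
    Fin.cons F G ∈ chainsOnPerm 𝓕 σ F (m + 1) ↔
      IsOnPermChain σ F ∧ G 0 ∈ chainBelow 𝓕 σ F ∧ G ∈ chainsOnPerm 𝓕 σ (G 0) m := by
  simp only [chainsOnPerm, chainBelow, mem_filter, mem_univ, true_and, isChainFrom_cons_iff,
    Fin.forall_fin_succ, Fin.cons_zero, Fin.cons_succ]
  tauto

theorem card_chainsOnPerm (𝓕 : Finset (Finset (Fin n))) (σ : Perm (Fin n)) (m : ℕ) :
    ∀ F, IsOnPermChain σ F → #(chainsOnPerm 𝓕 σ F m) = (#(chainBelow 𝓕 σ F)).choose m := by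
  induction m with
  | zero =>
    intro F hF
    rw [Nat.choose_zero_right, card_eq_one]
    refine ⟨fun _ => F, eq_singleton_iff_unique_mem.mpr ⟨?_, fun G hG => ?_⟩⟩
    · simp [chainsOnPerm, IsChainFrom, hF, Subsingleton.strictAnti]
    · exact funext fun i => (Fin.fin_one_eq_zero i) ▸ (mem_filter.mp hG).2.1.1
  | succ m ih =>
    intro F hF
    have hcons : ∀ G ∈ chainsOnPerm 𝓕 σ F (m + 1), Fin.cons F (Fin.tail G) = G := fun G hG =>
      (mem_filter.mp hG).2.1.1 ▸ Fin.cons_self_tail G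
    have hhead : ∀ H, ∀ G ∈ chainsOnPerm 𝓕 σ H m, G 0 = H := fun H G hG => (mem_filter.mp hG).2.1.1
    rw [← sum_choose_card_chainBelow, ← sum_congr rfl fun H hH => ih H (mem_filter.mp hH).2.2,
      ← card_sigma]
    refine card_nbij' (fun G => ⟨G 1, Fin.tail G⟩) (fun p => Fin.cons F p.2) (fun G hG => ?_)
      (fun p hp => ?_) (fun G hG => hcons G hG) (fun p hp => ?_)
    · rw [mem_coe, ← hcons G hG, cons_mem_chainsOnPerm_iff] at hG
      exact mem_sigma.mpr hG.2
    · obtain ⟨hH, hG⟩ := mem_sigma.mp hp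
      exact cons_mem_chainsOnPerm_iff.mpr ⟨hF, hhead _ _ hG ▸ hH, hhead _ _ hG ▸ hG⟩
    · obtain ⟨-, hG⟩ := mem_sigma.mp hp
      simp [hhead _ _ hG]

theorem exists_isOnPermChain (F : Finset (Fin n)) : ∃ σ : Perm (Fin n), IsOnPermChain σ F := by
  have hcard : #{i : Fin n | (i : ℕ) < #F} = #F := by
    simpa [Fin.card_filter_val_lt] using card_le_univ F
  obtain ⟨σ, hσ, -⟩ := exists_perm_map_eq_of_card_eq (subset_univ _) (subset_univ F) hcard
  exact ⟨σ, hσ⟩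

theorem chainDensity_mul_card (𝓕 : Finset (Finset (Fin n))) (F : Finset (Fin n)) (m : ℕ) :
    chainDensity 𝓕 (m + 1) F * #{σ : Perm (Fin n) | IsOnPermChain σ F} =
      ∑ σ with IsOnPermChain σ F, ((#(chainBelow 𝓕 σ F)).choose m : ℝ) := by
  have hpass : passCount (fun _ : Fin 1 => F) = #{σ : Perm (Fin n) | IsOnPermChain σ F} := by
    simp [passCount]
  calc chainDensity 𝓕 (m + 1) F * #{σ : Perm (Fin n) | IsOnPermChain σ F}
      = ∑ G : Fin (m + 1) → Finset (Fin n) with IsChainFrom 𝓕 F G, (passCount G : ℝ) := by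
        rw [chainDensity_succ, sum_mul, sum_filter]
        refine sum_congr rfl fun G _ => ?_
        split_ifs with hG
        · rw [← chainWeight_mul_passCount hG.2.2, hG.1, hpass]
        · exact zero_mul _
    _ = ∑ σ, (#(chainsOnPerm 𝓕 σ F m) : ℝ) := by
        simp only [passCount, chainsOnPerm, ← filter_filter]
        exact_mod_cast sum_card_bipartiteAbove_eq_sum_card_bipartiteBelow
          (fun (G : Fin (m + 1) → Finset (Fin n)) σ => ∀ i, IsOnPermChain σ (G i))
    _ = ∑ σ with IsOnPermChain σ F, ((#(chainBelow 𝓕 σ F)).choose m : ℝ) := by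
        rw [sum_filter]
        refine sum_congr rfl fun σ _ => ?_
        split_ifs with hσ
        · rw [card_chainsOnPerm 𝓕 σ m F hσ]
        · refine Nat.cast_eq_zero.mpr (card_eq_zero.mpr (filter_eq_empty_iff.mpr ?_))
          exact fun G _ hG => hσ (hG.1.1 ▸ hG.2 0)

end PermChain

theorem Nat.choose_le_choose_of_le_half_left {z a b : ℕ} (hab : a ≤ b) (hb : b ≤ z / 2) :
    z.choose a ≤ z.choose b := by
  induction b, hab using Nat.le_induction with
  | base => rfl
  | succ b _ ih => exact (ih (by omega)).trans (Nat.choose_le_succ_of_lt_half_left (by omega))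

theorem Nat.choose_le_choose_add_four_pow (z : ℕ) {a b : ℕ} (hab : a ≤ b) :
    z.choose a ≤ z.choose b + 4 ^ (b + 1) := by
  rcases le_or_gt z (2 * (b + 1)) with hz | hz
  · calc z.choose a ≤ 2 ^ z := Nat.choose_le_two_pow z a
      _ ≤ 2 ^ (2 * (b + 1)) := Nat.pow_le_pow_right two_pos hz
      _ = 4 ^ (b + 1) := by rw [pow_mul]; norm_num
      _ ≤ z.choose b + 4 ^ (b + 1) := Nat.le_add_left _ _
  · exact (Nat.choose_le_choose_of_le_half_left hab (by omega)).trans (Nat.le_add_right _ _)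

theorem statement12_general (n k : ℕ) (𝓕 : Finset (Finset (Fin n)))
    (F : Finset (Fin n)) (ℓ : ℕ) (hℓ1 : 1 ≤ ℓ) (hℓk : ℓ < k) :
    chainDensity 𝓕 ℓ F ≤ chainDensity 𝓕 k F + 4 ^ k := by
  obtain ⟨a, rfl⟩ : ∃ a, ℓ = a + 1 := ⟨ℓ - 1, by omega⟩
  obtain ⟨b, rfl⟩ : ∃ b, k = b + 1 := ⟨k - 1, by omega⟩
  obtain ⟨σ₀, hσ₀⟩ := PermChain.exists_isOnPermChain F
  have hpos : (0 : ℝ) < #{σ : Perm (Fin n) | PermChain.IsOnPermChain σ F} :=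
    Nat.cast_pos.mpr (card_pos.mpr ⟨σ₀, mem_filter.mpr ⟨mem_univ σ₀, hσ₀⟩⟩)
  refine le_of_mul_le_mul_right ?_ hpos
  rw [add_mul, PermChain.chainDensity_mul_card, PermChain.chainDensity_mul_card, mul_comm,
    ← nsmul_eq_mul, ← sum_const, ← sum_add_distrib]
  exact sum_le_sum fun σ _ => by exact_mod_cast Nat.choose_le_choose_add_four_pow _ (by omega)

/-- Chain densities are almost monotone: `c_ℓ(F) ≤ c_k(F) + 4^k` for `1 ≤ ℓ < k`. -/
theorem statement12 (n k : ℕ) (hk : 2 ≤ k) (𝓕 : Finset (Finset (Fin n)))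
    (F : Finset (Fin n)) (hF : F ∈ 𝓕) (ℓ : ℕ) (hℓ1 : 1 ≤ ℓ) (hℓk : ℓ < k) :
    chainDensity 𝓕 ℓ F ≤ chainDensity 𝓕 k F + 4 ^ k :=
  statement12_general n k 𝓕 F ℓ hℓ1 hℓk
end

section
/- Let k ≥ 2 be an integer, let 0 ≤ α ≤ 1, and let ℱ be a family of subsets of {1,…,n} with |ℱ| ≥ (k−1+α)·C(n,⌊n/2⌋). Then there exists F ∈ ℱ with c_k(F) ≥ α/k. -/
open Finset

namespace Stmt13
open scoped Classical

variable {n : ℕ}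

def pref (σ : Equiv.Perm (Fin n)) (m : ℕ) : Finset (Fin n) :=
  univ.filter fun x => (σ x : ℕ) < m

lemma mem_pref {σ : Equiv.Perm (Fin n)} {m : ℕ} {x : Fin n} :
    x ∈ pref σ m ↔ (σ x : ℕ) < m := by simp [pref]

lemma card_filter_lt (m : ℕ) (hm : m ≤ n) :
    (univ.filter fun y : Fin n => (y : ℕ) < m).card = m := by
  have he : (univ.filter fun y : Fin n => (y : ℕ) < m)
      = (Finset.range m).attachFin
        (fun m' hm' => lt_of_lt_of_le (Finset.mem_range.mp hm') hm) := by
    ext a; simp [Finset.mem_attachFin]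
  rw [he, Finset.card_attachFin, Finset.card_range]

lemma card_pref (σ : Equiv.Perm (Fin n)) {m : ℕ} (hm : m ≤ n) :
    (pref σ m).card = m := by
  have : (pref σ m).card = (univ.filter fun y : Fin n => (y : ℕ) < m).card :=
    Finset.card_nbij' (fun a => σ a) (fun b => σ.symm b)
      (by intro a ha; simpa using (mem_pref.mp ha))
      (by intro b hb; simp at hb; simp [mem_pref, hb])
      (by intro a _; simp) (by intro b _; simp)
  rw [this, card_filter_lt m hm]

lemma pref_ssubset (σ : Equiv.Perm (Fin n)) {m m' : ℕ} (h : m < m') (h' : m' ≤ n) :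
    pref σ m ⊂ pref σ m' := by
  refine Finset.ssubset_iff_subset_ne.mpr ⟨fun x hx => ?_, fun he => ?_⟩
  · exact mem_pref.mpr (lt_of_lt_of_le (mem_pref.mp hx) h.le)
  · have := card_pref σ (le_trans h.le h') ▸ card_pref σ h' ▸ congrArg Finset.card he
    omega

lemma downclosed_mem {k : ℕ} {s : Finset (Fin k)}
    (hs : ∀ ⦃i j : Fin k⦄, i ≤ j → j ∈ s → i ∈ s) (i : Fin k) :
    i ∈ s ↔ (i : ℕ) < s.card := by
  constructor
  · intro hi
    have h1 : Finset.Iic i ⊆ s := fun j hj => hs (Finset.mem_Iic.mp hj) hi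
    have := Finset.card_le_card h1
    rw [Fin.card_Iic] at this
    omega
  · intro hi
    by_contra hin
    have h2 : s ⊆ Finset.Iio i := by
      intro j hj
      rw [Finset.mem_Iio]
      by_contra hji
      exact hin (hs (not_lt.mp hji) hj)
    have := Finset.card_le_card h2
    rw [Fin.card_Iio] at this
    omega

lemma card_perm_fiber {n K : ℕ} (P Q : Fin n → Fin K)
    (h : ∀ t, (univ.filter fun x => P x = t).card = (univ.filter fun y => Q y = t).card) :
    (univ.filter fun σ : Equiv.Perm (Fin n) => ∀ x, Q (σ x) = P x).card
      = ∏ t : Fin K, Nat.factorial (univ.filter fun x => P x = t).card := by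
  classical
  -- helper
  have helper1 : ∀ (f : ∀ t : Fin K, {x : Fin n // P x = t} ≃ {y : Fin n // Q y = t})
      (t : Fin K) (x : Fin n) (hx : P x = t),
      ((f t ⟨x, hx⟩ : {y : Fin n // Q y = t}) : Fin n) = ((f (P x)) ⟨x, rfl⟩ : Fin n) := by
    rintro f t x rfl; rfl
  have e : {σ : Equiv.Perm (Fin n) // ∀ x, Q (σ x) = P x}
      ≃ ∀ t : Fin K, {x : Fin n // P x = t} ≃ {y : Fin n // Q y = t} := by
    refine
      { toFun := fun σ t =>
          { toFun := fun x => ⟨σ.1 x.1, by rw [σ.2 x.1, x.2]⟩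
            invFun := fun y => ⟨σ.1.symm y.1, by
              have h2 := σ.2 (σ.1.symm y.1)
              rw [Equiv.apply_symm_apply] at h2
              rw [← h2, y.2]⟩
            left_inv := fun x => Subtype.ext (σ.1.symm_apply_apply x.1)
            right_inv := fun y => Subtype.ext (σ.1.apply_symm_apply y.1) }
        invFun := fun f => ⟨Equiv.ofBijective (fun x => ((f (P x)) ⟨x, rfl⟩ : Fin n)) ?_,
          fun x => ((f (P x)) ⟨x, rfl⟩).2⟩
        left_inv := ?_
        right_inv := ?_ }
    · -- bijective
      rw [Fintype.bijective_iff_injective_and_card]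
      refine ⟨fun x x' hxx => ?_, rfl⟩
      dsimp only at hxx
      have h1 : Q ((f (P x)) ⟨x, rfl⟩ : Fin n) = P x := ((f (P x)) ⟨x, rfl⟩).2
      have h2 : Q ((f (P x')) ⟨x', rfl⟩ : Fin n) = P x' := ((f (P x')) ⟨x', rfl⟩).2
      have hP : P x = P x' := by rw [← h1, ← h2, hxx]
      have h3 := helper1 f (P x) x' hP.symm
      rw [← h3] at hxx
      have h4 : (⟨x, rfl⟩ : {z : Fin n // P z = P x}) = ⟨x', hP.symm⟩ :=
        (f (P x)).injective (Subtype.ext hxx)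
      exact congrArg Subtype.val h4
    · -- left_inv : invFun ∘ toFun = id
      intro σ
      exact Subtype.ext (Equiv.ext fun x => rfl)
    · -- right_inv
      intro f
      funext t
      apply Equiv.ext
      rintro ⟨x, hx⟩
      apply Subtype.ext
      exact (helper1 f t x hx).symm
  have hc := Fintype.card_congr e
  rw [Fintype.card_subtype] at hc
  rw [hc, Fintype.card_pi]
  refine Finset.prod_congr rfl fun t _ => ?_
  have eq1 : Fintype.card {x : Fin n // P x = t} = (univ.filter fun x => P x = t).card :=
    Fintype.card_subtype _
  have eq2 : Fintype.card {y : Fin n // Q y = t} = (univ.filter fun y => Q y = t).card :=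
    Fintype.card_subtype _
  have hcardeq : Fintype.card {x : Fin n // P x = t} = Fintype.card {y : Fin n // Q y = t} := by
    rw [eq1, eq2, h t]
  rw [Fintype.card_equiv (Fintype.equivOfCardEq hcardeq), eq1]


lemma chainfact (c : ℕ → ℕ) :
    ∀ K : ℕ, (∀ i < K, c (i + 1) ≤ c i) →
      (∏ t ∈ Finset.range K, (Nat.factorial (c t - c (t + 1)) * (c t).choose (c (t + 1))))
        * Nat.factorial (c K) = Nat.factorial (c 0)
  | 0, _ => by simp
  | (K + 1), h => by
    rw [Finset.prod_range_succ]
    have hK : c (K + 1) ≤ c K := h K (by omega)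
    have key : Nat.factorial (c K - c (K + 1)) * (c K).choose (c (K + 1))
        * Nat.factorial (c (K + 1)) = Nat.factorial (c K) := by
      have := Nat.choose_mul_factorial_mul_factorial hK
      calc Nat.factorial (c K - c (K+1)) * (c K).choose (c (K+1)) * Nat.factorial (c (K+1))
          = (c K).choose (c (K+1)) * Nat.factorial (c (K+1)) * Nat.factorial (c K - c (K+1)) := by ring
        _ = Nat.factorial (c K) := this
    calc (∏ t ∈ Finset.range K, (Nat.factorial (c t - c (t+1)) * (c t).choose (c (t+1))))
          * (Nat.factorial (c K - c (K+1)) * (c K).choose (c (K+1))) * Nat.factorial (c (K+1))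
        = (∏ t ∈ Finset.range K, (Nat.factorial (c t - c (t+1)) * (c t).choose (c (t+1))))
          * (Nat.factorial (c K - c (K+1)) * (c K).choose (c (K+1)) * Nat.factorial (c (K+1))) := by ring
      _ = (∏ t ∈ Finset.range K, (Nat.factorial (c t - c (t+1)) * (c t).choose (c (t+1))))
          * Nat.factorial (c K) := by rw [key]
      _ = Nat.factorial (c 0) := chainfact c K (fun i hi => h i (by omega))


section Chain
variable {k : ℕ} (G : Fin k → Finset (Fin n))

-- the Nat-valued "level" functions
noncomputable def pfun (G : Fin k → Finset (Fin n)) : Fin n → ℕ :=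
  fun x => (univ.filter fun i : Fin k => x ∈ G i).card

noncomputable def qfun (G : Fin k → Finset (Fin n)) : Fin n → ℕ :=
  fun y => (univ.filter fun i : Fin k => (y : ℕ) < (G i).card).card

noncomputable def afun (G : Fin k → Finset (Fin n)) : ℕ → ℕ :=
  fun t => if h : t < k then (G ⟨t, h⟩).card else 0

lemma sdown (hdec : ∀ i j : Fin k, i < j → G j ⊂ G i) (x : Fin n) : ∀ ⦃i j : Fin k⦄, i ≤ j →
    j ∈ (univ.filter fun i : Fin k => x ∈ G i) → i ∈ (univ.filter fun i : Fin k => x ∈ G i) := by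
  intro i j hij hj
  simp only [mem_filter, mem_univ, true_and] at hj ⊢
  rcases eq_or_lt_of_le hij with rfl | hlt
  · exact hj
  · exact (hdec i j hlt).subset hj

lemma tdown (hdec : ∀ i j : Fin k, i < j → G j ⊂ G i) (y : Fin n) : ∀ ⦃i j : Fin k⦄, i ≤ j →
    j ∈ (univ.filter fun i : Fin k => (y : ℕ) < (G i).card) →
    i ∈ (univ.filter fun i : Fin k => (y : ℕ) < (G i).card) := by
  intro i j hij hj
  simp only [mem_filter, mem_univ, true_and] at hj ⊢
  rcases eq_or_lt_of_le hij with rfl | hlt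
  · exact hj
  · exact lt_of_lt_of_le hj (Finset.card_le_card (hdec i j hlt).subset)

lemma pfun_le (x : Fin n) : pfun G x ≤ k :=
  le_trans (Finset.card_filter_le _ _) (by simp)

lemma qfun_le (y : Fin n) : qfun G y ≤ k :=
  le_trans (Finset.card_filter_le _ _) (by simp)

lemma mem_G_iff_lt_pfun (hdec : ∀ i j : Fin k, i < j → G j ⊂ G i) (x : Fin n) (i : Fin k) : x ∈ G i ↔ (i : ℕ) < pfun G x := by
  have := downclosed_mem (sdown G hdec x) i
  simpa [pfun, mem_filter] using this

lemma lt_card_iff_lt_qfun (hdec : ∀ i j : Fin k, i < j → G j ⊂ G i) (y : Fin n) (i : Fin k) :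
    (y : ℕ) < (G i).card ↔ (i : ℕ) < qfun G y := by
  have := downclosed_mem (tdown G hdec y) i
  simpa [qfun, mem_filter] using this


noncomputable def cfun (G : Fin k → Finset (Fin n)) : ℕ → ℕ :=
  fun t => (univ.filter fun x : Fin n => t ≤ pfun G x).card

lemma cfun_zero : cfun G 0 = n := by
  simp [cfun]

lemma cfun_succ (hdec : ∀ i j : Fin k, i < j → G j ⊂ G i) (t : ℕ) :
    cfun G (t + 1) = afun G t := by
  unfold cfun afun
  by_cases h : t < k
  · rw [dif_pos h]
    congr 1
    have : (univ.filter fun x : Fin n => t + 1 ≤ pfun G x) = G ⟨t, h⟩ := by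
      ext x
      simp only [mem_filter, mem_univ, true_and]
      rw [mem_G_iff_lt_pfun G hdec x ⟨t, h⟩]
      simp only [Fin.val_mk]
      omega
    rw [this]
  · rw [dif_neg h]
    convert Finset.card_empty
    rw [Finset.filter_eq_empty_iff]
    intro x _
    have := pfun_le G x
    omega

lemma cfun_antitone (t : ℕ) : cfun G (t + 1) ≤ cfun G t := by
  apply Finset.card_le_card
  intro x hx
  simp only [mem_filter, mem_univ, true_and] at hx ⊢
  omega

/-- the `q`-side threshold sets have the same cardinalities -/
lemma qthresh (hdec : ∀ i j : Fin k, i < j → G j ⊂ G i) (t : ℕ) :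
    (univ.filter fun y : Fin n => t ≤ qfun G y).card = cfun G t := by
  cases t with
  | zero => simp [cfun]
  | succ t =>
    rw [cfun_succ G hdec t]
    unfold afun
    by_cases h : t < k
    · rw [dif_pos h]
      have : (univ.filter fun y : Fin n => t + 1 ≤ qfun G y)
          = (univ.filter fun y : Fin n => (y : ℕ) < (G ⟨t, h⟩).card) := by
        ext y
        simp only [mem_filter, mem_univ, true_and]
        rw [lt_card_iff_lt_qfun G hdec y ⟨t, h⟩]
        simp only [Fin.val_mk]
        omega
      rw [this, card_filter_lt _ (le_trans (Finset.card_le_univ _) (by simp))]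
    · rw [dif_neg h]
      convert Finset.card_empty
      rw [Finset.filter_eq_empty_iff]
      intro y _
      have := qfun_le G y
      omega

/-- fiber cards in terms of thresholds -/
lemma fiber_card (r : Fin n → ℕ) (t : ℕ) :
    (univ.filter fun x : Fin n => r x = t).card
      = (univ.filter fun x : Fin n => t ≤ r x).card
        - (univ.filter fun x : Fin n => t + 1 ≤ r x).card := by
  have hsub : (univ.filter fun x : Fin n => t + 1 ≤ r x)
      ⊆ (univ.filter fun x : Fin n => t ≤ r x) := by
    intro x hx
    simp only [mem_filter, mem_univ, true_and] at hx ⊢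
    omega
  rw [← Finset.card_sdiff_of_subset hsub]
  congr 1
  ext x
  simp only [Finset.mem_sdiff, mem_filter, mem_univ, true_and]
  omega



lemma compat_iff (hdec : ∀ i j : Fin k, i < j → G j ⊂ G i)
    (σ : Equiv.Perm (Fin n)) :
    (∀ i, pref σ ((G i).card) = G i) ↔ (∀ x, qfun G (σ x) = pfun G x) := by
  constructor
  · intro hσ x
    have hx : ∀ i : Fin k, ((σ x : ℕ) < (G i).card) ↔ x ∈ G i := by
      intro i
      conv_rhs => rw [← hσ i]
      rw [mem_pref]
    have he : (univ.filter fun i : Fin k => ((σ x : ℕ)) < (G i).card)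
        = (univ.filter fun i : Fin k => x ∈ G i) := by
      ext i
      simp only [mem_filter, mem_univ, true_and]
      exact hx i
    simpa [qfun, pfun] using congrArg Finset.card he
  · intro hσ i
    ext x
    rw [mem_pref]
    rw [lt_card_iff_lt_qfun G hdec (σ x) i, mem_G_iff_lt_pfun G hdec x i, hσ x]

/-- The key exact count: permutations whose prefix sets realize the chain `G`. -/
lemma count_compat_nat (hdec : ∀ i j : Fin k, i < j → G j ⊂ G i) :
    (univ.filter fun σ : Equiv.Perm (Fin n) => ∀ i, pref σ ((G i).card) = G i).card
      * ∏ t ∈ Finset.range (k + 1), (cfun G t).choose (cfun G (t + 1)) = n.factorial := by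
  classical
  set P : Fin n → Fin (k + 1) := fun x => ⟨pfun G x, Nat.lt_succ_of_le (pfun_le G x)⟩ with hP
  set Q : Fin n → Fin (k + 1) := fun y => ⟨qfun G y, Nat.lt_succ_of_le (qfun_le G y)⟩ with hQ
  have hfibP : ∀ t : ℕ, (univ.filter fun x => pfun G x = t).card
      = cfun G t - cfun G (t + 1) := fun t => fiber_card (pfun G) t
  have hfibQ : ∀ t : ℕ, (univ.filter fun y => qfun G y = t).card
      = cfun G t - cfun G (t + 1) := by
    intro t
    rw [fiber_card (qfun G) t, qthresh G hdec t, qthresh G hdec (t + 1)]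
  have hPf : ∀ t : Fin (k + 1), (univ.filter fun x => P x = t)
      = (univ.filter fun x => pfun G x = (t : ℕ)) := by
    intro t; ext x; simp [hP, Fin.ext_iff]
  have hQf : ∀ t : Fin (k + 1), (univ.filter fun y => Q y = t)
      = (univ.filter fun y => qfun G y = (t : ℕ)) := by
    intro t; ext y; simp [hQ, Fin.ext_iff]
  have hmaster := card_perm_fiber P Q (fun t => by
    rw [hPf t, hQf t, hfibP, hfibQ])
  have hfilt : (univ.filter fun σ : Equiv.Perm (Fin n) => ∀ i, pref σ ((G i).card) = G i)
      = (univ.filter fun σ : Equiv.Perm (Fin n) => ∀ x, Q (σ x) = P x) := by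
    ext σ
    simp only [mem_filter, mem_univ, true_and]
    rw [compat_iff G hdec σ]
    constructor
    · intro h x; exact Fin.ext (by simpa [hP, hQ] using h x)
    · intro h x; simpa [hP, hQ, Fin.ext_iff] using h x
  rw [hfilt, hmaster]
  have hprodf : (∏ t : Fin (k + 1), Nat.factorial (univ.filter fun x => P x = t).card)
      = ∏ t ∈ Finset.range (k + 1), Nat.factorial (cfun G t - cfun G (t + 1)) := by
    rw [← Fin.prod_univ_eq_prod_range (fun t => Nat.factorial (cfun G t - cfun G (t + 1)))]
    refine Finset.prod_congr rfl fun t _ => ?_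
    rw [hPf t, hfibP]
  rw [hprodf, ← Finset.prod_mul_distrib]
  have hc := chainfact (cfun G) (k + 1) (fun i _ => cfun_antitone G i)
  have hck : cfun G (k + 1) = 0 := by
    rw [cfun_succ G hdec k]
    unfold afun
    rw [dif_neg (lt_irrefl k)]
  rw [hck] at hc
  simpa [cfun_zero, Nat.factorial] using hc

end Chain

lemma count_compat_real {k : ℕ} (hk : 0 < k) (G : Fin k → Finset (Fin n))
    (hdec : ∀ i j : Fin k, i < j → G j ⊂ G i) :
    ((univ.filter fun σ : Equiv.Perm (Fin n) => ∀ i, pref σ ((G i).card) = G i).card : ℝ)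
      = (n.factorial : ℝ) * chainWeight G * ((n.choose (G ⟨0, hk⟩).card : ℕ) : ℝ)⁻¹ := by
  classical
  have hNat := count_compat_nat G hdec
  have hsplit : (∏ t ∈ Finset.range (k + 1), (cfun G t).choose (cfun G (t + 1)))
      = (∏ t ∈ Finset.range k, (cfun G (t + 1)).choose (cfun G (t + 2)))
        * (cfun G 0).choose (cfun G 1) :=
    Finset.prod_range_succ' _ k
  set N : ℕ := (univ.filter fun σ : Equiv.Perm (Fin n) => ∀ i, pref σ ((G i).card) = G i).card
  set Crest : ℕ := ∏ t ∈ Finset.range k, (cfun G (t + 1)).choose (cfun G (t + 2)) with hCrest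
  have hC1 : cfun G 1 = (G ⟨0, hk⟩).card := by
    rw [show (1 : ℕ) = 0 + 1 from rfl, cfun_succ G hdec 0]
    unfold afun; rw [dif_pos hk]
  have hc0 : cfun G 0 = n := cfun_zero G
  -- positivity
  have hCrestpos : 0 < Crest := by
    apply Finset.prod_pos
    intro t _
    exact Nat.choose_pos (cfun_antitone G (t + 1))
  have hC0pos : 0 < n.choose (G ⟨0, hk⟩).card := by
    apply Nat.choose_pos
    have h3 := cfun_antitone G 0
    simp only [Nat.zero_add] at h3
    omega
  -- chainWeight in terms of Crest
  have hwform : chainWeight G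
      = ∏ t ∈ Finset.range k,
          (if h : t + 1 < k then (((afun G t).choose (afun G (t + 1)) : ℕ) : ℝ)⁻¹ else 1) := by
    rw [chainWeight, ← Fin.prod_univ_eq_prod_range
      (fun m => if h : m + 1 < k then (((afun G m).choose (afun G (m + 1)) : ℕ) : ℝ)⁻¹ else 1) k]
    refine Finset.prod_congr rfl fun i _ => ?_
    by_cases h : (i : ℕ) + 1 < k
    · rw [dif_pos h, dif_pos h]
      have h1 : afun G (i : ℕ) = (G i).card := by
        unfold afun; rw [dif_pos i.isLt]
      have h2 : afun G ((i : ℕ) + 1) = (G ⟨(i : ℕ) + 1, h⟩).card := by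
        unfold afun; rw [dif_pos h]
      rw [h1, h2]
    · rw [dif_neg h, dif_neg h]
  have hmul : (Crest : ℝ) * chainWeight G = 1 := by
    rw [hwform, hCrest, Nat.cast_prod, ← Finset.prod_mul_distrib]
    apply Finset.prod_eq_one
    intro t ht
    have htk : t < k := Finset.mem_range.mp ht
    rw [cfun_succ G hdec t, cfun_succ G hdec (t + 1)]
    by_cases h : t + 1 < k
    · rw [dif_pos h]
      apply mul_inv_cancel₀
      have hle : afun G (t + 1) ≤ afun G t := by
        unfold afun
        rw [dif_pos h, dif_pos htk]
        exact Nat.le_of_lt (Finset.card_lt_card (hdec ⟨t, htk⟩ ⟨t + 1, h⟩ (by simp)))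
      exact_mod_cast (Nat.choose_pos hle).ne'
    · rw [dif_neg h]
      have hk1 : afun G (t + 1) = 0 := by
        unfold afun; rw [dif_neg (by omega)]
      rw [hk1, Nat.choose_zero_right]
      norm_num
  have hwinv : chainWeight G = ((Crest : ℕ) : ℝ)⁻¹ := by
    field_simp at hmul ⊢
    linarith [hmul]
  -- cast the Nat identity
  rw [hsplit, hC1, hc0] at hNat
  have hcast : (N : ℝ) * ((Crest : ℝ) * ((n.choose (G ⟨0, hk⟩).card : ℕ) : ℝ)) = (n.factorial : ℝ) := by
    exact_mod_cast hNat
  rw [hwinv]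
  have h1 : ((Crest : ℕ) : ℝ) ≠ 0 := by
    exact_mod_cast hCrestpos.ne'
  have h2 : ((n.choose (G ⟨0, hk⟩).card : ℕ) : ℝ) ≠ 0 := by
    exact_mod_cast hC0pos.ne'
  field_simp
  linear_combination hcast

lemma lt_choose_add {k : ℕ} (hk : 1 ≤ k) : ∀ x : ℕ, x < x.choose k + k := by
  obtain ⟨j, rfl⟩ : ∃ j, k = j + 1 := ⟨k - 1, by omega⟩
  intro x
  induction x with
  | zero => omega
  | succ x ih =>
    by_cases h : x + 1 < j + 1
    · omega
    · have hjx : j ≤ x := by omega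
      have hcs : (x + 1).choose (j + 1) = x.choose j + x.choose (j + 1) :=
        Nat.choose_succ_succ x j
      have hpos : 0 < x.choose j := Nat.choose_pos hjx
      omega

/-- the number of permutations for which a single set is a prefix set -/
lemma count_single (F : Finset (Fin n)) :
    ((univ.filter fun σ : Equiv.Perm (Fin n) => pref σ F.card = F).card : ℝ)
      = (n.factorial : ℝ) * ((n.choose F.card : ℕ) : ℝ)⁻¹ := by
  classical
  have h := count_compat_real (k := 1) Nat.one_pos (fun _ => F)
    (fun i j hij => absurd (Subsingleton.elim i j) (ne_of_lt hij))
  have hfilt : (univ.filter fun σ : Equiv.Perm (Fin n) =>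
        ∀ i : Fin 1, pref σ (((fun _ => F) i).card) = (fun _ => F) i)
      = (univ.filter fun σ : Equiv.Perm (Fin n) => pref σ F.card = F) := by
    ext σ
    simp [Fin.forall_fin_one]
  have hw : chainWeight (fun _ : Fin 1 => F) = 1 := by
    rw [chainWeight]
    apply Finset.prod_eq_one
    intro i _
    rw [dif_neg (by omega)]
  rw [hfilt, hw] at h
  simpa using h


section Main
variable {k : ℕ} (𝓕 : Finset (Finset (Fin n)))

/-- per-permutation: compatible chains in the family correspond to `k`-subsets of the
set of prefix-indices landing in the family. -/
lemma card_compat_eq_choose (hk : 0 < k) (σ : Equiv.Perm (Fin n)) :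
    ((univ.filter fun G : Fin k → Finset (Fin n) =>
        ((∀ i, G i ∈ 𝓕) ∧ (∀ i j, i < j → G j ⊂ G i) ∧
          (∀ i, pref σ ((G i).card) = G i))).card)
      = (((Finset.range (n + 1)).filter fun m => pref σ m ∈ 𝓕).card).choose k := by
  classical
  rw [← Finset.card_powersetCard]
  set M : Finset ℕ := (Finset.range (n + 1)).filter fun m => pref σ m ∈ 𝓕 with hM
  have hcardn : ∀ A : Finset (Fin n), A.card ≤ n := fun A => by
    simpa using Finset.card_le_univ A
  refine Finset.card_bij'
    (fun G _ => Finset.image (fun i => (G i).card) univ)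
    (fun S hS => fun i : Fin k =>
      pref σ (S.orderEmbOfFin (Finset.mem_powersetCard.mp hS).2 i.rev))
    ?_ ?_ ?_ ?_
  · -- hi
    intro G hG
    simp only [Finset.mem_filter, Finset.mem_univ, true_and] at hG
    obtain ⟨hmem, hdec, hcompat⟩ := hG
    rw [Finset.mem_powersetCard]
    constructor
    · intro b hb
      obtain ⟨i, _, rfl⟩ := Finset.mem_image.mp hb
      rw [hM, Finset.mem_filter, Finset.mem_range]
      exact ⟨Nat.lt_succ_of_le (hcardn (G i)), by rw [hcompat i]; exact hmem i⟩
    · have hinj : Function.Injective (fun i : Fin k => (G i).card) := by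
        intro i j hij
        have hij' : (G i).card = (G j).card := hij
        rcases lt_trichotomy i j with h | h | h
        · have := Finset.card_lt_card (hdec i j h); omega
        · exact h
        · have := Finset.card_lt_card (hdec j i h); omega
      rw [Finset.card_image_of_injective _ hinj, Finset.card_univ, Fintype.card_fin]
  · -- hj
    intro S hS
    obtain ⟨hsub, hcard⟩ := Finset.mem_powersetCard.mp hS
    set e := S.orderEmbOfFin hcard with he
    have hmemM : ∀ i : Fin k, (e i : ℕ) ∈ M := fun i => hsub (Finset.orderEmbOfFin_mem S hcard i)
    have hlen : ∀ i : Fin k, (e i : ℕ) ≤ n := by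
      intro i
      have := hmemM i
      rw [hM, Finset.mem_filter, Finset.mem_range] at this
      omega
    have hFam : ∀ i : Fin k, pref σ (e i) ∈ 𝓕 := by
      intro i
      have := hmemM i
      rw [hM, Finset.mem_filter] at this
      exact this.2
    simp only [Finset.mem_filter, Finset.mem_univ, true_and]
    refine ⟨fun i => hFam i.rev, fun i j hij => ?_, fun i => ?_⟩
    · have h1 : j.rev < i.rev := Fin.rev_lt_rev.mpr hij
      have h2 : e j.rev < e i.rev := e.strictMono h1
      exact pref_ssubset σ h2 (hlen i.rev)
    · rw [card_pref σ (hlen i.rev)]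
  · -- left inverse
    intro G hG
    simp only [Finset.mem_filter, Finset.mem_univ, true_and] at hG
    obtain ⟨hmem, hdec, hcompat⟩ := hG
    funext i
    have hinj : Function.Injective (fun i : Fin k => (G i).card) := by
      intro i j hij
      have hij' : (G i).card = (G j).card := hij
      rcases lt_trichotomy i j with h | h | h
      · have := Finset.card_lt_card (hdec i j h); omega
      · exact h
      · have := Finset.card_lt_card (hdec j i h); omega
    have hS : (Finset.image (fun i => (G i).card) univ).card = k := by
      rw [Finset.card_image_of_injective _ hinj, Finset.card_univ, Fintype.card_fin]
    have hmono : StrictMono (fun i : Fin k => (G i.rev).card) := by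
      intro i j hij
      exact Finset.card_lt_card (hdec j.rev i.rev (Fin.rev_lt_rev.mpr hij))
    have hmem' : ∀ i : Fin k, (G i.rev).card ∈ Finset.image (fun i => (G i).card) univ := by
      intro i
      exact Finset.mem_image_of_mem _ (Finset.mem_univ i.rev)
    have huniq := Finset.orderEmbOfFin_unique hS hmem' hmono
    have hval : ((Finset.image (fun i => (G i).card) univ).orderEmbOfFin hS) i.rev
        = (G i).card := by
      rw [← congrFun huniq i.rev]
      simp [Fin.rev_rev]
    -- goal : pref σ (orderEmbOfFin _ _ i.rev) = G i  (with proof-irrelevant card proof)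
    have : pref σ (((Finset.image (fun i => (G i).card) univ).orderEmbOfFin hS) i.rev)
        = G i := by rw [hval]; exact hcompat i
    convert this using 3
  · -- right inverse
    intro S hS
    obtain ⟨hsub, hcard⟩ := Finset.mem_powersetCard.mp hS
    set e := S.orderEmbOfFin hcard with he
    have hlen : ∀ i : Fin k, (e i : ℕ) ≤ n := by
      intro i
      have h0 := hsub (Finset.orderEmbOfFin_mem S hcard i)
      rw [hM, Finset.mem_filter, Finset.mem_range] at h0
      have h1 : (e i : ℕ) = (S.orderEmbOfFin hcard i : ℕ) := by rw [he]
      omega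
    have hcards : ∀ i : Fin k, (pref σ (e i.rev)).card = e i.rev :=
      fun i => card_pref σ (hlen i.rev)
    have himg : Finset.image (fun i : Fin k => (pref σ (e i.rev)).card) univ
        = Finset.image (fun i : Fin k => (e i.rev : ℕ)) univ := by
      apply Finset.image_congr
      intro i _
      exact hcards i
    have himg2 : Finset.image (fun i : Fin k => (e i.rev : ℕ)) univ = S := by
      apply Finset.eq_of_subset_of_card_le
      · intro b hb
        obtain ⟨i, _, rfl⟩ := Finset.mem_image.mp hb
        exact Finset.orderEmbOfFin_mem S hcard i.rev
      · rw [hcard]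
        have hinj : Function.Injective (fun i : Fin k => (e i.rev : ℕ)) := by
          intro i j hij
          have := e.injective hij
          have := Fin.rev_injective this
          exact this
        rw [Finset.card_image_of_injective _ hinj, Finset.card_univ, Fintype.card_fin]
    -- goal
    have : Finset.image
        (fun i : Fin k => (pref σ (S.orderEmbOfFin hcard i.rev)).card) univ = S := by
      rw [← he, himg, himg2]
    convert this using 2

end Main

lemma chainWeight_nonneg {k : ℕ} (G : Fin k → Finset (Fin n)) : 0 ≤ chainWeight G := by
  apply Finset.prod_nonneg
  intro i _
  by_cases h : (i : ℕ) + 1 < k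
  · rw [dif_pos h]; positivity
  · rw [dif_neg h]; norm_num

lemma sum_N_eq {k : ℕ} (𝓕 : Finset (Finset (Fin n))) (hk : 0 < k) :
    ∑ G ∈ (univ.filter fun G : Fin k → Finset (Fin n) =>
        (∀ i, G i ∈ 𝓕) ∧ (∀ i j, i < j → G j ⊂ G i)),
      (univ.filter fun σ : Equiv.Perm (Fin n) => ∀ i, pref σ ((G i).card) = G i).card
    = ∑ σ : Equiv.Perm (Fin n),
        (((Finset.range (n + 1)).filter fun m => pref σ m ∈ 𝓕).card).choose k := by
  classical
  have h1 : ∀ G : Fin k → Finset (Fin n),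
      (univ.filter fun σ : Equiv.Perm (Fin n) => ∀ i, pref σ ((G i).card) = G i).card
      = ∑ σ : Equiv.Perm (Fin n), if (∀ i, pref σ ((G i).card) = G i) then 1 else 0 :=
    fun G => Finset.card_filter _ _
  rw [Finset.sum_congr rfl fun G _ => h1 G, Finset.sum_comm]
  refine Finset.sum_congr rfl fun σ _ => ?_
  rw [← Finset.card_filter, Finset.filter_filter]
  rw [← card_compat_eq_choose 𝓕 hk σ]
  congr 1
  apply Finset.filter_congr
  intro G _
  tauto

lemma sum_X_eq (𝓕 : Finset (Finset (Fin n))) :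
    ∑ σ : Equiv.Perm (Fin n),
        ((Finset.range (n + 1)).filter fun m => pref σ m ∈ 𝓕).card
    = ∑ F ∈ 𝓕, (univ.filter fun σ : Equiv.Perm (Fin n) => pref σ F.card = F).card := by
  classical
  have key : ∀ σ : Equiv.Perm (Fin n),
      ((Finset.range (n + 1)).filter fun m => pref σ m ∈ 𝓕).card
      = (𝓕.filter fun F => pref σ F.card = F).card := by
    intro σ
    refine Finset.card_bij' (fun m _ => pref σ m) (fun F _ => F.card) ?_ ?_ ?_ ?_
    · intro m hm
      rw [Finset.mem_filter, Finset.mem_range] at hm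
      rw [Finset.mem_filter]
      refine ⟨hm.2, ?_⟩
      rw [card_pref σ (by omega : m ≤ n)]
    · intro F hF
      rw [Finset.mem_filter] at hF
      rw [Finset.mem_filter, Finset.mem_range]
      have : F.card ≤ n := by simpa using Finset.card_le_univ F
      refine ⟨by omega, ?_⟩
      rw [hF.2]; exact hF.1
    · intro m hm
      rw [Finset.mem_filter, Finset.mem_range] at hm
      exact card_pref σ (by omega : m ≤ n)
    · intro F hF
      rw [Finset.mem_filter] at hF
      exact hF.2
  rw [Finset.sum_congr rfl fun σ _ => key σ]
  have h1 : ∀ σ : Equiv.Perm (Fin n),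
      (𝓕.filter fun F => pref σ F.card = F).card
      = ∑ F ∈ 𝓕, if pref σ F.card = F then 1 else 0 :=
    fun σ => Finset.card_filter _ _
  rw [Finset.sum_congr rfl fun σ _ => h1 σ, Finset.sum_comm]
  refine Finset.sum_congr rfl fun F _ => ?_
  rw [← Finset.card_filter]

lemma sum_density {k : ℕ} (𝓕 : Finset (Finset (Fin n))) (hk : 0 < k) :
    ∑ F ∈ 𝓕, chainDensity 𝓕 k F * ((n.choose F.card : ℕ) : ℝ)⁻¹
      = ∑ G ∈ (univ.filter fun G : Fin k → Finset (Fin n) =>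
          (∀ i, G i ∈ 𝓕) ∧ (∀ i j, i < j → G j ⊂ G i)),
        chainWeight G * ((n.choose ((G ⟨0, hk⟩).card) : ℕ) : ℝ)⁻¹ := by
  classical
  have hcd : ∀ F, chainDensity 𝓕 k F * ((n.choose F.card : ℕ) : ℝ)⁻¹
      = ∑ G : Fin k → Finset (Fin n),
          if F = G ⟨0, hk⟩ then
            (if ((∀ i : Fin k, (i : ℕ) ≠ 0 → G i ∈ 𝓕) ∧
              (∀ i j : Fin k, i < j → G j ⊂ G i)) then
              chainWeight G * ((n.choose ((G ⟨0, hk⟩).card) : ℕ) : ℝ)⁻¹ else 0)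
          else 0 := by
    intro F
    rw [chainDensity, Finset.sum_mul]
    refine Finset.sum_congr rfl fun G _ => ?_
    by_cases h0 : F = G ⟨0, hk⟩
    · rw [if_pos h0]
      by_cases hD : (∀ i : Fin k, (i : ℕ) ≠ 0 → G i ∈ 𝓕) ∧
          (∀ i j : Fin k, i < j → G j ⊂ G i)
      · rw [if_pos hD, if_pos ⟨fun _ => h0.symm, hD⟩, h0]
      · rw [if_neg hD, if_neg (fun hc => hD hc.2), zero_mul]
    · rw [if_neg h0, if_neg (fun hc => h0 ((hc.1 hk).symm)), zero_mul]
  rw [Finset.sum_congr rfl fun F _ => hcd F, Finset.sum_comm]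
  rw [Finset.sum_filter]
  refine Finset.sum_congr rfl fun G _ => ?_
  rw [Finset.sum_ite_eq' 𝓕 (G ⟨0, hk⟩)]
  by_cases hmem : G ⟨0, hk⟩ ∈ 𝓕
  · rw [if_pos hmem]
    by_cases hD : (∀ i : Fin k, (i : ℕ) ≠ 0 → G i ∈ 𝓕) ∧
        (∀ i j : Fin k, i < j → G j ⊂ G i)
    · rw [if_pos hD, if_pos]
      refine ⟨fun i => ?_, hD.2⟩
      by_cases hi : (i : ℕ) = 0
      · have : i = ⟨0, hk⟩ := Fin.ext hi
        rw [this]; exact hmem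
      · exact hD.1 i hi
    · rw [if_neg hD, if_neg]
      intro hc
      exact hD ⟨fun i _ => hc.1 i, hc.2⟩
  · rw [if_neg hmem, if_neg]
    intro hc
    exact hmem (hc.1 ⟨0, hk⟩)

end Stmt13

/-- If `|𝓕| ≥ (k-1+α) C(n, n/2)` with `0 ≤ α ≤ 1`, then some `F ∈ 𝓕` has `c_k(F) ≥ α/k`. -/
theorem statement13 (n k : ℕ) (hk : 2 ≤ k) (α : ℝ) (hα0 : 0 ≤ α) (hα1 : α ≤ 1)
    (𝓕 : Finset (Finset (Fin n)))
    (hcard : ((k : ℝ) - 1 + α) * (n.choose (n / 2)) ≤ (𝓕.card : ℝ)) :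
    ∃ F ∈ 𝓕, α / k ≤ chainDensity 𝓕 k F := by
  classical
  have hk0 : 0 < k := by omega
  have hcardn : ∀ A : Finset (Fin n), A.card ≤ n := fun A => by
    simpa using Finset.card_le_univ A
  have hcd_nonneg : ∀ F, 0 ≤ chainDensity 𝓕 k F := by
    intro F
    rw [chainDensity]
    apply Finset.sum_nonneg
    intro G _
    split
    · exact Stmt13.chainWeight_nonneg G
    · exact le_refl 0
  have hmid_pos : (0 : ℝ) < ((n.choose (n / 2) : ℕ) : ℝ) := by
    exact_mod_cast Nat.choose_pos (Nat.div_le_self n 2)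
  have hk2 : (2 : ℝ) ≤ (k : ℝ) := by exact_mod_cast hk
  have hFpos : (0 : ℝ) < (𝓕.card : ℝ) := lt_of_lt_of_le (by nlinarith) hcard
  have hFne : 𝓕.Nonempty := Finset.card_pos.mp (by exact_mod_cast hFpos)
  obtain ⟨Fm, hFm, hmax⟩ := Finset.exists_max_image 𝓕 (chainDensity 𝓕 k) hFne
  refine ⟨Fm, hFm, ?_⟩
  set M := chainDensity 𝓕 k Fm with hM
  have hM0 : 0 ≤ M := hcd_nonneg Fm
  set T : ℝ := ∑ F ∈ 𝓕, ((n.choose F.card : ℕ) : ℝ)⁻¹ with hT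
  set S : ℝ := ∑ F ∈ 𝓕, chainDensity 𝓕 k F * ((n.choose F.card : ℕ) : ℝ)⁻¹ with hS
  have hTlow : (k : ℝ) - 1 + α ≤ T := by
    have h1 : (𝓕.card : ℝ) * ((n.choose (n / 2) : ℕ) : ℝ)⁻¹ ≤ T := by
      rw [hT, Finset.card_eq_sum_ones 𝓕, Nat.cast_sum, Finset.sum_mul]
      apply Finset.sum_le_sum
      intro F _
      rw [Nat.cast_one, one_mul]
      apply inv_anti₀
      · exact_mod_cast Nat.choose_pos (hcardn F)
      · exact_mod_cast Nat.choose_le_middle F.card n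
    have h2 : ((k : ℝ) - 1 + α) ≤ (𝓕.card : ℝ) / ((n.choose (n / 2) : ℕ) : ℝ) :=
      (le_div_iff₀ hmid_pos).mpr hcard
    rw [div_eq_mul_inv] at h2
    exact le_trans h2 h1
  have hTpos : 0 < T := by nlinarith
  have hSle : S ≤ M * T := by
    rw [hS, hT, Finset.mul_sum]
    apply Finset.sum_le_sum
    intro F hF
    apply mul_le_mul_of_nonneg_right (hmax F hF)
    positivity
  have hfact_pos : (0 : ℝ) < ((n.factorial : ℕ) : ℝ) := by
    exact_mod_cast Nat.factorial_pos n
  have hSkey : ((n.factorial : ℕ) : ℝ) * S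
      = ((∑ σ : Equiv.Perm (Fin n),
          (((Finset.range (n + 1)).filter fun m => Stmt13.pref σ m ∈ 𝓕).card).choose k : ℕ) : ℝ) := by
    rw [hS, Stmt13.sum_density 𝓕 hk0, Finset.mul_sum, ← Stmt13.sum_N_eq 𝓕 hk0]
    push_cast
    apply Finset.sum_congr rfl
    intro G hG
    simp only [Finset.mem_filter, Finset.mem_univ, true_and] at hG
    rw [Stmt13.count_compat_real hk0 G hG.2]
    ring
  have hTkey : ((n.factorial : ℕ) : ℝ) * T
      = ((∑ σ : Equiv.Perm (Fin n),
          ((Finset.range (n + 1)).filter fun m => Stmt13.pref σ m ∈ 𝓕).card : ℕ) : ℝ) := by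
    rw [hT, Finset.mul_sum, Stmt13.sum_X_eq 𝓕]
    push_cast
    apply Finset.sum_congr rfl
    intro F _
    rw [Stmt13.count_single F]
  have hNat : (∑ σ : Equiv.Perm (Fin n),
        ((Finset.range (n + 1)).filter fun m => Stmt13.pref σ m ∈ 𝓕).card)
      ≤ (∑ σ : Equiv.Perm (Fin n),
          (((Finset.range (n + 1)).filter fun m => Stmt13.pref σ m ∈ 𝓕).card).choose k)
        + n.factorial * (k - 1) := by
    have hstep : (∑ σ : Equiv.Perm (Fin n),
          ((Finset.range (n + 1)).filter fun m => Stmt13.pref σ m ∈ 𝓕).card)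
        ≤ ∑ σ : Equiv.Perm (Fin n),
            ((((Finset.range (n + 1)).filter fun m => Stmt13.pref σ m ∈ 𝓕).card).choose k
              + (k - 1)) := by
      apply Finset.sum_le_sum
      intro σ _
      have := Stmt13.lt_choose_add (show 1 ≤ k by omega)
        ((Finset.range (n + 1)).filter fun m => Stmt13.pref σ m ∈ 𝓕).card
      omega
    refine le_trans hstep ?_
    rw [Finset.sum_add_distrib, Finset.sum_const, smul_eq_mul]
    have hcardPerm : (Finset.univ : Finset (Equiv.Perm (Fin n))).card = n.factorial := by
      rw [Finset.card_univ, Fintype.card_perm, Fintype.card_fin]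
    rw [hcardPerm]
  have hNatR : ((∑ σ : Equiv.Perm (Fin n),
        ((Finset.range (n + 1)).filter fun m => Stmt13.pref σ m ∈ 𝓕).card : ℕ) : ℝ)
      ≤ ((∑ σ : Equiv.Perm (Fin n),
          (((Finset.range (n + 1)).filter fun m => Stmt13.pref σ m ∈ 𝓕).card).choose k : ℕ) : ℝ)
        + ((n.factorial : ℕ) : ℝ) * ((k : ℝ) - 1) := by
    have h4 := (Nat.cast_le (α := ℝ)).mpr hNat
    push_cast [Nat.cast_sub (show 1 ≤ k by omega)] at h4 ⊢
    linarith
  have hTS : T ≤ S + ((k : ℝ) - 1) := by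
    have h2 : ((n.factorial : ℕ) : ℝ) * T ≤ ((n.factorial : ℕ) : ℝ) * (S + ((k : ℝ) - 1)) := by
      rw [mul_add, hSkey, hTkey]
      linarith
    exact le_of_mul_le_mul_left h2 hfact_pos
  have hMT : T - ((k : ℝ) - 1) ≤ M * T := by linarith
  have hkpos : (0 : ℝ) < (k : ℝ) := by linarith
  rw [div_le_iff₀ hkpos]
  nlinarith [hMT, hTlow, hTpos, hM0, mul_nonneg hα0 (sub_nonneg.mpr hα1),
    mul_nonneg (show (0 : ℝ) ≤ (k : ℝ) - α by linarith)
      (show (0 : ℝ) ≤ T - ((k : ℝ) - 1 + α) by linarith),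
    mul_le_mul_of_nonneg_left hMT (le_of_lt hkpos)]
end

section
/- For every 0 < δ < 1 there exists a constant c = c(δ) > 0 such that the following holds. Let M > 0 and let (a₁,…,a_m) be a finite sequence of real numbers with 1 ≤ a_j ≤ (1−δ)^j·M for each j ∈ {1,…,m}, and set s = a₁ + ⋯ + a_m. Then s·log s ≤ Σ_{j=1}^m a_j·log a_j + c·M. -/
/-!
Write `s = ∑ aⱼ`. Then `s log s - ∑ aⱼ log aⱼ = ∑ aⱼ log (s / aⱼ)`, and `log x ≤ 2 √x` bounds each
term by `2 √(aⱼ s)`. The hypothesis gives `√aⱼ ≤ (√(1-δ))ʲ √M` and `s ≤ (1-δ)/δ · M`, so the two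
geometric series yield `2 √s ∑ √aⱼ ≤ c M`.
-/

open Finset

lemma Real.sqrt_pow_of_nonneg {x : ℝ} (hx : 0 ≤ x) (n : ℕ) : √(x ^ n) = √x ^ n :=
  (Real.sqrt_eq_iff_eq_sq (pow_nonneg hx n) (pow_nonneg (Real.sqrt_nonneg x) n)).2
    (by rw [← pow_mul, mul_comm, pow_mul, Real.sq_sqrt hx])

lemma sum_Icc_le_of_le_pow_mul {q M : ℝ} (hq0 : 0 ≤ q) (h1q : q < 1) (hM : 0 ≤ M) {m : ℕ}
    {b : ℕ → ℝ} (hb : ∀ j ∈ Icc 1 m, b j ≤ q ^ j * M) :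
    ∑ j ∈ Icc 1 m, b j ≤ q / (1 - q) * M :=
  calc ∑ j ∈ Icc 1 m, b j ≤ ∑ j ∈ Icc 1 m, q ^ j * M := sum_le_sum hb
    _ = (∑ j ∈ Ico 1 (m + 1), q ^ j) * M := by rw [Ico_add_one_right_eq_Icc, sum_mul]
    _ ≤ q / (1 - q) * M := by
      gcongr
      simpa using geom_sum_Ico_le_of_lt_one (m := 1) (n := m + 1) hq0 h1q

lemma mul_log_div_le_two_mul_sqrt_mul_sqrt {a s : ℝ} (ha : 0 ≤ a) (hs : 0 ≤ s) :
    a * Real.log (s / a) ≤ 2 * √a * √s := by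
  rcases ha.eq_or_lt with rfl | ha
  · simp
  have hlog : Real.log (s / a) ≤ 2 * √(s / a) := by
    have := Real.log_le_rpow_div (div_nonneg hs ha.le) one_half_pos
    rw [← Real.sqrt_eq_rpow] at this
    linarith
  calc a * Real.log (s / a) ≤ a * (2 * √(s / a)) := by gcongr
    _ = 2 * (a / √a) * √s := by rw [Real.sqrt_div' _ ha.le]; ring
    _ = 2 * √a * √s := by rw [Real.div_sqrt]

lemma sum_mul_log_sum_le {ι : Type*} (I : Finset ι) {a : ι → ℝ} (ha : ∀ i ∈ I, 0 < a i) :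
    (∑ i ∈ I, a i) * Real.log (∑ i ∈ I, a i) ≤
      ∑ i ∈ I, a i * Real.log (a i) + 2 * √(∑ i ∈ I, a i) * ∑ i ∈ I, √(a i) := by
  set s := ∑ i ∈ I, a i
  have hs : 0 ≤ s := sum_nonneg fun i hi => (ha i hi).le
  rw [sum_mul, mul_sum, ← sum_add_distrib]
  refine sum_le_sum fun i hi => ?_
  have hsi : 0 < s := (ha i hi).trans_le (single_le_sum (fun j hj => (ha j hj).le) hi)
  have hsplit : a i * Real.log s = a i * Real.log (a i) + a i * Real.log (s / a i) := by
    rw [Real.log_div hsi.ne' (ha i hi).ne']; ring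
  have := mul_log_div_le_two_mul_sqrt_mul_sqrt (ha i hi).le hs
  rw [hsplit]
  linarith

/-- The technical `s log s` lemma: if `1 ≤ a_j ≤ (1-δ)^j M` for `1 ≤ j ≤ m` and
`s = a₁ + ⋯ + a_m`, then `s log s ≤ Σ_j a_j log a_j + c·M`, where `c` depends only on `δ`. -/
theorem statement16 (δ : ℝ) (hδ0 : 0 < δ) (hδ1 : δ < 1) :
    ∃ c : ℝ, 0 < c ∧ ∀ (M : ℝ), 0 < M → ∀ (m : ℕ) (a : ℕ → ℝ),
      (∀ j : ℕ, 1 ≤ j → j ≤ m → 1 ≤ a j ∧ a j ≤ (1 - δ) ^ j * M) →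
      (∑ j ∈ Finset.Icc 1 m, a j) * Real.log (∑ j ∈ Finset.Icc 1 m, a j) ≤
        (∑ j ∈ Finset.Icc 1 m, a j * Real.log (a j)) + c * M := by
  set q := 1 - δ
  set r := √q
  have hq : 0 < q := by linarith
  have hr1 : r < 1 := by rw [Real.sqrt_lt' one_pos]; linarith
  have hr : 0 < r := Real.sqrt_pos.2 hq
  have h1q : 0 < 1 - q := by linarith
  have h1r : 0 < 1 - r := by linarith
  refine ⟨2 * √(q / (1 - q)) * (r / (1 - r)), by positivity, ?_⟩
  intro M hM m a ha
  have ha' : ∀ j ∈ Icc 1 m, 1 ≤ a j ∧ a j ≤ q ^ j * M := fun j hj =>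
    ha j (mem_Icc.1 hj).1 (mem_Icc.1 hj).2
  have hsum : ∑ j ∈ Icc 1 m, a j ≤ q / (1 - q) * M :=
    sum_Icc_le_of_le_pow_mul hq.le (by linarith) hM.le fun j hj => (ha' j hj).2
  have hsum_sqrt : ∑ j ∈ Icc 1 m, √(a j) ≤ r / (1 - r) * √M :=
    sum_Icc_le_of_le_pow_mul hr.le hr1 (Real.sqrt_nonneg M) fun j hj => by
      rw [← Real.sqrt_pow_of_nonneg hq.le, ← Real.sqrt_mul (pow_nonneg hq.le j)]
      exact Real.sqrt_le_sqrt (ha' j hj).2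
  calc (∑ j ∈ Icc 1 m, a j) * Real.log (∑ j ∈ Icc 1 m, a j)
      ≤ ∑ j ∈ Icc 1 m, a j * Real.log (a j) +
          2 * √(∑ j ∈ Icc 1 m, a j) * ∑ j ∈ Icc 1 m, √(a j) :=
        sum_mul_log_sum_le _ fun j hj => one_pos.trans_le (ha' j hj).1
    _ ≤ ∑ j ∈ Icc 1 m, a j * Real.log (a j) + 2 * √(q / (1 - q) * M) * (r / (1 - r) * √M) := by
        gcongr
    _ = ∑ j ∈ Icc 1 m, a j * Real.log (a j) + 2 * √(q / (1 - q)) * (r / (1 - r)) * M := by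
        rw [Real.sqrt_mul (div_nonneg hq.le h1q.le)]
        linear_combination 2 * √(q / (1 - q)) * (r / (1 - r)) * Real.mul_self_sqrt hM.le
end

section
/- For every integer k ≥ 2 and every n ∈ ℕ, if 𝒜 is a family of subsets of {1,…,n} containing no k-chain, then |𝒜| is at most the sum of the k−1 largest binomial coefficients C(n,0), C(n,1), …, C(n,n). -/
open Finset

variable {n : ℕ}

def permPairEquiv (s t : Finset (Fin n)) :
    {σ : Equiv.Perm (Fin n) // ∀ x, x ∈ s ↔ σ x ∈ t} ≃
      (({x // x ∈ s} ≃ {x // x ∈ t}) × ({x : Fin n // ¬ x ∈ s} ≃ {x // ¬ x ∈ t})) where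
  toFun σ := ⟨Equiv.subtypeEquiv σ.1 (fun x => σ.2 x),
    Equiv.subtypeEquiv σ.1 (fun x => not_congr (σ.2 x))⟩
  invFun ef := ⟨Equiv.subtypeCongr ef.1 ef.2, by
    intro x
    by_cases hx : x ∈ s
    · simpa [Equiv.subtypeCongr, hx] using (ef.1 ⟨x, hx⟩).2
    · simpa [Equiv.subtypeCongr, hx] using (ef.2 ⟨x, hx⟩).2⟩
  left_inv σ := by
    ext x
    by_cases hx : x ∈ s <;> simp [Equiv.subtypeCongr, hx]
  right_inv ef := by
    refine Prod.ext ?_ ?_ <;> ext x <;>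
      simp [Equiv.subtypeCongr, Equiv.subtypeEquiv, x.2]

lemma card_perm_maps (s t : Finset (Fin n)) (h : s.card = t.card) :
    (univ.filter (fun σ : Equiv.Perm (Fin n) => s.image σ = t)).card
      = Nat.factorial s.card * Nat.factorial (n - s.card) := by
  have hiff : ∀ σ : Equiv.Perm (Fin n), s.image σ = t ↔ ∀ x, x ∈ s ↔ σ x ∈ t := by
    intro σ
    constructor
    · rintro rfl x
      simp [Equiv.injective σ |>.mem_finset_image (s := s)]
    · intro hx
      apply Finset.eq_of_subset_of_card_le
      · intro y hy
        obtain ⟨x, hxs, rfl⟩ := Finset.mem_image.1 hy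
        exact (hx x).1 hxs
      · rw [Finset.card_image_of_injective _ (Equiv.injective σ), h]
  rw [Finset.filter_congr (fun σ _ => by rw [hiff])]
  rw [← Fintype.card_subtype]
  rw [Fintype.card_congr (permPairEquiv s t), Fintype.card_prod]
  have h1 : Fintype.card {x // x ∈ s} = s.card := Fintype.card_coe s
  have h2 : Fintype.card {x // x ∈ t} = s.card := by rw [Fintype.card_coe t, h]
  have h3 : Fintype.card {x : Fin n // ¬ x ∈ s} = n - s.card := by
    rw [Fintype.card_subtype_compl, Fintype.card_fin, Fintype.card_coe]
  have h4 : Fintype.card {x : Fin n // ¬ x ∈ t} = n - s.card := by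
    rw [Fintype.card_subtype_compl, Fintype.card_fin, Fintype.card_coe, h]
  rw [Fintype.card_equiv (Fintype.equivOfCardEq (h1.trans h2.symm)),
    Fintype.card_equiv (Fintype.equivOfCardEq (h3.trans h4.symm)), h1, h3]

def seg (n m : ℕ) : Finset (Fin n) := univ.filter (fun j => (j : ℕ) < m)

lemma seg_card (n m : ℕ) (h : m ≤ n) : (seg n m).card = m := by
  have : seg n m = (Finset.range m).attachFin (fun i hi => lt_of_lt_of_le (Finset.mem_range.1 hi) h) := by
    ext j; simp [seg]
  rw [this, Finset.card_attachFin, Finset.card_range]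

lemma seg_mono (n : ℕ) {a b : ℕ} (h : a ≤ b) : seg n a ⊆ seg n b := by
  intro x hx; simp [seg] at *; omega

/-- `F` is an initial segment of the permutation `σ`. -/
def InitSeg {n : ℕ} (σ : Equiv.Perm (Fin n)) (F : Finset (Fin n)) : Prop :=
  (seg n F.card).image σ = F

instance {n : ℕ} (σ : Equiv.Perm (Fin n)) (F : Finset (Fin n)) : Decidable (InitSeg σ F) := by
  unfold InitSeg; infer_instance

lemma initSeg_subset {n : ℕ} (σ : Equiv.Perm (Fin n)) {F G : Finset (Fin n)}
    (hF : InitSeg σ F) (hG : InitSeg σ G) (hc : F.card ≤ G.card) : F ⊆ G := by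
  rw [← hF, ← hG]
  exact Finset.image_subset_image (seg_mono n hc)

lemma initSeg_chain {n : ℕ} (σ : Equiv.Perm (Fin n)) {F G : Finset (Fin n)}
    (hF : InitSeg σ F) (hG : InitSeg σ G) (hne : F ≠ G) : F ⊂ G ∨ G ⊂ F := by
  rcases le_total F.card G.card with hc | hc
  · exact Or.inl ⟨initSeg_subset σ hF hG hc, fun hsub => hne (Finset.Subset.antisymm (initSeg_subset σ hF hG hc) hsub)⟩
  · exact Or.inr ⟨initSeg_subset σ hG hF hc, fun hsub => hne (Finset.Subset.antisymm hsub (initSeg_subset σ hG hF hc))⟩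

lemma card_le_n {n : ℕ} (F : Finset (Fin n)) : F.card ≤ n := by
  simpa using Finset.card_le_univ F

lemma chain_filter_card_le {n k : ℕ} (𝒜 : Finset (Finset (Fin n))) (h : NoKChain k 𝒜)
    (σ : Equiv.Perm (Fin n)) :
    (𝒜.filter (fun F => InitSeg σ F)).card ≤ min (k - 1) (n + 1) := by
  set C := 𝒜.filter (fun F => InitSeg σ F) with hC
  refine le_min ?_ ?_
  · by_contra h'
    push_neg at h'
    obtain ⟨𝒞, h𝒞C, h𝒞card⟩ := Finset.exists_subset_card_eq (show k ≤ C.card by omega)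
    refine h 𝒞 (h𝒞C.trans (Finset.filter_subset _ _)) ⟨h𝒞card, ?_⟩
    intro F hF G hG hne
    have hF' := Finset.mem_filter.1 (h𝒞C hF)
    have hG' := Finset.mem_filter.1 (h𝒞C hG)
    exact initSeg_chain σ hF'.2 hG'.2 hne
  · have : ∀ F ∈ C, F.card ∈ Finset.range (n + 1) := fun F _ =>
      Finset.mem_range.2 (Nat.lt_succ_of_le (card_le_n F))
    have hinj : Set.InjOn Finset.card (C : Set (Finset (Fin n))) := by
      intro F hF G hG hcard
      have hF' := (Finset.mem_filter.1 hF).2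
      have hG' := (Finset.mem_filter.1 hG).2
      rw [← hF', ← hG', hcard]
    simpa using Finset.card_le_card_of_injOn _ this hinj

lemma sum_w_le {n k : ℕ} (𝒜 : Finset (Finset (Fin n))) (h : NoKChain k 𝒜) :
    ∑ F ∈ 𝒜, Nat.factorial F.card * Nat.factorial (n - F.card)
      ≤ min (k - 1) (n + 1) * Nat.factorial n := by
  have step1 : ∀ F ∈ 𝒜, Nat.factorial F.card * Nat.factorial (n - F.card)
      = (univ.filter (fun σ : Equiv.Perm (Fin n) => InitSeg σ F)).card := by
    intro F _
    have hs := seg_card n F.card (card_le_n F)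
    have := card_perm_maps (seg n F.card) F (by rw [hs])
    rw [hs] at this
    rw [← this]
    congr 1
  rw [Finset.sum_congr rfl step1]
  have swap : ∑ F ∈ 𝒜, (univ.filter (fun σ : Equiv.Perm (Fin n) => InitSeg σ F)).card
      = ∑ σ : Equiv.Perm (Fin n), (𝒜.filter (fun F => InitSeg σ F)).card := by
    simp only [Finset.card_filter]
    exact Finset.sum_comm
  rw [swap]
  calc ∑ σ : Equiv.Perm (Fin n), (𝒜.filter (fun F => InitSeg σ F)).card
      ≤ ∑ _σ : Equiv.Perm (Fin n), min (k - 1) (n + 1) :=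
        Finset.sum_le_sum (fun σ _ => chain_filter_card_le 𝒜 h σ)
    _ = min (k - 1) (n + 1) * Nat.factorial n := by
        rw [Finset.sum_const, smul_eq_mul, Finset.card_univ, Fintype.card_perm, Fintype.card_fin,
          mul_comm]


/-- Erdős' theorem: a family of subsets of `{1,…,n}` with no `k`-chain has size at most the sum
of the `k-1` largest binomial coefficients `C(n,0), …, C(n,n)` (expressed as the maximum, over
all choices of `min (k-1) (n+1)` of the indices `0,…,n`, of the corresponding sum). -/
theorem statement18 (n k : ℕ) (hk : 2 ≤ k) (𝒜 : Finset (Finset (Fin n)))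
    (h : NoKChain k 𝒜) :
    𝒜.card ≤ ((Finset.range (n + 1)).powersetCard (min (k - 1) (n + 1))).sup
      (fun T => ∑ i ∈ T, n.choose i) := by
  set m := min (k - 1) (n + 1) with hm
  have hm1 : 1 ≤ m := le_min (by omega) (by omega)
  have hmn : m ≤ n + 1 := min_le_right _ _
  set R := Finset.range (n + 1) with hR
  -- choose the maximizing T
  have hP : (R.powersetCard m).Nonempty :=
    Finset.powersetCard_nonempty.2 (by simpa [hR] using hmn)
  obtain ⟨T, hTP, hTmax⟩ := Finset.exists_max_image _ (fun T => ∑ i ∈ T, n.choose i) hP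
  refine le_trans ?_ (Finset.le_sup hTP)
  obtain ⟨hTsub, hTcard⟩ := Finset.mem_powersetCard.1 hTP
  have hTne : T.Nonempty := Finset.card_pos.1 (by omega)
  obtain ⟨j₀, hj₀T, hj₀min⟩ := Finset.exists_min_image T (fun j => n.choose j) hTne
  set c := n.choose j₀ with hc
  -- exchange argument
  have hcge : ∀ i ∈ R, i ∉ T → n.choose i ≤ c := by
    intro i hiR hiT
    have hie : i ∉ T.erase j₀ := fun hmem => hiT (Finset.mem_of_mem_erase hmem)
    have hT' : insert i (T.erase j₀) ∈ R.powersetCard m := by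
      refine Finset.mem_powersetCard.2 ⟨?_, ?_⟩
      · intro x hx
        rcases Finset.mem_insert.1 hx with rfl | hx
        · exact hiR
        · exact hTsub (Finset.mem_of_mem_erase hx)
      · rw [Finset.card_insert_of_notMem hie, Finset.card_erase_of_mem hj₀T]
        omega
    have := hTmax _ hT'
    rw [Finset.sum_insert hie] at this
    have hsum : n.choose j₀ + ∑ x ∈ T.erase j₀, n.choose x = ∑ x ∈ T, n.choose x :=
      Finset.add_sum_erase T _ hj₀T
    omega
  -- layer counts
  set a : ℕ → ℕ := fun i => (𝒜.filter (fun F => F.card = i)).card with ha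
  set w : ℕ → ℕ := fun i => Nat.factorial i * Nat.factorial (n - i) with hw
  set N := Nat.factorial n with hN
  have hmaps : ∀ F ∈ 𝒜, F.card ∈ R := fun F _ => Finset.mem_range.2 (Nat.lt_succ_of_le (card_le_n F))
  have hcardsum : 𝒜.card = ∑ i ∈ R, a i :=
    Finset.card_eq_sum_card_fiberwise hmaps
  have hgroup : ∑ i ∈ R, a i * w i = ∑ F ∈ 𝒜, w F.card := by
    rw [← Finset.sum_fiberwise_of_maps_to hmaps (fun F => w F.card)]
    refine Finset.sum_congr rfl (fun i _ => ?_)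
    rw [Finset.sum_congr rfl (fun F hF => by rw [(Finset.mem_filter.1 hF).2]),
      Finset.sum_const, smul_eq_mul]
  have key1 : ∑ i ∈ R, a i * w i ≤ m * N := by
    rw [hgroup]; exact sum_w_le 𝒜 h
  have ha_le : ∀ i ∈ R, a i ≤ n.choose i := by
    intro i hiR
    have : 𝒜.filter (fun F => F.card = i) ⊆ (univ : Finset (Fin n)).powersetCard i := by
      intro F hF
      exact Finset.mem_powersetCard.2 ⟨Finset.subset_univ F, (Finset.mem_filter.1 hF).2⟩
    simpa using Finset.card_le_card this
  have hCw : ∀ i ∈ R, n.choose i * w i = N := by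
    intro i hiR
    have hi : i ≤ n := by simpa [hR, Nat.lt_succ_iff] using hiR
    rw [hw, hN, ← mul_assoc]
    exact Nat.choose_mul_factorial_mul_factorial hi
  have hNpos : 0 < N := Nat.factorial_pos n
  rw [hcardsum]
  -- suffices multiplied version
  suffices hfin : N * ∑ i ∈ R, a i ≤ N * ∑ i ∈ T, n.choose i by
    exact Nat.le_of_mul_le_mul_left hfin hNpos
  have key3 : ∀ j ∈ T, a j * N + c * N ≤ N * n.choose j + c * (a j * w j) := by
    intro j hjT
    have hjR : j ∈ R := hTsub hjT
    have h1 : a j ≤ n.choose j := ha_le j hjR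
    have h2 : c ≤ n.choose j := hj₀min j hjT
    have h3 : n.choose j * w j = N := hCw j hjR
    zify at h1 h2 h3 ⊢
    nlinarith [mul_nonneg (mul_nonneg (sub_nonneg.2 h1) (sub_nonneg.2 h2))
      (by positivity : (0:ℤ) ≤ (w j : ℤ))]
  have split : ∀ f : ℕ → ℕ, ∑ i ∈ R \ T, f i + ∑ i ∈ T, f i = ∑ i ∈ R, f i :=
    fun f => Finset.sum_sdiff hTsub
  have step1 : ∀ i ∈ R \ T, a i * N ≤ c * (a i * w i) := by
    intro i hi
    obtain ⟨hiR, hiT⟩ := Finset.mem_sdiff.1 hi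
    calc a i * N = n.choose i * (a i * w i) := by rw [← hCw i hiR]; ring
      _ ≤ c * (a i * w i) := Nat.mul_le_mul_right _ (hcge i hiR hiT)
  have main : N * (∑ i ∈ R, a i) + c * ∑ j ∈ T, (a j * w j)
      ≤ (N * ∑ i ∈ T, n.choose i) + c * ∑ j ∈ T, (a j * w j) := by
    calc N * (∑ i ∈ R, a i) + c * ∑ j ∈ T, (a j * w j)
        = (∑ i ∈ R \ T, a i * N + ∑ j ∈ T, a j * N) + c * ∑ j ∈ T, (a j * w j) := by
          rw [← split a, Nat.mul_add, Finset.mul_sum, Finset.mul_sum]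
          simp only [mul_comm N]
      _ ≤ (∑ i ∈ R \ T, c * (a i * w i) + ∑ j ∈ T, a j * N) + c * ∑ j ∈ T, (a j * w j) := by
          exact Nat.add_le_add (Nat.add_le_add (Finset.sum_le_sum step1) le_rfl) le_rfl
      _ = (∑ j ∈ T, a j * N) + c * ∑ i ∈ R, (a i * w i) := by
          rw [← split (fun i => a i * w i), Nat.mul_add]
          simp only [Finset.mul_sum]
          omega
      _ ≤ (∑ j ∈ T, a j * N) + c * (m * N) :=
          Nat.add_le_add le_rfl (Nat.mul_le_mul_left c key1)
      _ = ∑ j ∈ T, (a j * N + c * N) := by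
          rw [Finset.sum_add_distrib, Finset.sum_const, hTcard, smul_eq_mul]
          ring
      _ ≤ ∑ j ∈ T, (N * n.choose j + c * (a j * w j)) := Finset.sum_le_sum key3
      _ = (N * ∑ i ∈ T, n.choose i) + c * ∑ j ∈ T, (a j * w j) := by
          rw [Finset.sum_add_distrib, Finset.mul_sum, Finset.mul_sum]
  exact Nat.le_of_add_le_add_right main
end
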